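/- arXiv:2602.09728 — 5 statements merged into one kernel-verified Lean document; each statement's English description precedes it below -/
import Mathlib

section
/- Lemma 4 (Upward incentive constraints bind). Let v* be the unique maximizer of Problem IV. Then every local upward incentive constraint holds with equality: for every t ∈ {2,…,T−1}, every history H ∈ Δ^{t−2}, and every n ∈ {1,…,N−1}, v*_t(H,δ^(n)) + δ^(n)·E_A[Σ_{τ=t+1}^T (Π_{s=t+1}^{τ−1} δ̃_s) v*_τ(H,δ^(n),δ̃_{t+1},…,δ̃_τ)] = v*_t(H,δ^(n+1)) + δ^(n)·E_A[Σ_{τ=t+1}^T (Π_{s=t+1}^{τ−1} δ̃_s) v*_τ(H,δ^(n+1),δ̃_{t+1},…,δ̃_τ)]. -/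
/-- A policy for Problem IV with horizon `T` and `N` types, for a fixed initial type.
Paths `ω : Fin (T-2) → Fin N` record the type draws at dates `2,…,T-1` (coordinate `s`
is the draw at date `s+2`).  `v t ω` is the date-`t` utility; `adapted` says that for
`t ≤ T-1` it depends only on the draws at dates `2,…,t` (so `v 1` is constant and
`v T` depends on the draws at dates `2,…,T-1`). -/
structure PolicyIV (T N : ℕ) where
  v : ℕ → (Fin (T - 2) → Fin N) → ℝ
  adapted : ∀ t : ℕ, t ≤ T - 1 → ∀ ω ω' : Fin (T - 2) → Fin N,
    (∀ s : Fin (T - 2), (s : ℕ) + 2 ≤ t → ω s = ω' s) → v t ω = v t ω'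

/-- Splice two paths: keep the draws of `ω` at dates `≤ t` and of `ω'` at dates `> t`. -/
def splice (T N : ℕ) (t : ℕ) (ω ω' : Fin (T - 2) → Fin N) : Fin (T - 2) → Fin N :=
  fun s => if (s : ℕ) + 2 ≤ t then ω s else ω' s

/-- Expectation over paths with i.i.d. coordinate weights `r`. -/
noncomputable def Epath (T N : ℕ) (r : Fin N → ℝ) (f : (Fin (T - 2) → Fin N) → ℝ) : ℝ :=
  ∑ ω : Fin (T - 2) → Fin N, (∏ s, r (ω s)) * f ω

/-- Discounting of date-`t` utility from date 2: `Π_{s=2}^{t-1} δ̃_s`. -/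
noncomputable def discIV (T N : ℕ) (δ : Fin N → ℝ) (t : ℕ) (ω : Fin (T - 2) → Fin N) : ℝ :=
  ∏ s : Fin (T - 2), if (s : ℕ) + 2 < t then δ (ω s) else 1

/-- Discounting of date-`τ` utility from date `t+1`: `Π_{s=t+1}^{τ-1} δ̃_s`. -/
noncomputable def discCont (T N : ℕ) (δ : Fin N → ℝ) (t τ : ℕ) (ω : Fin (T - 2) → Fin N) : ℝ :=
  ∏ s : Fin (T - 2), if t + 1 ≤ (s : ℕ) + 2 ∧ (s : ℕ) + 2 < τ then δ (ω s) else 1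

/-- The discount factor realised at date `t` along the path `ω` (for `2 ≤ t ≤ T-1`). -/
noncomputable def deltaAt (T N : ℕ) (δ : Fin N → ℝ) (t : ℕ) (ω : Fin (T - 2) → Fin N) : ℝ :=
  ∏ s : Fin (T - 2), if (s : ℕ) + 2 = t then δ (ω s) else 1

/-- The agent's expected discounted continuation utility from date `t+1` onwards,
after the history and report recorded in `ω` up to date `t`, with agent beliefs `q`:
`E_A[Σ_{τ=t+1}^T (Π_{s=t+1}^{τ-1} δ̃_s) v_τ]`. -/
noncomputable def contA (T N : ℕ) (δ q : Fin N → ℝ)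
    (v : ℕ → (Fin (T - 2) → Fin N) → ℝ) (t : ℕ) (ω : Fin (T - 2) → Fin N) : ℝ :=
  Epath T N q (fun ω' => ∑ τ ∈ Finset.Icc (t + 1) T,
    discCont T N δ t τ (splice T N t ω ω') * v τ (splice T N t ω ω'))

/-- The agent's expected payoff: `v₁ + δ₁·E_A[Σ_{t=2}^T (Π_{s=2}^{t-1} δ̃_s) v_t]`. -/
noncomputable def payoffIV (T N : ℕ) (δ q : Fin N → ℝ) (δ1 : ℝ) (P : PolicyIV T N) : ℝ :=
  Epath T N q (fun ω => P.v 1 ω + δ1 * ∑ t ∈ Finset.Icc 2 T, discIV T N δ t ω * P.v t ω)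

/-- The firm's expected discounted cost: `φ(v₁) + E_F[Σ_{t=2}^T φ(v_t)/R^(t-1)]`. -/
noncomputable def costIV (T N : ℕ) (p : Fin N → ℝ) (φ : ℝ → ℝ) (R : ℝ) (P : PolicyIV T N) : ℝ :=
  Epath T N p (fun ω => φ (P.v 1 ω) + ∑ t ∈ Finset.Icc 2 T, φ (P.v t ω) / R ^ (t - 1))

/-- All incentive constraints `IC(t,H,δ,δ̂)`: at every date `t ∈ {2,…,T-1}` and after
any history (the common prefix of `ω` and `ω'`), the agent with true date-`t` type
(the date-`t` coordinate of `ω`) prefers its own report to any other report (the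
date-`t` coordinate of `ω'`). -/
def ICIV (T N : ℕ) (δ q : Fin N → ℝ) (P : PolicyIV T N) : Prop :=
  ∀ t : ℕ, 2 ≤ t → t ≤ T - 1 → ∀ ω ω' : Fin (T - 2) → Fin N,
    (∀ s : Fin (T - 2), (s : ℕ) + 2 < t → ω s = ω' s) →
    P.v t ω' + deltaAt T N δ t ω * contA T N δ q P.v t ω' ≤
      P.v t ω + deltaAt T N δ t ω * contA T N δ q P.v t ω

/-- Feasibility for Problem IV: utilities bounded below by `m = u 0`, the firm
break-even condition, and all incentive constraints. -/
def FeasIV (T N : ℕ) (δ p q : Fin N → ℝ) (φ : ℝ → ℝ) (R I m : ℝ) (P : PolicyIV T N) : Prop :=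
  (∀ t ∈ Finset.Icc 1 T, ∀ ω, m ≤ P.v t ω) ∧
  costIV T N p φ R P ≤ I ∧ ICIV T N δ q P

section AuxStmt10

open Finset

set_option maxHeartbeats 1000000

lemma sum_factor {K N : ℕ} (i : Fin K) (r : Fin N → ℝ) (hr : ∑ j, r j = 1)
    (G : Fin N → ℝ) (F : (Fin K → Fin N) → ℝ)
    (hF : ∀ ω j, F (Function.update ω i j) = F ω) :
    ∑ ω : Fin K → Fin N, (∏ s, r (ω s)) * (G (ω i) * F ω)
      = (∑ j, r j * G j) * ∑ ω : Fin K → Fin N, (∏ s, r (ω s)) * F ω := by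
  classical
  set T : Fin N → ℝ := fun j => ∑ ω ∈ univ.filter (fun ω : Fin K → Fin N => ω i = j),
      (∏ s ∈ univ.erase i, r (ω s)) * F ω with hT
  have hTj : ∀ j k : Fin N, T j = T k := by
    intro j k
    refine Finset.sum_bij' (fun ω _ => Function.update ω i k)
      (fun ω _ => Function.update ω i j) ?_ ?_ ?_ ?_ ?_
    · intro ωa ha; simp
    · intro ωa ha; simp
    · intro ωa ha
      simp only [Finset.mem_filter, Finset.mem_univ, true_and] at ha
      funext s
      by_cases hs : s = i
      · subst hs; simp [ha]
      · simp [Function.update_of_ne hs]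
    · intro ωa ha
      simp only [Finset.mem_filter, Finset.mem_univ, true_and] at ha
      funext s
      by_cases hs : s = i
      · subst hs; simp [ha]
      · simp [Function.update_of_ne hs]
    · intro ωa ha
      have h2 : F (Function.update ωa i k) = F ωa := hF ωa k
      have h3 : ∏ s ∈ univ.erase i, r (Function.update ωa i k s)
          = ∏ s ∈ univ.erase i, r (ωa s) :=
        Finset.prod_congr rfl fun s hs => by
          rw [Function.update_of_ne (Finset.mem_erase.mp hs).1]
      show _ = (∏ s ∈ univ.erase i, r (Function.update ωa i k s)) * F (Function.update ωa i k)
      rw [h2, h3]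
  have hdec : ∀ g : Fin N → ℝ,
      ∑ ω : Fin K → Fin N, (∏ s, r (ω s)) * (g (ω i) * F ω) = ∑ j, r j * g j * T j := by
    intro g
    rw [← Finset.sum_fiberwise univ (fun ω : Fin K → Fin N => ω i)
      (fun ω => (∏ s, r (ω s)) * (g (ω i) * F ω))]
    refine Finset.sum_congr rfl ?_
    intro j _
    rw [hT, Finset.mul_sum]
    refine Finset.sum_congr rfl ?_
    intro ωa ha
    simp only [Finset.mem_filter, Finset.mem_univ, true_and] at ha
    rw [← Finset.mul_prod_erase univ (fun s => r (ωa s)) (Finset.mem_univ i), ha]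
    ring
  have h1 : ∑ ω : Fin K → Fin N, (∏ s, r (ω s)) * F ω = ∑ k, r k * T k := by
    have := hdec (fun _ => 1)
    simpa using this
  rw [hdec G, h1, Finset.sum_mul_sum]
  refine Finset.sum_congr rfl ?_
  intro j _
  have h4 : ∑ k, r j * G j * (r k * T k) = ∑ k, (r j * G j * T j) * r k :=
    Finset.sum_congr rfl fun k _ => by rw [← hTj j k]; ring
  rw [h4, ← Finset.mul_sum, hr, mul_one]

lemma deltaAt_eq {T N : ℕ} (δ : Fin N → ℝ) (t : ℕ) (x : Fin (T - 2) → Fin N)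
    (i : Fin (T - 2)) (hi : (i : ℕ) + 2 = t) :
    deltaAt T N δ t x = δ (x i) := by
  unfold deltaAt
  rw [Finset.prod_eq_single i]
  · rw [if_pos hi]
  · intro s _ hs
    rw [if_neg]
    intro hc
    exact hs (Fin.ext (by omega))
  · intro h; exact absurd (Finset.mem_univ i) h

lemma splice_update {T N : ℕ} (t'' : ℕ) (x ω' : Fin (T - 2) → Fin N)
    (i : Fin (T - 2)) (j : Fin N) (h : ¬ ((i : ℕ) + 2 ≤ t'')) :
    splice T N t'' x (Function.update ω' i j)
      = Function.update (splice T N t'' x ω') i j := by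
  funext s
  by_cases hs : s = i
  · subst hs
    simp [splice, if_neg h]
  · simp [splice, Function.update_of_ne hs]

lemma discIV_update {T N : ℕ} (δ : Fin N → ℝ) (t : ℕ) (x : Fin (T - 2) → Fin N)
    (i : Fin (T - 2)) (j : Fin N) (h : ¬ ((i : ℕ) + 2 < t)) :
    discIV T N δ t (Function.update x i j) = discIV T N δ t x := by
  unfold discIV
  refine Finset.prod_congr rfl fun s _ => ?_
  by_cases hs : s = i
  · subst hs; rw [if_neg h, if_neg h]
  · rw [Function.update_of_ne hs]

lemma discCont_update {T N : ℕ} (δ : Fin N → ℝ) (t'' τ : ℕ) (x : Fin (T - 2) → Fin N)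
    (i : Fin (T - 2)) (j : Fin N)
    (h : ¬ (t'' + 1 ≤ (i : ℕ) + 2 ∧ (i : ℕ) + 2 < τ)) :
    discCont T N δ t'' τ (Function.update x i j) = discCont T N δ t'' τ x := by
  unfold discCont
  refine Finset.prod_congr rfl fun s _ => ?_
  by_cases hs : s = i
  · subst hs; rw [if_neg h, if_neg h]
  · rw [Function.update_of_ne hs]

lemma contA_congr {T N : ℕ} (δ q : Fin N → ℝ)
    (v1 v2 : ℕ → (Fin (T - 2) → Fin N) → ℝ) (t : ℕ) (x : Fin (T - 2) → Fin N)
    (h : ∀ τ ∈ Finset.Icc (t + 1) T, ∀ z, v1 τ z = v2 τ z) :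
    contA T N δ q v1 t x = contA T N δ q v2 t x := by
  unfold contA
  congr 1
  funext ω'
  exact Finset.sum_congr rfl fun τ hτ => by rw [h τ hτ]

lemma contA_eq_of_agree {T N : ℕ} (δ q : Fin N → ℝ)
    (v : ℕ → (Fin (T - 2) → Fin N) → ℝ) (t : ℕ) (x y : Fin (T - 2) → Fin N)
    (h : ∀ s : Fin (T - 2), (s : ℕ) + 2 ≤ t → x s = y s) :
    contA T N δ q v t x = contA T N δ q v t y := by
  have hsp : ∀ ω', splice T N t x ω' = splice T N t y ω' := by
    intro ω'
    funext s
    by_cases hs : (s : ℕ) + 2 ≤ t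
    · simp [splice, if_pos hs, h s hs]
    · simp [splice, if_neg hs]
  unfold contA
  congr 1
  funext ω'
  rw [hsp ω']

lemma Epath_decomp {T N : ℕ} (i : Fin (T - 2)) (r : Fin N → ℝ) (hr : ∑ j, r j = 1)
    (G : Fin N → ℝ) (f g F : (Fin (T - 2) → Fin N) → ℝ)
    (hF : ∀ x j, F (Function.update x i j) = F x)
    (h : ∀ x, f x = g x + G (x i) * F x) :
    Epath T N r f = Epath T N r g
      + (∑ j, r j * G j) * ∑ x : Fin (T - 2) → Fin N, (∏ s, r (x s)) * F x := by
  unfold Epath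
  rw [← sum_factor i r hr G F hF, ← Finset.sum_add_distrib]
  refine Finset.sum_congr rfl fun x _ => by rw [h x]; ring

end AuxStmt10

set_option maxHeartbeats 1000000 in
/-- Lemma 4 (upward incentive constraints bind).  Let `P` be the unique
maximizer of Problem IV.  Then every local upward incentive constraint holds with
equality: at each date `t ∈ {2,…,T-1}` and history (the common prefix of `ω` and
`ω'`), if the date-`t` type of `ω'` is the upward-adjacent type of that of `ω`, the
agent with the date-`t` type of `ω` is indifferent between the two reports. -/
theorem stmt10
    (T N : ℕ) (hT : 3 ≤ T) (hN : 2 ≤ N)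
    (R I m : ℝ) (hR : 1 ≤ R) (hI : 0 < I)
    (φ : ℝ → ℝ)
    (hφc : ContinuousOn φ (Set.Ici m))
    (hφm : StrictMonoOn φ (Set.Ici m))
    (hφconv : StrictConvexOn ℝ (Set.Ici m) φ)
    (hφd : DifferentiableOn ℝ φ (Set.Ioi m))
    (δ : Fin N → ℝ) (hδpos : ∀ n, 0 < δ n) (hδmono : StrictMono δ)
    (p q : Fin N → ℝ) (hp : ∀ n, 0 < p n) (hq : ∀ n, 0 < q n)
    (hp1 : ∑ n, p n = 1) (hq1 : ∑ n, q n = 1)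
    (hFOSD : ∀ k : ℕ,
      ∑ n ∈ Finset.univ.filter (fun n : Fin N => (n : ℕ) < k), q n ≤
        ∑ n ∈ Finset.univ.filter (fun n : Fin N => (n : ℕ) < k), p n)
    (n1 : Fin N)
    (P : PolicyIV T N)
    (hPfeas : FeasIV T N δ p q φ R I m P)
    (hPmax : ∀ Q : PolicyIV T N, FeasIV T N δ p q φ R I m Q →
      payoffIV T N δ q (δ n1) Q ≤ payoffIV T N δ q (δ n1) P)
    (hPuniq : ∀ Q : PolicyIV T N, FeasIV T N δ p q φ R I m Q →
      (∀ Q' : PolicyIV T N, FeasIV T N δ p q φ R I m Q' →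
        payoffIV T N δ q (δ n1) Q' ≤ payoffIV T N δ q (δ n1) Q) →
      ∀ t ∈ Finset.Icc 1 T, ∀ ω, Q.v t ω = P.v t ω) :
    ∀ t : ℕ, 2 ≤ t → t ≤ T - 1 → ∀ ω ω' : Fin (T - 2) → Fin N,
      (∀ s : Fin (T - 2), (s : ℕ) + 2 < t → ω s = ω' s) →
      (∀ s : Fin (T - 2), (s : ℕ) + 2 = t → ((ω' s : ℕ) = (ω s : ℕ) + 1)) →
      P.v t ω + deltaAt T N δ t ω * contA T N δ q P.v t ω =
        P.v t ω' + deltaAt T N δ t ω * contA T N δ q P.v t ω' := by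
  
  classical
  intro t ht2 htT1 ω0 ω1 hpre hsucc
  have hIC := hPfeas.2.2
  by_contra hne
  have htT : t ≤ T := by omega
  have hiv : t - 2 < T - 2 := by omega
  set i : Fin (T - 2) := ⟨t - 2, hiv⟩ with hidef
  have hi : (i : ℕ) + 2 = t := by simp only [hidef]; omega
  have hiuniq : ∀ s : Fin (T - 2), (s : ℕ) + 2 = t → s = i := by
    intro s hs; exact Fin.ext (by simp only [hidef]; omega)
  set a : Fin N := ω0 i with hadef
  set b : Fin N := ω1 i with hbdef
  have hb : (b : ℕ) = (a : ℕ) + 1 := hsucc i hi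
  have hab : a < b := by rw [Fin.lt_def]; omega
  have hδab : δ a < δ b := hδmono hab
  set Vv : Fin N → ℝ := fun j => P.v t (Function.update ω0 i j) with hVv
  set Ww : Fin N → ℝ := fun j => contA T N δ q P.v t (Function.update ω0 i j) with hWw
  -- P.v and contA at paths agreeing with ω0 below t
  have hvP : ∀ x : Fin (T - 2) → Fin N, (∀ s : Fin (T - 2), (s : ℕ) + 2 < t → x s = ω0 s) →
      P.v t x = Vv (x i) := by
    intro x hx
    refine P.adapted t htT1 x (Function.update ω0 i (x i)) ?_
    intro s hs
    by_cases hsi : s = i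
    · subst hsi; simp
    · have hlt : (s : ℕ) + 2 < t := by
        rcases lt_or_eq_of_le hs with h | h
        · exact h
        · exact absurd (hiuniq s h) hsi
      rw [hx s hlt, Function.update_of_ne hsi]
  have hwP : ∀ x : Fin (T - 2) → Fin N, (∀ s : Fin (T - 2), (s : ℕ) + 2 < t → x s = ω0 s) →
      contA T N δ q P.v t x = Ww (x i) := by
    intro x hx
    refine contA_eq_of_agree δ q P.v t x (Function.update ω0 i (x i)) ?_
    intro s hs
    by_cases hsi : s = i
    · subst hsi; simp
    · have hlt : (s : ℕ) + 2 < t := by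
        rcases lt_or_eq_of_le hs with h | h
        · exact h
        · exact absurd (hiuniq s h) hsi
      rw [hx s hlt, Function.update_of_ne hsi]
  have hv0 : P.v t ω0 = Vv a := hvP ω0 (fun s _ => rfl)
  have hw0 : contA T N δ q P.v t ω0 = Ww a := hwP ω0 (fun s _ => rfl)
  have hv1 : P.v t ω1 = Vv b := hvP ω1 (fun s hs => (hpre s hs).symm)
  have hw1 : contA T N δ q P.v t ω1 = Ww b := hwP ω1 (fun s hs => (hpre s hs).symm)
  have hdA : deltaAt T N δ t ω0 = δ a := deltaAt_eq δ t ω0 i hi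
  -- node incentive constraints
  have F2 : ∀ j k : Fin N, Vv k + δ j * Ww k ≤ Vv j + δ j * Ww j := by
    intro j k
    have h := hIC t ht2 htT1 (Function.update ω0 i j) (Function.update ω0 i k) ?_
    · rwa [deltaAt_eq δ t _ i hi, Function.update_self] at h
    · intro s hs
      have hsi : s ≠ i := fun hc => by subst hc; omega
      rw [Function.update_of_ne hsi, Function.update_of_ne hsi]
  -- the slack hypothesis
  have hslack : Vv b + δ a * Ww b < Vv a + δ a * Ww a := by
    have hle := hIC t ht2 htT1 ω0 ω1 hpre
    rw [hv0, hv1, hw0, hw1, hdA] at hle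
    rcases lt_or_eq_of_le hle with h | h
    · exact h
    · exfalso
      apply hne
      rw [hv0, hv1, hw0, hw1, hdA, h]
  -- consequences
  have F4 : ∀ j k : Fin N, j < k → Ww j ≤ Ww k := by
    intro j k hjk
    have h1 := F2 j k
    have h2 := F2 k j
    have h3 : δ j < δ k := hδmono hjk
    nlinarith
  have F5 : ∀ j k : Fin N, j < k → Vv k ≤ Vv j := by
    intro j k hjk
    have h1 := F2 j k
    have h2 := F4 j k hjk
    have h3 := hδpos j
    nlinarith
  have hD : Ww a < Ww b := by
    have h1 := F2 b a
    nlinarith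
  have hVab : Vv b < Vv a := by
    have := hδpos a
    nlinarith
  have hVle : ∀ j : Fin N, (j : ℕ) ≤ (a : ℕ) → Vv a ≤ Vv j := by
    intro j hj
    rcases eq_or_lt_of_le hj with h | h
    · rw [Fin.ext (h.symm : (a:ℕ) = (j:ℕ)).symm]
    · exact F5 j a (by rwa [Fin.lt_def])
  have hVge : ∀ k : Fin N, (a : ℕ) < (k : ℕ) → Vv k ≤ Vv b := by
    intro k hk
    rcases eq_or_lt_of_le (show (b:ℕ) ≤ (k:ℕ) by omega) with h | h
    · rw [Fin.ext h]
    · exact F5 b k (by rwa [Fin.lt_def])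
  have hWge : ∀ k : Fin N, (a : ℕ) < (k : ℕ) → Ww b ≤ Ww k := by
    intro k hk
    rcases eq_or_lt_of_le (show (b:ℕ) ≤ (k:ℕ) by omega) with h | h
    · rw [Fin.ext h]
    · exact F4 b k (by rwa [Fin.lt_def])
  -- strict slack of every cross (low type j into high report k)
  have F6 : ∀ j k : Fin N, (j : ℕ) ≤ (a : ℕ) → (a : ℕ) < (k : ℕ) →
      Vv k + δ j * Ww k < Vv j + δ j * Ww j := by
    intro j k hj hk
    have hδjb : δ j ≤ δ b := by
      apply le_of_lt; apply hδmono; rw [Fin.lt_def]; omega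
    have h1 : Vv k + δ j * Ww k ≤ Vv b + δ j * Ww b := by
      rcases eq_or_lt_of_le (show (b:ℕ) ≤ (k:ℕ) by omega) with h | h
      · rw [Fin.ext h]
      · have h2 := F2 b k
        have h3 := hWge k hk
        nlinarith
    have h2 : Vv b + δ j * Ww b < Vv j + δ j * Ww j := by
      rcases eq_or_lt_of_le hj with h | h
      · have : j = a := Fin.ext h
        subst this
        exact hslack
      · have hja : j < a := by rwa [Fin.lt_def]
        have h3 := F2 j a
        have h4 : δ j < δ a := hδmono hja
        nlinarith
    linarith
  -- minimum cross-slack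
  set Spairs : Finset (Fin N × Fin N) :=
    (Finset.univ ×ˢ Finset.univ).filter
      (fun jk : Fin N × Fin N => (jk.1 : ℕ) ≤ (a : ℕ) ∧ (a : ℕ) < (jk.2 : ℕ)) with hSp
  have hSne : Spairs.Nonempty := by
    refine ⟨(a, b), ?_⟩
    rw [hSp, Finset.mem_filter]
    have hab' : (a : ℕ) < (b : ℕ) := by omega
    exact ⟨Finset.mem_product.mpr ⟨Finset.mem_univ _, Finset.mem_univ _⟩, le_refl _, hab'⟩
  set gap : Fin N × Fin N → ℝ :=
    fun jk => Vv jk.1 + δ jk.1 * Ww jk.1 - (Vv jk.2 + δ jk.1 * Ww jk.2) with hgapdef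
  set σ : ℝ := Spairs.inf' hSne gap with hσdef
  have hσpos : 0 < σ := by
    rw [hσdef, Finset.lt_inf'_iff]
    intro jk hjk
    simp only [hSp, Finset.mem_filter, Finset.mem_product, Finset.mem_univ, true_and] at hjk
    have := F6 jk.1 jk.2 hjk.1 hjk.2
    simp only [hgapdef]
    linarith
  have hσle : ∀ j k : Fin N, (j : ℕ) ≤ (a : ℕ) → (a : ℕ) < (k : ℕ) →
      σ ≤ Vv j + δ j * Ww j - (Vv k + δ j * Ww k) := by
    intro j k hj hk
    have hmem : (j, k) ∈ Spairs := by
      rw [hSp, Finset.mem_filter]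
      exact ⟨Finset.mem_product.mpr ⟨Finset.mem_univ _, Finset.mem_univ _⟩, hj, hk⟩
    exact Finset.inf'_le gap hmem
  -- ε, α, β
  set ε : ℝ := min σ ((Vv a - Vv b) / 3) with hεdef
  have hεpos : 0 < ε := lt_min hσpos (by linarith)
  have hεσ : ε ≤ σ := min_le_left _ _
  have hεv : ε ≤ (Vv a - Vv b) / 3 := min_le_right _ _
  set QL : ℝ := ∑ j ∈ Finset.univ.filter (fun j : Fin N => (j : ℕ) ≤ (a : ℕ)), q j with hQLdef
  set QH : ℝ := ∑ j ∈ Finset.univ.filter (fun j : Fin N => ¬ (j : ℕ) ≤ (a : ℕ)), q j with hQHdef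
  set PL : ℝ := ∑ j ∈ Finset.univ.filter (fun j : Fin N => (j : ℕ) ≤ (a : ℕ)), p j with hPLdef
  set PH : ℝ := ∑ j ∈ Finset.univ.filter (fun j : Fin N => ¬ (j : ℕ) ≤ (a : ℕ)), p j with hPHdef
  have hQsplit : QL + QH = 1 := by
    rw [hQLdef, hQHdef, Finset.sum_filter_add_sum_filter_not, hq1]
  have hPsplit : PL + PH = 1 := by
    rw [hPLdef, hPHdef, Finset.sum_filter_add_sum_filter_not, hp1]
  have hQLpos : 0 < QL := by
    refine Finset.sum_pos (fun j _ => hq j) ⟨a, ?_⟩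
    simp
  have hQHpos : 0 < QH := by
    refine Finset.sum_pos (fun j _ => hq j) ⟨b, ?_⟩
    rw [Finset.mem_filter]
    exact ⟨Finset.mem_univ _, by omega⟩
  have hPLnn : 0 ≤ PL := Finset.sum_nonneg (fun j _ => (hp j).le)
  have hPHnn : 0 ≤ PH := Finset.sum_nonneg (fun j _ => (hp j).le)
  have hQP : QL ≤ PL := by
    have hfil : Finset.univ.filter (fun n : Fin N => (n : ℕ) < (a : ℕ) + 1)
        = Finset.univ.filter (fun n : Fin N => (n : ℕ) ≤ (a : ℕ)) := by
      apply Finset.filter_congr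
      intro n _
      simp [Nat.lt_succ_iff]
    have := hFOSD ((a : ℕ) + 1)
    rwa [hfil] at this
  set α : ℝ := ε * QH with hαdef
  set β : ℝ := ε * QL with hβdef
  have hαpos : 0 < α := mul_pos hεpos hQHpos
  have hβpos : 0 < β := mul_pos hεpos hQLpos
  have hαβ : α + β = ε := by
    rw [hαdef, hβdef, ← mul_add]
    rw [show QH + QL = 1 by linarith, mul_one]
  have hαε : α ≤ ε := by
    rw [hαdef]
    nlinarith
  have hβε : β ≤ ε := by
    rw [hβdef]
    nlinarith
  have hmb : m ≤ Vv b := hPfeas.1 t (Finset.mem_Icc.mpr ⟨by omega, htT⟩) _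
  have hmj : ∀ j : Fin N, m ≤ Vv j :=
    fun j => hPfeas.1 t (Finset.mem_Icc.mpr ⟨by omega, htT⟩) _
  have hVaα : m ≤ Vv a - α := by
    have : Vv a - α ≥ Vv b := by
      have h3 : 3 * ε ≤ Vv a - Vv b := by linarith
      linarith
    linarith
  have horder : Vv b + β < Vv a - α := by
    have h3 : 3 * ε ≤ Vv a - Vv b := by linarith
    linarith
  -- convexity facts
  have hφcc : ConvexOn ℝ (Set.Ici m) φ := hφconv.convexOn
  have slope_mono2 : ∀ x1 x2 x3 x4 : ℝ, m ≤ x1 → m ≤ x3 → x1 ≤ x3 → x2 ≤ x4 →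
      x1 < x2 → x3 < x4 →
      (φ x2 - φ x1) / (x2 - x1) ≤ (φ x4 - φ x3) / (x4 - x3) := by
    intro x1 x2 x3 x4 h1 h3 h13 h24 h12 h34
    have hx1 : x1 ∈ Set.Ici m := h1
    have hx3 : x3 ∈ Set.Ici m := h3
    have hx2 : x2 ∈ Set.Ici m := le_trans h1 h12.le
    have hx4 : x4 ∈ Set.Ici m := le_trans h3 h34.le
    have h14 : x1 < x4 := lt_of_lt_of_le h12 h24
    have hA : (φ x2 - φ x1) / (x2 - x1) ≤ (φ x4 - φ x1) / (x4 - x1) :=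
      hφcc.secant_mono hx1 hx2 hx4 (ne_of_gt h12) (ne_of_gt h14) h24
    have hB : (φ x1 - φ x4) / (x1 - x4) ≤ (φ x3 - φ x4) / (x3 - x4) :=
      hφcc.secant_mono hx4 hx1 hx3 (ne_of_lt h14) (ne_of_lt h34) h13
    have e1 : (φ x1 - φ x4) / (x1 - x4) = (φ x4 - φ x1) / (x4 - x1) := by
      rw [show x1 - x4 = -(x4 - x1) by ring, show φ x1 - φ x4 = -(φ x4 - φ x1) by ring,
        neg_div_neg_eq]
    have e2 : (φ x3 - φ x4) / (x3 - x4) = (φ x4 - φ x3) / (x4 - x3) := by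
      rw [show x3 - x4 = -(x4 - x3) by ring, show φ x3 - φ x4 = -(φ x4 - φ x3) by ring,
        neg_div_neg_eq]
    rw [e1, e2] at hB
    linarith
  set A : ℝ := φ (Vv a) - φ (Vv a - α) with hAdef
  set B : ℝ := φ (Vv b + β) - φ (Vv b) with hBdef
  have hA0 : 0 ≤ A := by
    rw [hAdef]
    have := hφm.le_iff_le (show Vv a - α ∈ Set.Ici m from hVaα)
      (show Vv a ∈ Set.Ici m from hmj a)
    have h2 : φ (Vv a - α) ≤ φ (Vv a) := this.mpr (by linarith)
    linarith
  have hB0 : 0 ≤ B := by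
    rw [hBdef]
    have := hφm.le_iff_le (show Vv b ∈ Set.Ici m from hmb)
      (show Vv b + β ∈ Set.Ici m from Set.mem_Ici.mpr (by have := hmb; linarith))
    have h2 : φ (Vv b) ≤ φ (Vv b + β) := this.mpr (by linarith)
    linarith
  have hlowslope : ∀ j : Fin N, (j : ℕ) ≤ (a : ℕ) → φ (Vv j - α) - φ (Vv j) ≤ -A := by
    intro j hj
    have hVj : Vv a ≤ Vv j := hVle j hj
    have h := slope_mono2 (Vv a - α) (Vv a) (Vv j - α) (Vv j) hVaα (by linarith)
      (by linarith) hVj (by linarith) (by linarith)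
    rw [show Vv a - (Vv a - α) = α by ring, show Vv j - (Vv j - α) = α by ring,
      div_le_div_iff₀ hαpos hαpos] at h
    have h2 : φ (Vv a) - φ (Vv a - α) ≤ φ (Vv j) - φ (Vv j - α) :=
      le_of_mul_le_mul_right h hαpos
    rw [hAdef]
    linarith
  have hhighslope : ∀ k : Fin N, (a : ℕ) < (k : ℕ) → φ (Vv k + β) - φ (Vv k) ≤ B := by
    intro k hk
    have hVk : Vv k ≤ Vv b := hVge k hk
    have h := slope_mono2 (Vv k) (Vv k + β) (Vv b) (Vv b + β) (hmj k) hmb hVk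
      (by linarith) (by linarith) (by linarith)
    rw [show Vv k + β - Vv k = β by ring, show Vv b + β - Vv b = β by ring,
      div_le_div_iff₀ hβpos hβpos] at h
    have h2 : φ (Vv k + β) - φ (Vv k) ≤ φ (Vv b + β) - φ (Vv b) :=
      le_of_mul_le_mul_right h hβpos
    rw [hBdef]
    linarith
  have hαB : α * B ≤ β * A := by
    have h := slope_mono2 (Vv b) (Vv b + β) (Vv a - α) (Vv a) hmb hVaα
      (by linarith) (by linarith) (by linarith) (by linarith)
    rw [show Vv b + β - Vv b = β by ring, show Vv a - (Vv a - α) = α by ring,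
      div_le_div_iff₀ hβpos hαpos] at h
    rw [hAdef, hBdef]
    linarith only [h]
  -- the transfer
  set Δf : Fin N → ℝ := fun j => if (j : ℕ) ≤ (a : ℕ) then -α else β with hΔdef
  have hΔlow : ∀ j : Fin N, (j : ℕ) ≤ (a : ℕ) → Δf j = -α := by
    intro j hj; rw [hΔdef]; exact if_pos hj
  have hΔhigh : ∀ j : Fin N, ¬ ((j : ℕ) ≤ (a : ℕ)) → Δf j = β := by
    intro j hj; rw [hΔdef]; exact if_neg hj
  have hΔq : ∑ j, q j * Δf j = 0 := by
    rw [← Finset.sum_filter_add_sum_filter_not Finset.univ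
      (fun j : Fin N => (j : ℕ) ≤ (a : ℕ)) (fun j => q j * Δf j)]
    have h1 : ∑ j ∈ Finset.univ.filter (fun j : Fin N => (j : ℕ) ≤ (a : ℕ)), q j * Δf j
        = QL * (-α) := by
      rw [hQLdef, Finset.sum_mul]
      exact Finset.sum_congr rfl fun j hj => by
        rw [hΔlow j (Finset.mem_filter.mp hj).2]
    have h2 : ∑ j ∈ Finset.univ.filter (fun j : Fin N => ¬ (j : ℕ) ≤ (a : ℕ)), q j * Δf j
        = QH * β := by
      rw [hQHdef, Finset.sum_mul]
      exact Finset.sum_congr rfl fun j hj => by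
        rw [hΔhigh j (Finset.mem_filter.mp hj).2]
    rw [h1, h2, hαdef, hβdef]
    ring
  have hGsum : ∑ j, p j * (φ (Vv j + Δf j) - φ (Vv j)) ≤ 0 := by
    rw [← Finset.sum_filter_add_sum_filter_not Finset.univ
      (fun j : Fin N => (j : ℕ) ≤ (a : ℕ)) (fun j => p j * (φ (Vv j + Δf j) - φ (Vv j)))]
    have h1 : ∑ j ∈ Finset.univ.filter (fun j : Fin N => (j : ℕ) ≤ (a : ℕ)),
        p j * (φ (Vv j + Δf j) - φ (Vv j)) ≤ PL * (-A) := by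
      rw [hPLdef, Finset.sum_mul]
      refine Finset.sum_le_sum fun j hj => ?_
      have hj' := (Finset.mem_filter.mp hj).2
      rw [hΔlow j hj', show Vv j + -α = Vv j - α by ring]
      exact mul_le_mul_of_nonneg_left (hlowslope j hj') (hp j).le
    have h2 : ∑ j ∈ Finset.univ.filter (fun j : Fin N => ¬ (j : ℕ) ≤ (a : ℕ)),
        p j * (φ (Vv j + Δf j) - φ (Vv j)) ≤ PH * B := by
      rw [hPHdef, Finset.sum_mul]
      refine Finset.sum_le_sum fun j hj => ?_
      have hj' := (Finset.mem_filter.mp hj).2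
      rw [hΔhigh j hj']
      exact mul_le_mul_of_nonneg_left (hhighslope j (by omega)) (hp j).le
    have h5 : QL * PH ≤ QH * PL := by
      have e : QL * PH - QH * PL = QL - PL := by
        have e1 : PH = 1 - PL := by linarith only [hPsplit]
        have e2 : QH = 1 - QL := by linarith only [hQsplit]
        rw [e1, e2]; ring
      linarith only [e, hQP]
    have h6 : β * PH ≤ α * PL := by
      have h7 := mul_le_mul_of_nonneg_left h5 hεpos.le
      rw [hαdef, hβdef]
      nlinarith only [h7]
    have hkey : B * PH ≤ A * PL := by
      have k1 := mul_le_mul_of_nonneg_right hαB hPHnn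
      have k2 := mul_le_mul_of_nonneg_left h6 hA0
      have k3 : α * (B * PH) ≤ α * (A * PL) := by nlinarith only [k1, k2]
      exact le_of_mul_le_mul_left k3 hαpos
    linarith only [h1, h2, hkey]
  -- the modified policy
  set pre : (Fin (T - 2) → Fin N) → Prop :=
    fun x => ∀ s : Fin (T - 2), (s : ℕ) + 2 < t → x s = ω0 s with hpredef
  have hpreupd : ∀ (x : Fin (T - 2) → Fin N) (j : Fin N),
      pre (Function.update x i j) ↔ pre x := by
    intro x j
    constructor
    · intro h s hs
      have hsi : s ≠ i := fun hc => by subst hc; omega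
      have := h s hs
      rwa [Function.update_of_ne hsi] at this
    · intro h s hs
      have hsi : s ≠ i := fun hc => by subst hc; omega
      rw [Function.update_of_ne hsi]
      exact h s hs
  set Qv : ℕ → (Fin (T - 2) → Fin N) → ℝ :=
    fun t' x => P.v t' x + (if t' = t ∧ pre x then Δf (x i) else 0) with hQvdef
  have hQadapt : ∀ t' : ℕ, t' ≤ T - 1 → ∀ x y : Fin (T - 2) → Fin N,
      (∀ s : Fin (T - 2), (s : ℕ) + 2 ≤ t' → x s = y s) → Qv t' x = Qv t' y := by
    intro t' ht' x y hxy
    have hP := P.adapted t' ht' x y hxy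
    simp only [hQvdef]
    rw [hP]
    congr 1
    by_cases hc : t' = t
    · subst hc
      have hxi : x i = y i := hxy i (by omega)
      have hpp : pre x ↔ pre y := by
        constructor
        · intro h s hs; rw [← hxy s (by omega)]; exact h s hs
        · intro h s hs; rw [hxy s (by omega)]; exact h s hs
      by_cases hpx : pre x
      · rw [if_pos ⟨rfl, hpx⟩, if_pos ⟨rfl, hpp.mp hpx⟩, hxi]
      · rw [if_neg (fun hc' => hpx hc'.2), if_neg (fun hc' => hpx (hpp.mpr hc'.2))]
    · rw [if_neg (fun hc' => hc hc'.1), if_neg (fun hc' => hc hc'.1)]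
  set Q : PolicyIV T N := ⟨Qv, hQadapt⟩ with hQdef
  have hQv_t : ∀ x, Q.v t x = P.v t x + (if pre x then Δf (x i) else 0) := by
    intro x
    show Qv t x = _
    simp only [hQvdef]
    by_cases hpx : pre x
    · rw [if_pos (show True ∧ pre x from ⟨trivial, hpx⟩), if_pos hpx]
    · rw [if_neg (show ¬ (True ∧ pre x) from fun hc => hpx hc.2), if_neg hpx]
  have hQv_ne : ∀ t' : ℕ, t' ≠ t → ∀ x, Q.v t' x = P.v t' x := by
    intro t' ht' x
    show Qv t' x = _
    simp only [hQvdef]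
    rw [if_neg (fun hc => ht' hc.1), add_zero]
  -- continuation values are unchanged
  have hcont_ge : ∀ t'' : ℕ, t ≤ t'' → ∀ x, contA T N δ q Q.v t'' x = contA T N δ q P.v t'' x := by
    intro t'' ht'' x
    apply contA_congr
    intro τ hτ z
    have hτt : τ ≠ t := by
      have := (Finset.mem_Icc.mp hτ).1
      omega
    exact hQv_ne τ hτt z
  have hcont_lt : ∀ t'' : ℕ, t'' < t → ∀ x,
      contA T N δ q Q.v t'' x = contA T N δ q P.v t'' x := by
    intro t'' htt x
    have hnotle : ¬ ((i : ℕ) + 2 ≤ t'') := by omega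
    have hFinv : ∀ (ω' : Fin (T - 2) → Fin N) (j : Fin N),
        (fun ω' => discCont T N δ t'' t (splice T N t'' x ω')
          * (if pre (splice T N t'' x ω') then (1 : ℝ) else 0)) (Function.update ω' i j)
        = (fun ω' => discCont T N δ t'' t (splice T N t'' x ω')
          * (if pre (splice T N t'' x ω') then (1 : ℝ) else 0)) ω' := by
      intro ω' j
      simp only
      rw [splice_update t'' x ω' i j hnotle,
        discCont_update δ t'' t (splice T N t'' x ω') i j (by omega),
        if_congr (hpreupd (splice T N t'' x ω') j) rfl rfl]
    have hsub : ∀ ω' : Fin (T - 2) → Fin N,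
        (∑ τ ∈ Finset.Icc (t'' + 1) T,
          discCont T N δ t'' τ (splice T N t'' x ω') * Q.v τ (splice T N t'' x ω'))
        = (∑ τ ∈ Finset.Icc (t'' + 1) T,
            discCont T N δ t'' τ (splice T N t'' x ω') * P.v τ (splice T N t'' x ω'))
          + Δf (ω' i) * (discCont T N δ t'' t (splice T N t'' x ω')
              * (if pre (splice T N t'' x ω') then (1 : ℝ) else 0)) := by
      intro ω'
      have hspi : splice T N t'' x ω' i = ω' i := if_neg hnotle
      have h2 : ∀ τ ∈ Finset.Icc (t'' + 1) T,
          discCont T N δ t'' τ (splice T N t'' x ω') * Q.v τ (splice T N t'' x ω')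
          = discCont T N δ t'' τ (splice T N t'' x ω') * P.v τ (splice T N t'' x ω')
            + (if τ = t then discCont T N δ t'' t (splice T N t'' x ω')
                * (if pre (splice T N t'' x ω') then Δf (splice T N t'' x ω' i) else 0)
               else 0) := by
        intro τ hτ
        by_cases hc : τ = t
        · subst hc
          rw [hQv_t, if_pos rfl]
          ring
        · rw [hQv_ne τ hc, if_neg hc, add_zero]
      rw [Finset.sum_congr rfl h2, Finset.sum_add_distrib,
        Finset.sum_ite_eq' (Finset.Icc (t'' + 1) T) t
          (fun _ => discCont T N δ t'' t (splice T N t'' x ω')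
            * (if pre (splice T N t'' x ω') then Δf (splice T N t'' x ω' i) else 0)),
        if_pos (Finset.mem_Icc.mpr ⟨by omega, htT⟩), hspi]
      by_cases hpx : pre (splice T N t'' x ω')
      · rw [if_pos hpx, if_pos hpx]; ring
      · rw [if_neg hpx, if_neg hpx]; ring
    have hdec := Epath_decomp i q hq1 Δf _ _ _ hFinv hsub
    unfold contA
    rw [hdec, hΔq, zero_mul, add_zero]
  -- payoff is unchanged
  have hpay : payoffIV T N δ q (δ n1) Q = payoffIV T N δ q (δ n1) P := by
    have hFpinv : ∀ (x : Fin (T - 2) → Fin N) (j : Fin N),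
        (fun x => δ n1 * (discIV T N δ t x * (if pre x then (1 : ℝ) else 0)))
          (Function.update x i j)
        = (fun x => δ n1 * (discIV T N δ t x * (if pre x then (1 : ℝ) else 0))) x := by
      intro x j
      simp only
      rw [discIV_update δ t x i j (by omega), if_congr (hpreupd x j) rfl rfl]
    have hsub : ∀ x : Fin (T - 2) → Fin N,
        (Q.v 1 x + δ n1 * ∑ t' ∈ Finset.Icc 2 T, discIV T N δ t' x * Q.v t' x)
        = (P.v 1 x + δ n1 * ∑ t' ∈ Finset.Icc 2 T, discIV T N δ t' x * P.v t' x)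
          + Δf (x i) * (δ n1 * (discIV T N δ t x * (if pre x then (1 : ℝ) else 0))) := by
      intro x
      have h1 : Q.v 1 x = P.v 1 x := hQv_ne 1 (by omega) x
      have h2 : ∀ t' ∈ Finset.Icc 2 T, discIV T N δ t' x * Q.v t' x
          = discIV T N δ t' x * P.v t' x
            + (if t' = t then discIV T N δ t x * (if pre x then Δf (x i) else 0) else 0) := by
        intro t' ht'
        by_cases hc : t' = t
        · subst hc
          rw [hQv_t x, if_pos rfl]
          ring
        · rw [hQv_ne t' hc x, if_neg hc, add_zero]
      rw [h1, Finset.sum_congr rfl h2, Finset.sum_add_distrib,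
        Finset.sum_ite_eq' (Finset.Icc 2 T) t
          (fun _ => discIV T N δ t x * (if pre x then Δf (x i) else 0)),
        if_pos (Finset.mem_Icc.mpr ⟨ht2, htT⟩)]
      by_cases hpx : pre x
      · rw [if_pos hpx, if_pos hpx]; ring
      · rw [if_neg hpx, if_neg hpx]; ring
    have hdec := Epath_decomp i q hq1 Δf _ _ _ hFpinv hsub
    unfold payoffIV
    rw [hdec, hΔq, zero_mul, add_zero]
  -- cost decreases
  have hcost : costIV T N p φ R Q ≤ I := by
    have hRt : (0 : ℝ) < R ^ (t - 1) := pow_pos (by linarith) _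
    have hFcinv : ∀ (x : Fin (T - 2) → Fin N) (j : Fin N),
        (fun x => (if pre x then (1 : ℝ) else 0) / R ^ (t - 1)) (Function.update x i j)
        = (fun x => (if pre x then (1 : ℝ) else 0) / R ^ (t - 1)) x := by
      intro x j
      simp only
      rw [if_congr (hpreupd x j) rfl rfl]
    have hsub : ∀ x : Fin (T - 2) → Fin N,
        (φ (Q.v 1 x) + ∑ t' ∈ Finset.Icc 2 T, φ (Q.v t' x) / R ^ (t' - 1))
        = (φ (P.v 1 x) + ∑ t' ∈ Finset.Icc 2 T, φ (P.v t' x) / R ^ (t' - 1))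
          + (φ (Vv (x i) + Δf (x i)) - φ (Vv (x i)))
            * ((if pre x then (1 : ℝ) else 0) / R ^ (t - 1)) := by
      intro x
      have h1 : Q.v 1 x = P.v 1 x := hQv_ne 1 (by omega) x
      have h2 : ∀ t' ∈ Finset.Icc 2 T, φ (Q.v t' x) / R ^ (t' - 1)
          = φ (P.v t' x) / R ^ (t' - 1)
            + (if t' = t then (φ (Q.v t x) - φ (P.v t x)) / R ^ (t - 1) else 0) := by
        intro t' ht'
        by_cases hc : t' = t
        · subst hc
          rw [if_pos rfl]
          ring
        · rw [hQv_ne t' hc x, if_neg hc, add_zero]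
      have h3 : φ (Q.v t x) - φ (P.v t x)
          = (φ (Vv (x i) + Δf (x i)) - φ (Vv (x i))) * (if pre x then (1 : ℝ) else 0) := by
        by_cases hpx : pre x
        · rw [hQv_t x, if_pos hpx, if_pos hpx, hvP x hpx, mul_one]
        · rw [hQv_t x, if_neg hpx, if_neg hpx, add_zero, mul_zero, sub_self]
      rw [h1, Finset.sum_congr rfl h2, Finset.sum_add_distrib,
        Finset.sum_ite_eq' (Finset.Icc 2 T) t
          (fun _ => (φ (Q.v t x) - φ (P.v t x)) / R ^ (t - 1)),
        if_pos (Finset.mem_Icc.mpr ⟨ht2, htT⟩), h3]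
      ring
    have hdec := Epath_decomp i p hp1 (fun j => φ (Vv j + Δf j) - φ (Vv j)) _ _ _ hFcinv hsub
    have hM : 0 ≤ ∑ x : Fin (T - 2) → Fin N, (∏ s, p (x s)) *
        ((if pre x then (1 : ℝ) else 0) / R ^ (t - 1)) := by
      refine Finset.sum_nonneg fun x _ => mul_nonneg
        (Finset.prod_nonneg fun s _ => (hp _).le) (div_nonneg ?_ hRt.le)
      by_cases hpx : pre x
      · rw [if_pos hpx]; norm_num
      · rw [if_neg hpx]
    have hSM : (∑ j, p j * (φ (Vv j + Δf j) - φ (Vv j)))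
        * (∑ x : Fin (T - 2) → Fin N, (∏ s, p (x s)) *
          ((if pre x then (1 : ℝ) else 0) / R ^ (t - 1))) ≤ 0 :=
      mul_nonpos_iff.mpr (Or.inr ⟨hGsum, hM⟩)
    have hle : costIV T N p φ R Q ≤ costIV T N p φ R P := by
      unfold costIV
      rw [hdec]
      linarith only [hSM]
    exact le_trans hle hPfeas.2.1
  -- lower bounds
  have hQlb : ∀ t' ∈ Finset.Icc 1 T, ∀ x, m ≤ Q.v t' x := by
    intro t' ht' x
    by_cases hc : t' = t ∧ pre x
    · obtain ⟨rfl, hpx⟩ := hc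
      rw [hQv_t x, if_pos hpx, hvP x hpx]
      by_cases hj : (x i : ℕ) ≤ (a : ℕ)
      · rw [hΔlow (x i) hj]
        have := hVle (x i) hj
        linarith [hVaα]
      · rw [hΔhigh (x i) hj]
        linarith [hmj (x i), hβpos.le]
    · have he : Q.v t' x = P.v t' x := by
        show Qv t' x = _
        simp only [hQvdef]
        rw [if_neg hc, add_zero]
      rw [he]
      exact hPfeas.1 t' ht' x
  -- incentive constraints
  have hQIC : ICIV T N δ q Q := by
    intro t'' h2'' hT1'' x y hxy
    rcases lt_trichotomy t'' t with hlt | heq | hgt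
    · rw [hQv_ne t'' (ne_of_lt hlt) y, hQv_ne t'' (ne_of_lt hlt) x,
        hcont_lt t'' hlt y, hcont_lt t'' hlt x]
      exact hIC t'' h2'' hT1'' x y hxy
    · subst heq
      rw [hQv_t y, hQv_t x, hcont_ge t'' le_rfl y, hcont_ge t'' le_rfl x]
      by_cases hpx : pre x
      · have hpy : pre y := fun s hs => by rw [← hxy s hs]; exact hpx s hs
        rw [if_pos hpx, if_pos hpy, hvP x hpx, hvP y hpy, hwP x hpx, hwP y hpy,
          deltaAt_eq δ t'' x i hi]
        by_cases hjx : (x i : ℕ) ≤ (a : ℕ) <;> by_cases hjy : (y i : ℕ) ≤ (a : ℕ)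
        · rw [hΔlow (y i) hjy, hΔlow (x i) hjx]
          linarith [F2 (x i) (y i)]
        · rw [hΔhigh (y i) hjy, hΔlow (x i) hjx]
          have hgap := hσle (x i) (y i) hjx (by omega)
          linarith [hεσ, hαβ]
        · rw [hΔlow (y i) hjy, hΔhigh (x i) hjx]
          linarith [F2 (x i) (y i), hαpos.le, hβpos.le]
        · rw [hΔhigh (y i) hjy, hΔhigh (x i) hjx]
          linarith [F2 (x i) (y i)]
      · have hpy : ¬ pre y := fun hpy => hpx (fun s hs => by rw [hxy s hs]; exact hpy s hs)
        rw [if_neg hpx, if_neg hpy, add_zero, add_zero]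
        exact hIC t'' h2'' hT1'' x y hxy
    · rw [hQv_ne t'' (ne_of_gt hgt) y, hQv_ne t'' (ne_of_gt hgt) x,
        hcont_ge t'' (le_of_lt hgt) y, hcont_ge t'' (le_of_lt hgt) x]
      exact hIC t'' h2'' hT1'' x y hxy
  have hQfeas : FeasIV T N δ p q φ R I m Q := ⟨hQlb, hcost, hQIC⟩
  have hQmax : ∀ Q' : PolicyIV T N, FeasIV T N δ p q φ R I m Q' →
      payoffIV T N δ q (δ n1) Q' ≤ payoffIV T N δ q (δ n1) Q := by
    intro Q' hQ'
    rw [hpay]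
    exact hPmax Q' hQ'
  have hfinal := hPuniq Q hQfeas hQmax t (Finset.mem_Icc.mpr ⟨by omega, htT⟩) ω0
  rw [hQv_t ω0, if_pos (show pre ω0 from fun s _ => rfl)] at hfinal
  rw [hΔlow (ω0 i) (le_refl _)] at hfinal
  linarith [hαpos]
end

section
/- Proposition (Inefficient backloading from the first-order conditions, T = 3). Let N ≥ 2, let 0 < δ^(1) < ⋯ < δ^(N), let p, q be probability vectors on {1,…,N} with p_n > 0 and q_n > 0 for all n and Σ_{n=1}^{m'} p_n ≥ Σ_{n=1}^{m'} q_n for every m', and write Q̄_n := Σ_{m=n}^N q_m. Let R > 0, δ₁ > 0, λ > 0, let φ' : ℝ → ℝ be strictly increasing (the derivative of a strictly convex payment function φ), and let w, z : {1,…,N} → ℝ with w strictly decreasing. Suppose the first-order conditions hold: δ₁ = (λ/R)·Σ_{n=1}^N p_n φ'(w_n), and for every n ∈ {2,…,N}: 0 = (δ^(n) − δ^(n−1))·(δ₁·Q̄_n − (λ/R)·Σ_{m=n}^N p_m φ'(w_m)) + (λ p_n δ^(n)/R)·φ'(w_n) − (λ p_n/R²)·φ'(z_n). Then for every n ∈ {2,…,N}: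 δ^(n)·R·φ'(w_n) < φ'(z_n). -/
/-!
Since `w` is strictly decreasing and `φ'` strictly increasing, the `p`-weighted average of
`φ'(w m)` over the tail `m ≥ n` lies strictly below its average over all types, which by the
first date's condition is `δ₁ R / λ`. Together with `Σ_{m ≥ n} p_m ≤ Q̄_n` (first-order
stochastic dominance) this makes `δ₁ Q̄_n - (λ/R) Σ_{m ≥ n} p_m φ'(w m)` positive, so the
`n`-th stationarity condition forces `φ'(z n)` above `δ n R φ'(w n)`.
-/

open Finset

theorem Finset.sum_Icc_add_sum_Icc_succ {M : Type*} [AddCommMonoid M] (f : ℕ → M)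
    {a m N : ℕ} (ham : a ≤ m + 1) (hmN : m ≤ N) :
    ∑ i ∈ Icc a m, f i + ∑ i ∈ Icc (m + 1) N, f i = ∑ i ∈ Icc a N, f i := by
  rw [← sum_union (disjoint_left.2 fun i hi hi' => by simp only [mem_Icc] at hi hi'; omega)]
  congr 1
  ext i
  simp only [mem_union, mem_Icc]
  omega

theorem Finset.sum_Icc_succ_le_of_sum_Icc_le {p q : ℕ → ℝ} {m N : ℕ} (hmN : m ≤ N)
    (htotal : ∑ i ∈ Icc 1 N, p i = ∑ i ∈ Icc 1 N, q i)
    (hprefix : ∑ i ∈ Icc 1 m, q i ≤ ∑ i ∈ Icc 1 m, p i) :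
    ∑ i ∈ Icc (m + 1) N, p i ≤ ∑ i ∈ Icc (m + 1) N, q i := by
  have hp := sum_Icc_add_sum_Icc_succ p (Nat.le_add_left 1 m) hmN
  have hq := sum_Icc_add_sum_Icc_succ q (Nat.le_add_left 1 m) hmN
  linarith

/-- If `a ≥ c` on `s` and `a < c` on `t`, the `p`-weighted average of `a` over `t` is below
its average over `s`, written without division. -/
theorem Finset.sum_mul_sum_mul_lt_of_le_of_lt {ι : Type*} {s t : Finset ι} {p a : ι → ℝ} {c : ℝ}
    (hs : s.Nonempty) (hps : ∀ i ∈ s, 0 < p i) (has : ∀ i ∈ s, c ≤ a i)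
    (ht : t.Nonempty) (hpt : ∀ j ∈ t, 0 < p j) (hat : ∀ j ∈ t, a j < c) :
    (∑ i ∈ s, p i) * ∑ j ∈ t, p j * a j < (∑ j ∈ t, p j) * ∑ i ∈ s, p i * a i := by
  have hs_pos : 0 < ∑ i ∈ s, p i := sum_pos hps hs
  have ht_pos : 0 < ∑ j ∈ t, p j := sum_pos hpt ht
  have hs_ge : (∑ i ∈ s, p i) * c ≤ ∑ i ∈ s, p i * a i := by
    rw [sum_mul]
    exact sum_le_sum fun i hi => mul_le_mul_of_nonneg_left (has i hi) (hps i hi).le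
  have ht_lt : ∑ j ∈ t, p j * a j < (∑ j ∈ t, p j) * c := by
    rw [sum_mul]
    exact sum_lt_sum_of_nonempty ht fun j hj => mul_lt_mul_of_pos_left (hat j hj) (hpt j hj)
  calc (∑ i ∈ s, p i) * ∑ j ∈ t, p j * a j
      < (∑ i ∈ s, p i) * ((∑ j ∈ t, p j) * c) := mul_lt_mul_of_pos_left ht_lt hs_pos
    _ = (∑ j ∈ t, p j) * ((∑ i ∈ s, p i) * c) := by ring
    _ ≤ (∑ j ∈ t, p j) * ∑ i ∈ s, p i * a i := mul_le_mul_of_nonneg_left hs_ge ht_pos.le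

theorem Finset.sum_Icc_mul_sum_Icc_succ_lt_of_strictAnti {p a : ℕ → ℝ} {m N : ℕ} (hm : 1 ≤ m)
    (hmN : m < N) (hp : ∀ i, 1 ≤ i → i ≤ N → 0 < p i)
    (ha : ∀ i j, 1 ≤ i → i < j → j ≤ N → a j < a i) :
    (∑ i ∈ Icc 1 m, p i) * ∑ j ∈ Icc (m + 1) N, p j * a j <
      (∑ j ∈ Icc (m + 1) N, p j) * ∑ i ∈ Icc 1 m, p i * a i := by
  refine sum_mul_sum_mul_lt_of_le_of_lt (c := a m) ⟨m, by simpa⟩ ?_ ?_ ⟨m + 1, by simpa⟩ ?_ ?_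
  · intro i hi
    rw [mem_Icc] at hi
    exact hp i hi.1 (by omega)
  · intro i hi
    rw [mem_Icc] at hi
    rcases hi.2.eq_or_lt with rfl | hlt
    · exact le_rfl
    · exact (ha i m hi.1 hlt hmN.le).le
  · intro j hj
    rw [mem_Icc] at hj
    exact hp j (by omega) hj.2
  · intro j hj
    rw [mem_Icc] at hj
    exact ha m j hm hj.1 hj.2

theorem mul_lt_mul_of_first_stationarity {κ δ₁ A B P' P Q : ℝ} (hκ : 0 < κ) (hδ₁ : 0 < δ₁)
    (hstat : δ₁ = κ * (A + B)) (hP : P' + P = 1) (hsep : P' * B < P * A) (hPQ : P ≤ Q) :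
    κ * B < δ₁ * Q :=
  calc κ * B = κ * ((P' + P) * B) := by rw [hP, one_mul]
    _ < κ * (P * (A + B)) := mul_lt_mul_of_pos_left (by linarith) hκ
    _ = δ₁ * P := by rw [hstat]; ring
    _ ≤ δ₁ * Q := mul_le_mul_of_nonneg_left hPQ hδ₁.le

theorem mul_lt_of_stationarity {D δ R lam π a b : ℝ} (hD : 0 < D) (hR : 0 < R) (hlam : 0 < lam)
    (hπ : 0 < π) (h : 0 = D + lam * π * δ / R * a - lam * π / R ^ 2 * b) :
    δ * R * a < b := by
  have hcoef : 0 < lam * π / R ^ 2 := by positivity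
  refine lt_of_mul_lt_mul_left ?_ hcoef.le
  have : lam * π / R ^ 2 * (δ * R * a) = lam * π * δ / R * a := by field_simp
  linarith

theorem stmt12_general
    (N : ℕ)
    (δ : ℕ → ℝ)
    (hδmono : ∀ n m, 1 ≤ n → n < m → m ≤ N → δ n < δ m)
    (p q : ℕ → ℝ)
    (hp : ∀ n, 1 ≤ n → n ≤ N → 0 < p n)
    (hp1 : ∑ n ∈ Finset.Icc 1 N, p n = 1)
    (hq1 : ∑ n ∈ Finset.Icc 1 N, q n = 1)
    (hFOSD : ∀ m', 1 ≤ m' → m' ≤ N →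
      ∑ n ∈ Finset.Icc 1 m', q n ≤ ∑ n ∈ Finset.Icc 1 m', p n)
    (R δ1 lam : ℝ) (hR : 0 < R) (hδ1' : 0 < δ1) (hlam : 0 < lam)
    (φ' : ℝ → ℝ) (hφ' : StrictMono φ')
    (w z : ℕ → ℝ)
    (hw : ∀ n m, 1 ≤ n → n < m → m ≤ N → w m < w n)
    (hFOC1 : δ1 = lam / R * ∑ n ∈ Finset.Icc 1 N, p n * φ' (w n))
    (hFOCn : ∀ n, 2 ≤ n → n ≤ N →
      0 = (δ n - δ (n - 1)) *
            (δ1 * (∑ m ∈ Finset.Icc n N, q m) -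
              lam / R * ∑ m ∈ Finset.Icc n N, p m * φ' (w m)) +
          lam * p n * δ n / R * φ' (w n) - lam * p n / R ^ 2 * φ' (z n)) :
    ∀ n, 2 ≤ n → n ≤ N → δ n * R * φ' (w n) < φ' (z n) := by
  intro n hn hnN
  obtain ⟨m, rfl⟩ : ∃ m, n = m + 1 := ⟨n - 1, by omega⟩
  have hFOC := hFOCn (m + 1) hn hnN
  rw [Nat.add_sub_cancel] at hFOC
  have htail : ∑ i ∈ Icc (m + 1) N, p i ≤ ∑ i ∈ Icc (m + 1) N, q i :=
    sum_Icc_succ_le_of_sum_Icc_le (by omega) (hp1.trans hq1.symm) (hFOSD m (by omega) (by omega))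
  have hsep := sum_Icc_mul_sum_Icc_succ_lt_of_strictAnti (by omega : 1 ≤ m) (by omega : m < N) hp
    fun i j hi hij hj => hφ' (hw i j hi hij hj)
  rw [← sum_Icc_add_sum_Icc_succ _ (Nat.le_add_left 1 m) (by omega : m ≤ N)] at hFOC1 hp1
  have hgap := mul_lt_mul_of_first_stationarity (by positivity) hδ1' hFOC1 hp1 hsep htail
  exact mul_lt_of_stationarity (mul_pos (sub_pos.2 (hδmono m (m + 1) (by omega) (by omega) hnN))
    (sub_pos.2 hgap)) hR hlam (hp (m + 1) (by omega) hnN) hFOC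

/-- Inefficient backloading from the first-order conditions (T = 3).
`w n` is the date-2 utility and `z n` the date-3 utility when the date-2 discount factor
is `δ n`; `φ'` is the (strictly increasing) derivative of the strictly convex payment
function; `lam` the multiplier on the firm's break-even constraint; `p` the firm's true
probabilities and `q` the agent's probabilities, with the agent weakly more optimistic
(first-order stochastic dominance).  Given the stationarity (first-order) conditions of
an interior separating solution (`w` strictly decreasing), consumption is inefficiently
backloaded: `δ n · R · φ'(w n) < φ'(z n)` for every `n ≥ 2`. -/
theorem stmt12
    (N : ℕ) (hN : 2 ≤ N)
    (δ : ℕ → ℝ) (hδ1 : 0 < δ 1)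
    (hδmono : ∀ n m, 1 ≤ n → n < m → m ≤ N → δ n < δ m)
    (p q : ℕ → ℝ)
    (hp : ∀ n, 1 ≤ n → n ≤ N → 0 < p n)
    (hq : ∀ n, 1 ≤ n → n ≤ N → 0 < q n)
    (hp1 : ∑ n ∈ Finset.Icc 1 N, p n = 1)
    (hq1 : ∑ n ∈ Finset.Icc 1 N, q n = 1)
    (hFOSD : ∀ m', 1 ≤ m' → m' ≤ N →
      ∑ n ∈ Finset.Icc 1 m', q n ≤ ∑ n ∈ Finset.Icc 1 m', p n)
    (R δ1 lam : ℝ) (hR : 0 < R) (hδ1' : 0 < δ1) (hlam : 0 < lam)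
    (φ' : ℝ → ℝ) (hφ' : StrictMono φ')
    (w z : ℕ → ℝ)
    (hw : ∀ n m, 1 ≤ n → n < m → m ≤ N → w m < w n)
    (hFOC1 : δ1 = lam / R * ∑ n ∈ Finset.Icc 1 N, p n * φ' (w n))
    (hFOCn : ∀ n, 2 ≤ n → n ≤ N →
      0 = (δ n - δ (n - 1)) *
            (δ1 * (∑ m ∈ Finset.Icc n N, q m) -
              lam / R * ∑ m ∈ Finset.Icc n N, p m * φ' (w m)) +
          lam * p n * δ n / R * φ' (w n) - lam * p n / R ^ 2 * φ' (z n)) :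
    ∀ n, 2 ≤ n → n ≤ N → δ n * R * φ' (w n) < φ' (z n) :=
  stmt12_general N δ hδmono p q hp hp1 hq1 hFOSD R δ1 lam hR hδ1' hlam φ' hφ' w z hw hFOC1 hFOCn
end

section
/- Proposition (Inverse Euler equations). Let v^E be a maximizer of Problem IV (for fixed initial type δ₁) and let v^B be a maximizer of the efficient problem. Suppose both are interior: every utility value lies in the interior of the domain of φ. Then for every t ∈ {2,…,T−1} and every history H ∈ Δ^{t−2}: E_F[φ'(v^E_{t+1}(H,δ̃_t,δ̃_{t+1}))] = R·(Σ_n q_n δ^(n))·E_F[φ'(v^E_t(H,δ̃_t))], and E_F[φ'(v^B_{t+1}(δ₁,H,δ̃_t,δ̃_{t+1}))] = R·(Σ_n p_n δ^(n))·E_F[φ'(v^B_t(δ₁,H,δ̃_t))], where the expectations E_F are over independent draws δ̃_t, δ̃_{t+1} with weights p. Moreover, E_F[φ'(v^E_2(δ̃₂))] = R·δ₁·φ'(v^E_1) and E_F[φ'(v^B_2(δ₁,δ̃₂))] = R·δ₁·φ'(v^B_1(δ₁)). -/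
/-- Feasibility for Problem IV with utilities in the domain `D` of `φ`. -/
def FeasIVD (T N : ℕ) (δ p q : Fin N → ℝ) (φ : ℝ → ℝ) (R I : ℝ) (D : Set ℝ)
    (P : PolicyIV T N) : Prop :=
  (∀ t ∈ Finset.Icc 1 T, ∀ ω, P.v t ω ∈ D) ∧
  costIV T N p φ R P ≤ I ∧ ICIV T N δ q P

/-- A policy for the efficient problem: paths `ω : Fin (T-1) → Fin N` record the type
draws at dates `1,…,T-1` (coordinate `s` is the draw at date `s+1`); `v t` depends
only on the draws at dates `1,…,t` for `t ≤ T-1`. -/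
structure PolicyB (T N : ℕ) where
  v : ℕ → (Fin (T - 1) → Fin N) → ℝ
  adapted : ∀ t : ℕ, t ≤ T - 1 → ∀ ω ω' : Fin (T - 1) → Fin N,
    (∀ s : Fin (T - 1), (s : ℕ) < t → ω s = ω' s) → v t ω = v t ω'

/-- Expectation over efficient-problem paths with i.i.d. coordinate weights `p`. -/
noncomputable def EpathB (T N : ℕ) (p : Fin N → ℝ) (f : (Fin (T - 1) → Fin N) → ℝ) : ℝ :=
  ∑ ω : Fin (T - 1) → Fin N, (∏ s, p (ω s)) * f ω

/-- Discounting of date-`t` utility in the efficient problem: `Π_{s=1}^{t-1} δ̃_s`. -/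
noncomputable def discBpol (T N : ℕ) (δ : Fin N → ℝ) (t : ℕ) (ω : Fin (T - 1) → Fin N) : ℝ :=
  ∏ s : Fin (T - 1), if (s : ℕ) + 1 < t then δ (ω s) else 1

/-- Splice two efficient-problem paths: keep the draws of `ω` at dates `< t` and
fresh draws `ω'` at dates `≥ t`. -/
def spliceB (T N : ℕ) (t : ℕ) (ω ω' : Fin (T - 1) → Fin N) : Fin (T - 1) → Fin N :=
  fun s => if (s : ℕ) + 1 < t then ω s else ω' s

/-- Objective of the efficient problem. -/
noncomputable def objBpol (T N : ℕ) (δ p : Fin N → ℝ) (P : PolicyB T N) : ℝ :=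
  EpathB T N p (fun ω => ∑ t ∈ Finset.Icc 1 T, discBpol T N δ t ω * P.v t ω)

/-- Cost of the efficient problem. -/
noncomputable def costBpol (T N : ℕ) (p : Fin N → ℝ) (φ : ℝ → ℝ) (R : ℝ) (P : PolicyB T N) : ℝ :=
  EpathB T N p (fun ω => ∑ t ∈ Finset.Icc 1 T, φ (P.v t ω) / R ^ (t - 1))

/-- Feasibility for the efficient problem with utilities in the domain `D`. -/
def FeasBD (T N : ℕ) (p : Fin N → ℝ) (φ : ℝ → ℝ) (R I : ℝ) (D : Set ℝ)
    (P : PolicyB T N) : Prop :=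
  (∀ t ∈ Finset.Icc 1 T, ∀ ω, P.v t ω ∈ D) ∧ costBpol T N p φ R P ≤ I

open Finset Filter Topology

section PathExpectation

variable {k N : ℕ}

noncomputable def pathExp (r : Fin N → ℝ) (f : (Fin k → Fin N) → ℝ) : ℝ :=
  ∑ ω, (∏ s, r (ω s)) * f ω

variable {r : Fin N → ℝ}

lemma pathExp_add (f g : (Fin k → Fin N) → ℝ) :
    pathExp r (fun ω => f ω + g ω) = pathExp r f + pathExp r g := by
  simp only [pathExp, mul_add, sum_add_distrib]

lemma pathExp_sub (f g : (Fin k → Fin N) → ℝ) :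
    pathExp r (fun ω => f ω - g ω) = pathExp r f - pathExp r g := by
  simp only [pathExp, mul_sub, sum_sub_distrib]

lemma pathExp_const_mul (c : ℝ) (f : (Fin k → Fin N) → ℝ) :
    pathExp r (fun ω => c * f ω) = c * pathExp r f := by
  simp only [pathExp, mul_sum]
  exact sum_congr rfl fun _ _ => by ring

lemma pathExp_congr {f g : (Fin k → Fin N) → ℝ} (h : ∀ ω, f ω = g ω) :
    pathExp r f = pathExp r g := by
  simp only [pathExp, h]

lemma pathExp_const (hr : ∑ n, r n = 1) (c : ℝ) : pathExp (k := k) r (fun _ => c) = c := by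
  rw [pathExp, ← sum_mul, ← Fintype.prod_sum (fun _ n => r n)]
  simp [hr]

lemma pathExp_comp_eval (hr : ∑ n, r n = 1) (s₀ : Fin k) (g : Fin N → ℝ) :
    pathExp r (fun ω => g (ω s₀)) = ∑ n, r n * g n := by
  classical
  have h : ∀ ω : Fin k → Fin N, (∏ s, r (ω s)) * g (ω s₀) =
      ∏ s, (if s = s₀ then r (ω s) * g (ω s) else r (ω s)) := fun ω => by
    calc (∏ s, r (ω s)) * g (ω s₀) = (∏ s, r (ω s)) * ∏ s, (if s = s₀ then g (ω s) else 1) := by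
          simp
      _ = _ := by
          rw [← prod_mul_distrib]
          exact prod_congr rfl fun s _ => by split_ifs <;> simp
  simp only [pathExp, h, ← Fintype.prod_sum (fun s n => if s = s₀ then r n * g n else r n)]
  simp [hr]

lemma prod_piecewise_mul_prod_piecewise (S : Set (Fin k)) [DecidablePred (· ∈ S)]
    (ω ω' : Fin k → Fin N) :
    (∏ s, r (S.piecewise ω ω' s)) * ∏ s, r (S.piecewise ω' ω s) =
      (∏ s, r (ω s)) * ∏ s, r (ω' s) := by
  simp only [← prod_mul_distrib]
  refine prod_congr rfl fun s _ => ?_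
  by_cases hs : s ∈ S <;> simp [hs, mul_comm]

/-- Swapping the `S`-coordinates of two independent paths preserves their joint law; this makes
functions of disjoint sets of coordinates uncorrelated. -/
theorem pathExp_mul_of_dependsOn (hr : ∑ n, r n = 1) {S : Set (Fin k)} [DecidablePred (· ∈ S)]
    {A B : (Fin k → Fin N) → ℝ} (hA : DependsOn A S) (hB : DependsOn B Sᶜ) :
    pathExp r (fun ω => A ω * B ω) = pathExp r A * pathExp r B := by
  let μ : (Fin k → Fin N) → ℝ := fun ω => ∏ s, r (ω s)
  let σ : (Fin k → Fin N) × (Fin k → Fin N) → (Fin k → Fin N) × (Fin k → Fin N) :=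
    fun x => (S.piecewise x.1 x.2, S.piecewise x.2 x.1)
  have hσ : Function.Involutive σ := fun x => by
    ext s <;> by_cases hs : s ∈ S <;> simp [σ, hs]
  let F : (Fin k → Fin N) × (Fin k → Fin N) → ℝ := fun x => μ x.1 * μ x.2 * (A x.1 * B x.1)
  have hF : ∀ x, F (σ x) = μ x.1 * A x.1 * (μ x.2 * B x.2) := fun x => by
    have hA' : A (σ x).1 = A x.1 := hA fun s hs => Set.piecewise_eq_of_mem _ _ _ hs
    have hB' : B (σ x).1 = B x.2 := hB fun s hs => Set.piecewise_eq_of_notMem _ _ _ hs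
    have hμ : μ (σ x).1 * μ (σ x).2 = μ x.1 * μ x.2 := prod_piecewise_mul_prod_piecewise S x.1 x.2
    simp only [F, hA', hB', hμ]
    ring
  have hμ1 : ∑ ω, μ ω = 1 := by simpa [pathExp] using pathExp_const (k := k) hr 1
  calc pathExp r (fun ω => A ω * B ω)
      = ∑ x, F x := by
        rw [Fintype.sum_prod_type]
        refine sum_congr rfl fun ω _ => ?_
        simp only [F, ← sum_mul, ← mul_sum, hμ1, mul_one]
        rfl
    _ = ∑ x, F (σ x) := (hσ.bijective.sum_comp F).symm
    _ = pathExp r A * pathExp r B := by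
        simp only [hF, Fintype.sum_prod_type, ← sum_mul_sum]
        rfl

lemma dependsOn_comp_piecewise (S : Set (Fin k)) [DecidablePred (· ∈ S)] (α : Fin k → Fin N)
    (f : (Fin k → Fin N) → ℝ) : DependsOn (fun ω => f (S.piecewise α ω)) Sᶜ :=
  fun ω ω' h => congrArg f <| funext fun s => by
    by_cases hs : s ∈ S
    · simp [hs]
    · simp [hs, h s hs]

lemma DependsOn.mul {ι : Type*} {α : ι → Type*} {β : Type*} [Mul β] {U : Set ι}
    {f g : (Π i, α i) → β} (hf : DependsOn f U) (hg : DependsOn g U) :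
    DependsOn (fun x => f x * g x) U :=
  fun _ _ h => congrArg₂ (· * ·) (hf h) (hg h)

lemma DependsOn.comp_piecewise {U : Set (Fin k)} {f : (Fin k → Fin N) → ℝ} (hf : DependsOn f U)
    (S : Set (Fin k)) [DecidablePred (· ∈ S)] (α : Fin k → Fin N) :
    DependsOn (fun ω => f (S.piecewise α ω)) U := fun ω ω' h => hf fun s hs => by
  by_cases h' : s ∈ S
  · simp [Set.piecewise, h']
  · simp [Set.piecewise, h', h s hs]

noncomputable def cylinderIndicator (S : Set (Fin k)) (ω₀ : Fin k → Fin N) :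
    (Fin k → Fin N) → ℝ :=
  (S.pi fun s => ({ω₀ s} : Set (Fin N))).indicator 1

lemma cylinderIndicator_of_forall {S : Set (Fin k)} {ω₀ ω : Fin k → Fin N}
    (h : ∀ s ∈ S, ω s = ω₀ s) : cylinderIndicator S ω₀ ω = 1 :=
  Set.indicator_of_mem (by simpa [Set.mem_pi] using h) _

lemma cylinderIndicator_of_not_forall {S : Set (Fin k)} {ω₀ ω : Fin k → Fin N}
    (h : ¬ ∀ s ∈ S, ω s = ω₀ s) : cylinderIndicator S ω₀ ω = 0 :=
  Set.indicator_of_notMem (by simpa [Set.mem_pi] using h) _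

lemma dependsOn_cylinderIndicator (S : Set (Fin k)) (ω₀ : Fin k → Fin N) :
    DependsOn (cylinderIndicator S ω₀) S := fun ω ω' h => by
  by_cases hω : ∀ s ∈ S, ω s = ω₀ s
  · rw [cylinderIndicator_of_forall hω,
      cylinderIndicator_of_forall fun s hs => (h s hs).symm.trans (hω s hs)]
  · rw [cylinderIndicator_of_not_forall hω,
      cylinderIndicator_of_not_forall fun h' => hω fun s hs => (h s hs).trans (h' s hs)]

lemma pathExp_cylinderIndicator_pos (hr : ∀ n, 0 < r n) (S : Set (Fin k)) (ω₀ : Fin k → Fin N) :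
    0 < pathExp r (cylinderIndicator S ω₀) := by
  refine sum_pos' (fun ω _ => mul_nonneg (prod_nonneg fun s _ => (hr _).le)
    (Set.indicator_nonneg (fun _ _ => zero_le_one) ω)) ⟨ω₀, mem_univ _, ?_⟩
  rw [cylinderIndicator_of_forall fun _ _ => rfl, mul_one]
  exact prod_pos fun s _ => hr _

theorem pathExp_cylinderIndicator_mul (hr : ∑ n, r n = 1) (S : Set (Fin k))
    [DecidablePred (· ∈ S)] (ω₀ : Fin k → Fin N) (f : (Fin k → Fin N) → ℝ) :
    pathExp r (fun ω => cylinderIndicator S ω₀ ω * f ω) =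
      pathExp r (cylinderIndicator S ω₀) * pathExp r (fun ω => f (S.piecewise ω₀ ω)) := by
  rw [← pathExp_mul_of_dependsOn hr (dependsOn_cylinderIndicator S ω₀)
    (dependsOn_comp_piecewise S ω₀ f)]
  refine pathExp_congr fun ω => ?_
  by_cases hω : ∀ s ∈ S, ω s = ω₀ s
  · have : S.piecewise ω₀ ω = ω := by
      funext s
      by_cases hs : s ∈ S
      · simp [hs, hω s hs]
      · simp [hs]
    rw [this]
  · simp [cylinderIndicator_of_not_forall hω]

end PathExpectation

section Perturbation

variable {k N : ℕ} {r : Fin N → ℝ} {D : Set ℝ} {φ φ' : ℝ → ℝ}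

lemma eventually_add_mul_mem_interior {s : Finset ℕ} {v : ℕ → (Fin k → Fin N) → ℝ}
    (hv : ∀ t ∈ s, ∀ ω, v t ω ∈ interior D) (d : ℕ → (Fin k → Fin N) → ℝ) :
    ∀ᶠ ε in 𝓝 (0 : ℝ), ∀ t ∈ s, ∀ ω, v t ω + ε * d t ω ∈ interior D := by
  refine (eventually_all_finset s).2 fun t ht => eventually_all.2 fun ω => ?_
  have hc : Continuous fun ε : ℝ => v t ω + ε * d t ω := by fun_prop
  exact hc.continuousAt.eventually_mem (isOpen_interior.mem_nhds (by simpa using hv t ht ω))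

lemma hasDerivAt_pathExp_sum (hφ : ∀ x ∈ interior D, HasDerivAt φ (φ' x) x) {s : Finset ℕ}
    (w : ℕ → ℝ) {v : ℕ → (Fin k → Fin N) → ℝ} (hv : ∀ t ∈ s, ∀ ω, v t ω ∈ interior D)
    (d : ℕ → (Fin k → Fin N) → ℝ) :
    HasDerivAt (fun ε => pathExp r (fun ω => ∑ t ∈ s, φ (v t ω + ε * d t ω) / w t))
      (pathExp r (fun ω => ∑ t ∈ s, φ' (v t ω) * d t ω / w t)) 0 := by
  refine HasDerivAt.fun_sum fun ω _ => (HasDerivAt.fun_sum fun t ht => ?_).const_mul _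
  have hline : HasDerivAt (fun ε : ℝ => v t ω + ε * d t ω) (d t ω) 0 := by
    simpa using ((hasDerivAt_id (0 : ℝ)).mul_const (d t ω)).const_add (v t ω)
  exact ((hφ _ (hv t ht ω)).comp_of_eq 0 hline (by simp)).div_const (w t)

theorem pathExp_sum_deriv_eq_zero (hφ : ∀ x ∈ interior D, HasDerivAt φ (φ' x) x)
    {s : Finset ℕ} (w : ℕ → ℝ) {v : ℕ → (Fin k → Fin N) → ℝ}
    (hv : ∀ t ∈ s, ∀ ω, v t ω ∈ interior D) (d : ℕ → (Fin k → Fin N) → ℝ)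
    (hmin : ∀ᶠ ε in 𝓝 (0 : ℝ), pathExp r (fun ω => ∑ t ∈ s, φ (v t ω) / w t) ≤
      pathExp r (fun ω => ∑ t ∈ s, φ (v t ω + ε * d t ω) / w t)) :
    pathExp r (fun ω => ∑ t ∈ s, φ' (v t ω) * d t ω / w t) = 0 := by
  refine IsLocalMin.hasDerivAt_eq_zero ?_ (hasDerivAt_pathExp_sum hφ w hv d)
  filter_upwards [hmin] with ε hε
  simpa using hε

end Perturbation

def transfer (t₀ : ℕ) (c : ℝ) (t : ℕ) : ℝ :=
  if t = t₀ then c else if t = t₀ + 1 then -1 else 0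

lemma sum_transfer_mul (s : Finset ℕ) (t₀ : ℕ) (c : ℝ) (f : ℕ → ℝ) :
    ∑ t ∈ s, transfer t₀ c t * f t =
      (if t₀ ∈ s then c * f t₀ else 0) - (if t₀ + 1 ∈ s then f (t₀ + 1) else 0) := by
  have h : ∀ t, transfer t₀ c t * f t =
      (if t₀ = t then c * f t else 0) - (if t₀ + 1 = t then f t else 0) := fun t => by
    unfold transfer
    split_ifs <;> first | omega | ring
  simp only [h, sum_sub_distrib, sum_ite_eq]

lemma transfer_eq_zero_of_lt {t₀ t : ℕ} (c : ℝ) (h : t < t₀) : transfer t₀ c t = 0 := by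
  unfold transfer
  rw [if_neg (by omega), if_neg (by omega)]

lemma transfer_eq_zero_of_gt {t₀ t : ℕ} (c : ℝ) (h : t₀ + 1 < t) : transfer t₀ c t = 0 := by
  unfold transfer
  rw [if_neg (by omega), if_neg (by omega)]

theorem pathExp_euler_of_transfer {k N : ℕ} {r : Fin N → ℝ} {R c : ℝ} (hR : R ≠ 0)
    {t₀ T : ℕ} (h₁ : 1 ≤ t₀) (hT : t₀ + 1 ≤ T) (χ : (Fin k → Fin N) → ℝ)
    (g : ℕ → (Fin k → Fin N) → ℝ)
    (h : pathExp r (fun ω => ∑ t ∈ Icc 1 T, g t ω * (transfer t₀ c t * χ ω) / R ^ (t - 1)) = 0) :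
    pathExp r (fun ω => χ ω * g (t₀ + 1) ω) = R * c * pathExp r (fun ω => χ ω * g t₀ ω) := by
  have hpt : ∀ ω, ∑ t ∈ Icc 1 T, g t ω * (transfer t₀ c t * χ ω) / R ^ (t - 1) =
      (R ^ t₀)⁻¹ * (R * c * (χ ω * g t₀ ω) - χ ω * g (t₀ + 1) ω) := fun ω => by
    have hpow : R ^ t₀ = R ^ (t₀ - 1) * R := by rw [← pow_succ]; congr 1; omega
    simp only [mul_comm (g _ ω), mul_assoc, mul_div_assoc]
    rw [sum_transfer_mul, if_pos (by simp; omega), if_pos (by simp; omega), Nat.add_sub_cancel,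
      hpow]
    field_simp
  rw [pathExp_congr hpt, pathExp_const_mul, pathExp_sub, pathExp_const_mul] at h
  have := (mul_eq_zero.1 h).resolve_left (inv_ne_zero (pow_ne_zero _ hR))
  linarith

theorem pathExp_piecewise_euler_of_transfer {k N : ℕ} {r : Fin N → ℝ} (hr : ∀ n, 0 < r n)
    (hr₁ : ∑ n, r n = 1) {R c : ℝ} (hR : R ≠ 0) {t₀ T : ℕ} (h₁ : 1 ≤ t₀) (hT : t₀ + 1 ≤ T)
    (S : Set (Fin k)) [DecidablePred (· ∈ S)] (ω₀ : Fin k → Fin N)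
    (g : ℕ → (Fin k → Fin N) → ℝ)
    (h : pathExp r (fun ω => ∑ t ∈ Icc 1 T,
      g t ω * (transfer t₀ c t * cylinderIndicator S ω₀ ω) / R ^ (t - 1)) = 0) :
    pathExp r (fun ω => g (t₀ + 1) (S.piecewise ω₀ ω)) =
      R * c * pathExp r (fun ω => g t₀ (S.piecewise ω₀ ω)) := by
  have := pathExp_euler_of_transfer hR h₁ hT _ g h
  rw [pathExp_cylinderIndicator_mul hr₁, pathExp_cylinderIndicator_mul hr₁] at this
  exact mul_left_cancel₀ (pathExp_cylinderIndicator_pos hr S ω₀).ne' (by linear_combination this)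

section ProblemIV

variable {T N : ℕ}

lemma Epath_eq_pathExp (r : Fin N → ℝ) (f : (Fin (T - 2) → Fin N) → ℝ) :
    Epath T N r f = pathExp r f := rfl

lemma splice_zero (ω ω' : Fin (T - 2) → Fin N) : splice T N 0 ω ω' = ω' := by
  funext s
  simp [splice]

lemma splice_one (ω ω' : Fin (T - 2) → Fin N) : splice T N 1 ω ω' = ω' := by
  funext s
  simp [splice]

lemma discIV_eq_discCont (δ : Fin N → ℝ) (t : ℕ) (ω : Fin (T - 2) → Fin N) :
    discIV T N δ t ω = discCont T N δ 1 t ω :=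
  prod_congr rfl fun s _ => if_congr (by omega) rfl rfl

lemma discCont_eq_one (δ : Fin N → ℝ) {t τ : ℕ} (h : τ ≤ t + 1) (ω : Fin (T - 2) → Fin N) :
    discCont T N δ t τ ω = 1 :=
  prod_eq_one fun s _ => if_neg (by omega)

lemma discCont_succ (δ : Fin N → ℝ) {t t₀ : ℕ} (h : t < t₀) {s₀ : Fin (T - 2)}
    (hs₀ : (s₀ : ℕ) + 2 = t₀) (ω : Fin (T - 2) → Fin N) :
    discCont T N δ t (t₀ + 1) ω = discCont T N δ t t₀ ω * δ (ω s₀) := by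
  have : δ (ω s₀) = ∏ s, if s = s₀ then δ (ω s) else 1 := by simp
  rw [this, discCont, discCont, ← prod_mul_distrib]
  refine prod_congr rfl fun s _ => ?_
  by_cases hs : s = s₀
  · subst hs
    rw [if_pos (by omega), if_neg (by omega), if_pos rfl, one_mul]
  · have : (s : ℕ) ≠ s₀ := Fin.val_ne_of_ne hs
    rw [if_neg hs, mul_one]
    exact if_congr (by omega) rfl rfl

lemma dependsOn_discCont (δ : Fin N → ℝ) (t τ : ℕ) :
    DependsOn (discCont T N δ t τ) {s | (s : ℕ) + 2 < τ} := fun ω ω' h =>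
  prod_congr rfl fun s _ => by
    split_ifs with hs
    · rw [h s hs.2]
    · rfl

def PolicyIV.perturb (P d : PolicyIV T N) (ε : ℝ) : PolicyIV T N where
  v t ω := P.v t ω + ε * d.v t ω
  adapted t ht ω ω' h := by rw [P.adapted t ht ω ω' h, d.adapted t ht ω ω' h]

variable {δ p q : Fin N → ℝ}

lemma contA_perturb (P d : PolicyIV T N) (ε : ℝ) (t : ℕ) (α : Fin (T - 2) → Fin N) :
    contA T N δ q (P.perturb d ε).v t α = contA T N δ q P.v t α + ε * contA T N δ q d.v t α := by
  simp only [contA, Epath_eq_pathExp, ← pathExp_const_mul, ← pathExp_add, mul_sum,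
    ← sum_add_distrib]
  exact pathExp_congr fun ω => sum_congr rfl fun τ _ => by simp only [PolicyIV.perturb]; ring

lemma contA_eq_zero_of_forall_gt {d : ℕ → (Fin (T - 2) → Fin N) → ℝ} {t : ℕ}
    (hd : ∀ τ, t < τ → ∀ ω, d τ ω = 0) (α : Fin (T - 2) → Fin N) :
    contA T N δ q d t α = 0 := by
  rw [contA, Epath_eq_pathExp, pathExp_congr (g := fun _ => 0) fun ω =>
    sum_eq_zero fun τ hτ => by rw [hd τ (by simp at hτ; omega), mul_zero]]
  simp [pathExp]

lemma payoffIV_eq (δ₁ : ℝ) (P : PolicyIV T N) (α : Fin (T - 2) → Fin N) :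
    payoffIV T N δ q δ₁ P = pathExp q (P.v 1) + δ₁ * contA T N δ q P.v 1 α := by
  simp only [payoffIV, contA, Epath_eq_pathExp, splice_one, ← discIV_eq_discCont,
    ← pathExp_const_mul, ← pathExp_add]

lemma payoffIV_perturb (δ₁ : ℝ) (P d : PolicyIV T N) (ε : ℝ) :
    payoffIV T N δ q δ₁ (P.perturb d ε) = payoffIV T N δ q δ₁ P + ε * payoffIV T N δ q δ₁ d := by
  simp only [payoffIV, Epath_eq_pathExp, ← pathExp_const_mul, ← pathExp_add]
  refine pathExp_congr fun ω => ?_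
  simp only [PolicyIV.perturb, mul_add, sum_add_distrib, mul_sum]
  ring_nf

lemma costIV_eq (hT : 1 ≤ T) (φ : ℝ → ℝ) (R : ℝ) (P : PolicyIV T N) :
    costIV T N p φ R P = pathExp p (fun ω => ∑ t ∈ Icc 1 T, φ (P.v t ω) / R ^ (t - 1)) := by
  refine pathExp_congr fun ω => ?_
  rw [← insert_Icc_add_one_left_eq_Icc hT, sum_insert (by simp)]
  simp

variable (δ q) in
def IsReportInvariant (d : ℕ → (Fin (T - 2) → Fin N) → ℝ) : Prop :=
  ∀ t : ℕ, 2 ≤ t → t ≤ T - 1 → ∀ ω ω' : Fin (T - 2) → Fin N,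
    (∀ s : Fin (T - 2), (s : ℕ) + 2 < t → ω s = ω' s) →
      d t ω = d t ω' ∧ contA T N δ q d t ω = contA T N δ q d t ω'

lemma ICIV.perturb {P d : PolicyIV T N} (hP : ICIV T N δ q P)
    (hd : IsReportInvariant δ q d.v) (ε : ℝ) : ICIV T N δ q (P.perturb d ε) := by
  intro t h₂ hT ω ω' hag
  obtain ⟨hv, hc⟩ := hd t h₂ hT ω ω' hag
  have := hP t h₂ hT ω ω' hag
  rw [contA_perturb, contA_perturb]
  simp only [PolicyIV.perturb, hv, hc]
  linarith

variable {φ φ' : ℝ → ℝ} {R I : ℝ} {D : Set ℝ} {δ₁ : ℝ} {vE : PolicyIV T N}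

/-- If `Q` were cheaper, the saving would pay for a small rise in date-1 utility. -/
theorem costIV_le_of_payoffIV_eq (hT : 1 ≤ T) (hq₁ : ∑ n, q n = 1)
    (hφ : ∀ x ∈ interior D, HasDerivAt φ (φ' x) x) (hEcost : costIV T N p φ R vE ≤ I)
    (hEmax : ∀ Q : PolicyIV T N, FeasIVD T N δ p q φ R I D Q →
      payoffIV T N δ q δ₁ Q ≤ payoffIV T N δ q δ₁ vE)
    {Q : PolicyIV T N} (hQ : ∀ t ∈ Icc 1 T, ∀ ω, Q.v t ω ∈ interior D) (hQIC : ICIV T N δ q Q)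
    (hpay : payoffIV T N δ q δ₁ Q = payoffIV T N δ q δ₁ vE) :
    costIV T N p φ R vE ≤ costIV T N p φ R Q := by
  by_contra! hlt
  let e : PolicyIV T N := ⟨fun t _ => if t = 1 then 1 else 0, fun _ _ _ _ _ => rfl⟩
  have he_pay : payoffIV T N δ q δ₁ e = 1 := by
    simp [payoffIV, Epath_eq_pathExp, e, pathExp_const hq₁]
  have he_IC : IsReportInvariant δ q e.v := fun t h₂ _ ω ω' _ =>
    ⟨rfl, by rw [contA_eq_zero_of_forall_gt (fun τ hτ _ => if_neg (by omega)),
      contA_eq_zero_of_forall_gt (fun τ hτ _ => if_neg (by omega))]⟩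
  have hcost : ∀ᶠ η in 𝓝 (0 : ℝ), costIV T N p φ R (Q.perturb e η) < I := by
    have := (hasDerivAt_pathExp_sum (r := p) hφ (fun t => R ^ (t - 1)) hQ e.v).continuousAt
    have hQI : costIV T N p φ R Q < I := hlt.trans_le hEcost
    filter_upwards [this.eventually (gt_mem_nhds (by simpa [costIV_eq hT] using hQI))] with η hη
    rwa [costIV_eq hT]
  obtain ⟨η, hη, hηI, hηD⟩ := (hcost.and (eventually_add_mul_mem_interior hQ e.v)).exists_gt
  have := hEmax (Q.perturb e η)
    ⟨fun t ht ω => interior_subset (hηD t ht ω), hηI.le, hQIC.perturb he_IC η⟩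
  rw [payoffIV_perturb, he_pay, hpay] at this
  linarith

theorem pathExp_deriv_costIV_eq_zero (hT : 1 ≤ T) (hq₁ : ∑ n, q n = 1)
    (hφ : ∀ x ∈ interior D, HasDerivAt φ (φ' x) x) (hEfeas : FeasIVD T N δ p q φ R I D vE)
    (hEmax : ∀ Q : PolicyIV T N, FeasIVD T N δ p q φ R I D Q →
      payoffIV T N δ q δ₁ Q ≤ payoffIV T N δ q δ₁ vE)
    (hEint : ∀ t ∈ Icc 1 T, ∀ ω, vE.v t ω ∈ interior D) {d : PolicyIV T N}
    (hd : payoffIV T N δ q δ₁ d = 0) (hdIC : IsReportInvariant δ q d.v) :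
    pathExp p (fun ω => ∑ t ∈ Icc 1 T, φ' (vE.v t ω) * d.v t ω / R ^ (t - 1)) = 0 := by
  refine pathExp_sum_deriv_eq_zero hφ _ hEint d.v ?_
  filter_upwards [eventually_add_mul_mem_interior hEint d.v] with ε hε
  have := costIV_le_of_payoffIV_eq hT hq₁ hφ hEfeas.2.1 hEmax (Q := vE.perturb d ε) hε
    (hEfeas.2.2.perturb hdIC ε) (by rw [payoffIV_perturb, hd, mul_zero, add_zero])
  rwa [costIV_eq hT, costIV_eq hT] at this

/-- `c` utils at date `t₀` against one util at date `t₀ + 1`, on the paths whose draws up to date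
`t₀ - 1` are those of `ω₀`. -/
noncomputable def PolicyIV.transferDir (t₀ : ℕ) (c : ℝ) (ω₀ : Fin (T - 2) → Fin N) :
    PolicyIV T N where
  v t ω := transfer t₀ c t * cylinderIndicator {s | (s : ℕ) + 2 ≤ t₀ - 1} ω₀ ω
  adapted t _ ω ω' h := by
    rcases lt_or_ge t t₀ with ht | ht
    · simp [transfer_eq_zero_of_lt c ht]
    · rw [dependsOn_cylinderIndicator _ ω₀ fun s hs => h s (by simp at hs; omega)]

section TransferIV

variable (t₀ : ℕ) (c : ℝ) (ω₀ : Fin (T - 2) → Fin N)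

lemma contA_transferDir (t : ℕ) (α : Fin (T - 2) → Fin N) :
    contA T N δ q (PolicyIV.transferDir t₀ c ω₀).v t α =
      pathExp q (fun ω => cylinderIndicator {s | (s : ℕ) + 2 ≤ t₀ - 1} ω₀ (splice T N t α ω) *
        ((if t₀ ∈ Icc (t + 1) T then c * discCont T N δ t t₀ (splice T N t α ω) else 0) -
          (if t₀ + 1 ∈ Icc (t + 1) T then discCont T N δ t (t₀ + 1) (splice T N t α ω)
            else 0))) := by
  rw [contA, Epath_eq_pathExp]
  refine pathExp_congr fun ω => ?_
  rw [mul_comm, ← sum_transfer_mul _ t₀ c fun τ => discCont T N δ t τ (splice T N t α ω), sum_mul]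
  exact sum_congr rfl fun τ _ => by simp only [PolicyIV.transferDir]; ring

/-- Seen from before date `t₀` the transfer is worth `E_q[c - δ̃_{t₀}] = 0`, because the date-`t₀`
discount factor is independent of everything earlier. -/
lemma contA_transferDir_of_lt (hq₁ : ∑ n, q n = 1) {t : ℕ} (ht : t < t₀) (hT : t₀ + 1 ≤ T)
    (h₁ : 1 ≤ t) (α : Fin (T - 2) → Fin N) :
    contA T N δ q (PolicyIV.transferDir t₀ (∑ n, q n * δ n) ω₀).v t α = 0 := by
  set s₀ : Fin (T - 2) := ⟨t₀ - 2, by omega⟩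
  have hs₀ : (s₀ : ℕ) + 2 = t₀ := by simp [s₀]; omega
  set A : (Fin (T - 2) → Fin N) → ℝ := fun ω =>
    cylinderIndicator {s | (s : ℕ) + 2 ≤ t₀ - 1} ω₀ (splice T N t α ω) *
      discCont T N δ t t₀ (splice T N t α ω)
  have hS : {s : Fin (T - 2) | (s : ℕ) + 2 < t₀} ⊆ {s₀}ᶜ := fun s hs hs' => by
    have : (s₀ : ℕ) + 2 < t₀ := by simpa [Set.mem_singleton_iff.1 hs'] using hs
    omega
  have hA : DependsOn A {s₀}ᶜ :=
    ((((dependsOn_cylinderIndicator _ ω₀).mono fun s hs => by simp at hs ⊢; omega).mul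
      (dependsOn_discCont δ t t₀)).comp_piecewise {s | (s : ℕ) + 2 ≤ t} α).mono hS
  rw [contA_transferDir, pathExp_congr (g := fun ω => A ω * (∑ n, q n * δ n - δ (ω s₀)))
      fun ω => by
        rw [if_pos (by simp; omega), if_pos (by simp; omega), discCont_succ δ ht hs₀,
          show splice T N t α ω s₀ = ω s₀ from if_neg (by omega)]
        ring,
    pathExp_mul_of_dependsOn hq₁ hA (fun ω ω' h => by rw [h s₀ (by simp)]),
    pathExp_comp_eval hq₁ s₀ fun n => _ - δ n]
  simp [mul_sub, ← sum_mul, hq₁]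

lemma contA_transferDir_self (hq₁ : ∑ n, q n = 1) (hT : t₀ + 1 ≤ T) (α : Fin (T - 2) → Fin N) :
    contA T N δ q (PolicyIV.transferDir t₀ c ω₀).v t₀ α =
      -cylinderIndicator {s | (s : ℕ) + 2 ≤ t₀ - 1} ω₀ α := by
  rw [contA_transferDir, pathExp_congr (g := fun _ => -cylinderIndicator _ ω₀ α) fun ω => ?_,
    pathExp_const hq₁]
  have hχ : cylinderIndicator {s | (s : ℕ) + 2 ≤ t₀ - 1} ω₀ (splice T N t₀ α ω) =
      cylinderIndicator {s | (s : ℕ) + 2 ≤ t₀ - 1} ω₀ α :=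
    dependsOn_cylinderIndicator _ ω₀ fun s hs => if_pos (by simp at hs; omega)
  rw [if_neg (by simp), if_pos (by simp; omega), discCont_eq_one δ le_rfl, hχ]
  ring

lemma contA_transferDir_of_gt {t : ℕ} (ht : t₀ < t) (α : Fin (T - 2) → Fin N) :
    contA T N δ q (PolicyIV.transferDir t₀ c ω₀).v t α = 0 :=
  contA_eq_zero_of_forall_gt (fun τ hτ _ => by
    simp [PolicyIV.transferDir, transfer_eq_zero_of_gt c (show t₀ + 1 < τ by omega)]) α

lemma transferDir_v_eq {t : ℕ} {ω ω' : Fin (T - 2) → Fin N}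
    (h : ∀ s : Fin (T - 2), (s : ℕ) + 2 < t → ω s = ω' s) :
    (PolicyIV.transferDir t₀ c ω₀).v t ω = (PolicyIV.transferDir t₀ c ω₀).v t ω' := by
  rcases lt_or_ge t t₀ with ht | ht
  · simp [PolicyIV.transferDir, transfer_eq_zero_of_lt c ht]
  · simp only [PolicyIV.transferDir]
    rw [dependsOn_cylinderIndicator _ ω₀ fun s hs => h s (by simp at hs; omega)]

lemma isReportInvariant_transferDir (hq₁ : ∑ n, q n = 1) (hT : t₀ ≤ T - 1)
    (hc : t₀ = 1 ∨ c = ∑ n, q n * δ n) :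
    IsReportInvariant δ q (PolicyIV.transferDir t₀ c ω₀).v := by
  intro t h₂ htT ω ω' hag
  refine ⟨transferDir_v_eq t₀ c ω₀ hag, ?_⟩
  rcases lt_trichotomy t t₀ with ht | rfl | ht
  · obtain rfl := hc.resolve_left (by omega)
    rw [contA_transferDir_of_lt t₀ ω₀ hq₁ ht (by omega) (by omega),
      contA_transferDir_of_lt t₀ ω₀ hq₁ ht (by omega) (by omega)]
  · rw [contA_transferDir_self t c ω₀ hq₁ (by omega), contA_transferDir_self t c ω₀ hq₁ (by omega),
      dependsOn_cylinderIndicator _ ω₀ fun s hs => hag s (by simp at hs; omega)]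
  · rw [contA_transferDir_of_gt t₀ c ω₀ ht, contA_transferDir_of_gt t₀ c ω₀ ht]

lemma payoffIV_transferDir (hq₁ : ∑ n, q n = 1) (h₂ : 2 ≤ t₀) (hT : t₀ ≤ T - 1) (δ₁ : ℝ) :
    payoffIV T N δ q δ₁ (PolicyIV.transferDir t₀ (∑ n, q n * δ n) ω₀) = 0 := by
  rw [payoffIV_eq δ₁ _ ω₀, contA_transferDir_of_lt t₀ ω₀ hq₁ (by omega) (by omega) le_rfl]
  simp [PolicyIV.transferDir, transfer_eq_zero_of_lt _ (show 1 < t₀ by omega), pathExp]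

lemma payoffIV_transferDir_one (hq₁ : ∑ n, q n = 1) (hT : 2 ≤ T) (δ₁ : ℝ) :
    payoffIV T N δ q δ₁ (PolicyIV.transferDir 1 δ₁ ω₀) = 0 := by
  have hχ : ∀ ω, cylinderIndicator (∅ : Set (Fin (T - 2))) ω₀ ω = 1 :=
    fun ω => cylinderIndicator_of_forall fun s hs => absurd hs (Set.notMem_empty s)
  rw [payoffIV_eq δ₁ _ ω₀, contA_transferDir_self 1 δ₁ ω₀ hq₁ (by omega)]
  simp [PolicyIV.transferDir, transfer, hχ, pathExp_const hq₁]

end TransferIV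

theorem inverseEulerIV_of_transferDir (hp : ∀ n, 0 < p n) (hp₁ : ∑ n, p n = 1)
    (hq₁ : ∑ n, q n = 1) (hR : R ≠ 0) (hφ : ∀ x ∈ interior D, HasDerivAt φ (φ' x) x)
    (hEfeas : FeasIVD T N δ p q φ R I D vE)
    (hEmax : ∀ Q : PolicyIV T N, FeasIVD T N δ p q φ R I D Q →
      payoffIV T N δ q δ₁ Q ≤ payoffIV T N δ q δ₁ vE)
    (hEint : ∀ t ∈ Icc 1 T, ∀ ω, vE.v t ω ∈ interior D)
    {t₀ : ℕ} (h₁ : 1 ≤ t₀) (hT : t₀ ≤ T - 1) {c : ℝ} (ω₀ : Fin (T - 2) → Fin N)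
    (hpay : payoffIV T N δ q δ₁ (PolicyIV.transferDir t₀ c ω₀) = 0)
    (hIC : IsReportInvariant δ q (PolicyIV.transferDir t₀ c ω₀).v) :
    Epath T N p (fun ω => φ' (vE.v (t₀ + 1) (splice T N (t₀ - 1) ω₀ ω))) =
      R * c * Epath T N p (fun ω => φ' (vE.v t₀ (splice T N (t₀ - 1) ω₀ ω))) :=
  pathExp_piecewise_euler_of_transfer hp hp₁ hR h₁ (by omega)
    {s | (s : ℕ) + 2 ≤ t₀ - 1} ω₀ (fun t ω => φ' (vE.v t ω))
    (pathExp_deriv_costIV_eq_zero (by omega) hq₁ hφ hEfeas hEmax hEint hpay hIC)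

theorem inverseEulerIV (hp : ∀ n, 0 < p n) (hp₁ : ∑ n, p n = 1)
    (hq₁ : ∑ n, q n = 1) (hR : R ≠ 0) (hφ : ∀ x ∈ interior D, HasDerivAt φ (φ' x) x)
    (hEfeas : FeasIVD T N δ p q φ R I D vE)
    (hEmax : ∀ Q : PolicyIV T N, FeasIVD T N δ p q φ R I D Q →
      payoffIV T N δ q δ₁ Q ≤ payoffIV T N δ q δ₁ vE)
    (hEint : ∀ t ∈ Icc 1 T, ∀ ω, vE.v t ω ∈ interior D)
    {t : ℕ} (h₂ : 2 ≤ t) (hT : t ≤ T - 1) (ω₀ : Fin (T - 2) → Fin N) :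
    Epath T N p (fun ω => φ' (vE.v (t + 1) (splice T N (t - 1) ω₀ ω))) =
      R * (∑ n, q n * δ n) * Epath T N p (fun ω => φ' (vE.v t (splice T N (t - 1) ω₀ ω))) :=
  inverseEulerIV_of_transferDir hp hp₁ hq₁ hR hφ hEfeas hEmax hEint (by omega) hT ω₀
    (payoffIV_transferDir t ω₀ hq₁ h₂ hT δ₁)
    (isReportInvariant_transferDir t _ ω₀ hq₁ hT (.inr rfl))

theorem inverseEulerIV_one (hp : ∀ n, 0 < p n) (hp₁ : ∑ n, p n = 1)
    (hq₁ : ∑ n, q n = 1) (hR : R ≠ 0) (hφ : ∀ x ∈ interior D, HasDerivAt φ (φ' x) x)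
    (hEfeas : FeasIVD T N δ p q φ R I D vE)
    (hEmax : ∀ Q : PolicyIV T N, FeasIVD T N δ p q φ R I D Q →
      payoffIV T N δ q δ₁ Q ≤ payoffIV T N δ q δ₁ vE)
    (hEint : ∀ t ∈ Icc 1 T, ∀ ω, vE.v t ω ∈ interior D)
    (hT : 2 ≤ T) (ω₀ : Fin (T - 2) → Fin N) :
    Epath T N p (fun ω => φ' (vE.v 2 ω)) = R * δ₁ * φ' (vE.v 1 ω₀) := by
  have h := inverseEulerIV_of_transferDir hp hp₁ hq₁ hR hφ hEfeas hEmax hEint le_rfl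
    (by omega) ω₀ (payoffIV_transferDir_one ω₀ hq₁ (by omega) δ₁)
    (isReportInvariant_transferDir 1 δ₁ ω₀ hq₁ (by omega) (.inl rfl))
  have hv₁ : ∀ ω, vE.v 1 ω = vE.v 1 ω₀ :=
    fun ω => vE.adapted 1 (by omega) ω ω₀ fun s hs => by omega
  simp only [Nat.sub_self, splice_zero, hv₁] at h
  rw [h, Epath_eq_pathExp, pathExp_const hp₁]

end ProblemIV

section EfficientProblem

variable {T N : ℕ} {δ p : Fin N → ℝ}

lemma EpathB_eq_pathExp (r : Fin N → ℝ) (f : (Fin (T - 1) → Fin N) → ℝ) :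
    EpathB T N r f = pathExp r f := rfl

lemma discBpol_one (δ : Fin N → ℝ) (ω : Fin (T - 1) → Fin N) : discBpol T N δ 1 ω = 1 :=
  prod_eq_one fun s _ => if_neg (by omega)

lemma discBpol_succ (δ : Fin N → ℝ) {t₀ : ℕ} {s₀ : Fin (T - 1)} (hs₀ : (s₀ : ℕ) + 1 = t₀)
    (ω : Fin (T - 1) → Fin N) :
    discBpol T N δ (t₀ + 1) ω = discBpol T N δ t₀ ω * δ (ω s₀) := by
  have : δ (ω s₀) = ∏ s, if s = s₀ then δ (ω s) else 1 := by simp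
  rw [this, discBpol, discBpol, ← prod_mul_distrib]
  refine prod_congr rfl fun s _ => ?_
  by_cases hs : s = s₀
  · subst hs
    rw [if_pos (by omega), if_neg (by omega), if_pos rfl, one_mul]
  · have : (s : ℕ) ≠ s₀ := Fin.val_ne_of_ne hs
    rw [if_neg hs, mul_one]
    exact if_congr (by omega) rfl rfl

lemma dependsOn_discBpol (δ : Fin N → ℝ) (t : ℕ) :
    DependsOn (discBpol T N δ t) {s | (s : ℕ) + 1 < t} := fun ω ω' h =>
  prod_congr rfl fun s _ => by
    split_ifs with hs
    · rw [h s hs]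
    · rfl

def PolicyB.perturb (P d : PolicyB T N) (ε : ℝ) : PolicyB T N where
  v t ω := P.v t ω + ε * d.v t ω
  adapted t ht ω ω' h := by rw [P.adapted t ht ω ω' h, d.adapted t ht ω ω' h]

lemma objBpol_perturb (P d : PolicyB T N) (ε : ℝ) :
    objBpol T N δ p (P.perturb d ε) = objBpol T N δ p P + ε * objBpol T N δ p d := by
  simp only [objBpol, EpathB_eq_pathExp, ← pathExp_const_mul, ← pathExp_add]
  refine pathExp_congr fun ω => ?_
  simp only [PolicyB.perturb, mul_add, sum_add_distrib, mul_sum]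
  exact congrArg _ (sum_congr rfl fun _ _ => by ring)

variable {φ φ' : ℝ → ℝ} {R I : ℝ} {D : Set ℝ} {vB : PolicyB T N}

theorem costBpol_le_of_objBpol_eq (hT : 1 ≤ T) (hp₁ : ∑ n, p n = 1)
    (hφ : ∀ x ∈ interior D, HasDerivAt φ (φ' x) x) (hBcost : costBpol T N p φ R vB ≤ I)
    (hBmax : ∀ Q : PolicyB T N, FeasBD T N p φ R I D Q →
      objBpol T N δ p Q ≤ objBpol T N δ p vB)
    {Q : PolicyB T N} (hQ : ∀ t ∈ Icc 1 T, ∀ ω, Q.v t ω ∈ interior D)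
    (hobj : objBpol T N δ p Q = objBpol T N δ p vB) :
    costBpol T N p φ R vB ≤ costBpol T N p φ R Q := by
  by_contra! hlt
  let e : PolicyB T N := ⟨fun t _ => if t = 1 then 1 else 0, fun _ _ _ _ _ => rfl⟩
  have he_obj : objBpol T N δ p e = 1 := by
    simp [objBpol, EpathB_eq_pathExp, e, hT, discBpol_one, pathExp_const hp₁]
  have hcost : ∀ᶠ η in 𝓝 (0 : ℝ), costBpol T N p φ R (Q.perturb e η) < I := by
    have := (hasDerivAt_pathExp_sum (r := p) hφ (fun t => R ^ (t - 1)) hQ e.v).continuousAt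
    have hQI : costBpol T N p φ R Q < I := hlt.trans_le hBcost
    exact this.eventually (gt_mem_nhds (by simpa [costBpol, EpathB_eq_pathExp] using hQI))
  obtain ⟨η, hη, hηI, hηD⟩ := (hcost.and (eventually_add_mul_mem_interior hQ e.v)).exists_gt
  have := hBmax (Q.perturb e η) ⟨fun t ht ω => interior_subset (hηD t ht ω), hηI.le⟩
  rw [objBpol_perturb, he_obj, hobj] at this
  linarith

theorem pathExp_deriv_costBpol_eq_zero (hT : 1 ≤ T) (hp₁ : ∑ n, p n = 1)
    (hφ : ∀ x ∈ interior D, HasDerivAt φ (φ' x) x) (hBfeas : FeasBD T N p φ R I D vB)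
    (hBmax : ∀ Q : PolicyB T N, FeasBD T N p φ R I D Q →
      objBpol T N δ p Q ≤ objBpol T N δ p vB)
    (hBint : ∀ t ∈ Icc 1 T, ∀ ω, vB.v t ω ∈ interior D) {d : PolicyB T N}
    (hd : objBpol T N δ p d = 0) :
    pathExp p (fun ω => ∑ t ∈ Icc 1 T, φ' (vB.v t ω) * d.v t ω / R ^ (t - 1)) = 0 := by
  refine pathExp_sum_deriv_eq_zero hφ _ hBint d.v ?_
  filter_upwards [eventually_add_mul_mem_interior hBint d.v] with ε hε
  exact costBpol_le_of_objBpol_eq hT hp₁ hφ hBfeas.2 hBmax (Q := vB.perturb d ε) hε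
    (by rw [objBpol_perturb, hd, mul_zero, add_zero])

/-- `c` utils at date `t₀` against one util at date `t₀ + 1`, on the paths whose draws before
date `m` are those of `ω₀`. -/
noncomputable def PolicyB.transferDir (t₀ : ℕ) (c : ℝ) {m : ℕ} (hm : m ≤ t₀ + 1)
    (ω₀ : Fin (T - 1) → Fin N) : PolicyB T N where
  v t ω := transfer t₀ c t * cylinderIndicator {s | (s : ℕ) + 1 < m} ω₀ ω
  adapted t _ ω ω' h := by
    rcases lt_or_ge t t₀ with ht | ht
    · simp [transfer_eq_zero_of_lt c ht]
    · rw [dependsOn_cylinderIndicator _ ω₀ fun s hs => h s (by simp at hs; omega)]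

lemma objBpol_transferDir {t₀ : ℕ} (c : ℝ) {m : ℕ} (hm : m ≤ t₀ + 1) (ω₀ : Fin (T - 1) → Fin N)
    {s₀ : Fin (T - 1)} (hs₀ : (s₀ : ℕ) + 1 = t₀) :
    objBpol T N δ p (PolicyB.transferDir t₀ c hm ω₀) = pathExp p (fun ω =>
      cylinderIndicator {s | (s : ℕ) + 1 < m} ω₀ ω * discBpol T N δ t₀ ω * (c - δ (ω s₀))) := by
  refine pathExp_congr fun ω => ?_
  have := sum_transfer_mul (Icc 1 T) t₀ c fun t => discBpol T N δ t ω
  rw [if_pos (by simp; omega), if_pos (by simp; omega), discBpol_succ δ hs₀] at this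
  simp only [PolicyB.transferDir, ← mul_assoc, mul_comm _ (transfer _ _ _), ← sum_mul, this]
  ring

lemma objBpol_transferDir_eq_zero (hp₁ : ∑ n, p n = 1) {t₀ : ℕ} (h₂ : 2 ≤ t₀) (hT : t₀ ≤ T - 1)
    (ω₀ : Fin (T - 1) → Fin N) :
    objBpol T N δ p (PolicyB.transferDir t₀ (∑ n, p n * δ n) t₀.le_succ ω₀) = 0 := by
  set s₀ : Fin (T - 1) := ⟨t₀ - 1, by omega⟩
  have hs₀ : (s₀ : ℕ) + 1 = t₀ := by simp [s₀]; omega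
  have hA : DependsOn (fun ω => cylinderIndicator {s | (s : ℕ) + 1 < t₀} ω₀ ω *
      discBpol T N δ t₀ ω) {s₀}ᶜ := by
    have hS : {s : Fin (T - 1) | (s : ℕ) + 1 < t₀} ⊆ {s₀}ᶜ := fun s hs hs' => by
      have : (s₀ : ℕ) + 1 < t₀ := by simpa [Set.mem_singleton_iff.1 hs'] using hs
      omega
    exact ((dependsOn_cylinderIndicator _ ω₀).mul (dependsOn_discBpol δ t₀)).mono hS
  rw [objBpol_transferDir _ _ ω₀ hs₀, pathExp_mul_of_dependsOn hp₁ hA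
      (fun ω ω' h => by rw [h s₀ (by simp)]), pathExp_comp_eval hp₁ s₀ fun n => _ - δ n]
  simp [mul_sub, ← sum_mul, hp₁]

lemma objBpol_transferDir_one {n₁ : Fin N} (hT : 2 ≤ T) {ω₀ : Fin (T - 1) → Fin N}
    (hω₀ : ∀ s : Fin (T - 1), (s : ℕ) = 0 → ω₀ s = n₁) :
    objBpol T N δ p (PolicyB.transferDir 1 (δ n₁) (le_refl 2) ω₀) = 0 := by
  set s₀ : Fin (T - 1) := ⟨0, by omega⟩
  rw [objBpol_transferDir _ _ ω₀ (s₀ := s₀) rfl, pathExp_congr (g := fun _ => 0) fun ω => ?_]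
  · simp [pathExp]
  by_cases hω : ∀ s ∈ {s : Fin (T - 1) | (s : ℕ) + 1 < 2}, ω s = ω₀ s
  · rw [hω s₀ (by simp [s₀]), hω₀ s₀ rfl, sub_self, mul_zero]
  · rw [cylinderIndicator_of_not_forall hω, zero_mul, zero_mul]

theorem inverseEulerB_of_transferDir (hp : ∀ n, 0 < p n) (hp₁ : ∑ n, p n = 1) (hR : R ≠ 0)
    (hφ : ∀ x ∈ interior D, HasDerivAt φ (φ' x) x) (hBfeas : FeasBD T N p φ R I D vB)
    (hBmax : ∀ Q : PolicyB T N, FeasBD T N p φ R I D Q →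
      objBpol T N δ p Q ≤ objBpol T N δ p vB)
    (hBint : ∀ t ∈ Icc 1 T, ∀ ω, vB.v t ω ∈ interior D)
    {t₀ : ℕ} (h₁ : 1 ≤ t₀) (hT : t₀ ≤ T - 1) {c : ℝ} {m : ℕ} (hm : m ≤ t₀ + 1)
    (ω₀ : Fin (T - 1) → Fin N) (hobj : objBpol T N δ p (PolicyB.transferDir t₀ c hm ω₀) = 0) :
    EpathB T N p (fun ω => φ' (vB.v (t₀ + 1) (spliceB T N m ω₀ ω))) =
      R * c * EpathB T N p (fun ω => φ' (vB.v t₀ (spliceB T N m ω₀ ω))) :=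
  pathExp_piecewise_euler_of_transfer hp hp₁ hR h₁ (by omega)
    {s | (s : ℕ) + 1 < m} ω₀ (fun t ω => φ' (vB.v t ω))
    (pathExp_deriv_costBpol_eq_zero (by omega) hp₁ hφ hBfeas hBmax hBint hobj)

theorem inverseEulerB (hp : ∀ n, 0 < p n) (hp₁ : ∑ n, p n = 1) (hR : R ≠ 0)
    (hφ : ∀ x ∈ interior D, HasDerivAt φ (φ' x) x) (hBfeas : FeasBD T N p φ R I D vB)
    (hBmax : ∀ Q : PolicyB T N, FeasBD T N p φ R I D Q →
      objBpol T N δ p Q ≤ objBpol T N δ p vB)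
    (hBint : ∀ t ∈ Icc 1 T, ∀ ω, vB.v t ω ∈ interior D)
    {t : ℕ} (h₂ : 2 ≤ t) (hT : t ≤ T - 1) (ω₀ : Fin (T - 1) → Fin N) :
    EpathB T N p (fun ω => φ' (vB.v (t + 1) (spliceB T N t ω₀ ω))) =
      R * (∑ n, p n * δ n) * EpathB T N p (fun ω => φ' (vB.v t (spliceB T N t ω₀ ω))) :=
  inverseEulerB_of_transferDir hp hp₁ hR hφ hBfeas hBmax hBint (by omega) hT t.le_succ ω₀
    (objBpol_transferDir_eq_zero hp₁ h₂ hT ω₀)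

theorem inverseEulerB_one (hp : ∀ n, 0 < p n) (hp₁ : ∑ n, p n = 1) (hR : R ≠ 0)
    (hφ : ∀ x ∈ interior D, HasDerivAt φ (φ' x) x) (hBfeas : FeasBD T N p φ R I D vB)
    (hBmax : ∀ Q : PolicyB T N, FeasBD T N p φ R I D Q →
      objBpol T N δ p Q ≤ objBpol T N δ p vB)
    (hBint : ∀ t ∈ Icc 1 T, ∀ ω, vB.v t ω ∈ interior D)
    (hT : 2 ≤ T) {n₁ : Fin N} {ω₀ : Fin (T - 1) → Fin N}
    (hω₀ : ∀ s : Fin (T - 1), (s : ℕ) = 0 → ω₀ s = n₁) :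
    EpathB T N p (fun ω => φ' (vB.v 2 (spliceB T N 2 ω₀ ω))) = R * δ n₁ * φ' (vB.v 1 ω₀) := by
  rw [inverseEulerB_of_transferDir hp hp₁ hR hφ hBfeas hBmax hBint le_rfl (by omega)
    (le_refl 2) ω₀ (objBpol_transferDir_one hT hω₀), EpathB_eq_pathExp]
  have hv₁ : ∀ ω, vB.v 1 (spliceB T N 2 ω₀ ω) = vB.v 1 ω₀ :=
    fun ω => vB.adapted 1 (by omega) _ ω₀ fun s hs => if_pos (by omega)
  simp only [hv₁, pathExp_const hp₁]

end EfficientProblem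

theorem stmt13_general
    (T N : ℕ) (hT : 3 ≤ T)
    (R I : ℝ) (hR : 1 ≤ R)
    (D : Set ℝ)
    (φ φ' : ℝ → ℝ)
    (hφder : ∀ x ∈ interior D, HasDerivAt φ (φ' x) x)
    (δ : Fin N → ℝ)
    (p q : Fin N → ℝ) (hp : ∀ n, 0 < p n)
    (hp1 : ∑ n, p n = 1) (hq1 : ∑ n, q n = 1)
    (n1 : Fin N)
    -- vE is an interior maximizer of Problem IV for initial type δ n1
    (vE : PolicyIV T N)
    (hEfeas : FeasIVD T N δ p q φ R I D vE)
    (hEmax : ∀ Q : PolicyIV T N, FeasIVD T N δ p q φ R I D Q →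
      payoffIV T N δ q (δ n1) Q ≤ payoffIV T N δ q (δ n1) vE)
    (hEint : ∀ t ∈ Finset.Icc 1 T, ∀ ω, vE.v t ω ∈ interior D)
    -- vB is an interior maximizer of the efficient problem
    (vB : PolicyB T N)
    (hBfeas : FeasBD T N p φ R I D vB)
    (hBmax : ∀ Q : PolicyB T N, FeasBD T N p φ R I D Q →
      objBpol T N δ p Q ≤ objBpol T N δ p vB)
    (hBint : ∀ t ∈ Finset.Icc 1 T, ∀ ω, vB.v t ω ∈ interior D) :
    -- inverse Euler equation for the equilibrium policy
    (∀ t : ℕ, 2 ≤ t → t ≤ T - 1 → ∀ ω : Fin (T - 2) → Fin N,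
      Epath T N p (fun ω' => φ' (vE.v (t + 1) (splice T N (t - 1) ω ω'))) =
        R * (∑ n, q n * δ n) *
          Epath T N p (fun ω' => φ' (vE.v t (splice T N (t - 1) ω ω')))) ∧
    -- inverse Euler equation for the efficient policy (initial type δ n1)
    (∀ t : ℕ, 2 ≤ t → t ≤ T - 1 → ∀ ω : Fin (T - 1) → Fin N,
      (∀ s : Fin (T - 1), (s : ℕ) = 0 → ω s = n1) →
      EpathB T N p (fun ω' => φ' (vB.v (t + 1) (spliceB T N t ω ω'))) =
        R * (∑ n, p n * δ n) *
          EpathB T N p (fun ω' => φ' (vB.v t (spliceB T N t ω ω')))) ∧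
    -- date-1 condition for the equilibrium policy
    (∀ ω : Fin (T - 2) → Fin N,
      Epath T N p (fun ω' => φ' (vE.v 2 ω')) = R * δ n1 * φ' (vE.v 1 ω)) ∧
    -- date-1 condition for the efficient policy
    (∀ ω : Fin (T - 1) → Fin N, (∀ s : Fin (T - 1), (s : ℕ) = 0 → ω s = n1) →
      EpathB T N p (fun ω' => φ' (vB.v 2 (spliceB T N 2 ω ω'))) =
        R * δ n1 * φ' (vB.v 1 ω)) := by
  have hR₀ : R ≠ 0 := by positivity
  refine ⟨fun t h₂ ht ω => ?_, fun t h₂ ht ω _ => ?_, fun ω => ?_, fun ω hω => ?_⟩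
  · exact inverseEulerIV hp hp1 hq1 hR₀ hφder hEfeas hEmax hEint h₂ ht ω
  · exact inverseEulerB hp hp1 hR₀ hφder hBfeas hBmax hBint h₂ ht ω
  · exact inverseEulerIV_one hp hp1 hq1 hR₀ hφder hEfeas hEmax hEint (by omega) ω
  · exact inverseEulerB_one hp hp1 hR₀ hφder hBfeas hBmax hBint (by omega) hω

/-- Proposition (inverse Euler equations).  Let `vE` be a maximizer of
Problem IV (for fixed initial type `δ^(n1)`) and `vB` a maximizer of the efficient
problem, both interior.  Then for every `t ∈ {2,…,T-1}` and every history: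
`E_F[φ'(v^E_{t+1})] = R (Σ q δ) E_F[φ'(v^E_t)]` and
`E_F[φ'(v^B_{t+1}(δ₁,H,·))] = R (Σ p δ) E_F[φ'(v^B_t(δ₁,H,·))]`, together with the
date-1 versions `E_F[φ'(v^E_2)] = R δ₁ φ'(v^E_1)` and
`E_F[φ'(v^B_2(δ₁,·))] = R δ₁ φ'(v^B_1(δ₁))`. -/
theorem stmt13
    (T N : ℕ) (hT : 3 ≤ T) (hN : 2 ≤ N)
    (R I : ℝ) (hR : 1 ≤ R) (hI : 0 < I)
    (D : Set ℝ) (hD : D.OrdConnected)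
    (φ φ' : ℝ → ℝ)
    (hφm : StrictMonoOn φ D)
    (hφconv : StrictConvexOn ℝ D φ)
    (hφder : ∀ x ∈ interior D, HasDerivAt φ (φ' x) x)
    (δ : Fin N → ℝ) (hδpos : ∀ n, 0 < δ n) (hδmono : StrictMono δ)
    (p q : Fin N → ℝ) (hp : ∀ n, 0 < p n) (hq : ∀ n, 0 < q n)
    (hp1 : ∑ n, p n = 1) (hq1 : ∑ n, q n = 1)
    (hFOSD : ∀ k : ℕ,
      ∑ n ∈ Finset.univ.filter (fun n : Fin N => (n : ℕ) < k), q n ≤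
        ∑ n ∈ Finset.univ.filter (fun n : Fin N => (n : ℕ) < k), p n)
    (n1 : Fin N)
    -- vE is an interior maximizer of Problem IV for initial type δ n1
    (vE : PolicyIV T N)
    (hEfeas : FeasIVD T N δ p q φ R I D vE)
    (hEmax : ∀ Q : PolicyIV T N, FeasIVD T N δ p q φ R I D Q →
      payoffIV T N δ q (δ n1) Q ≤ payoffIV T N δ q (δ n1) vE)
    (hEint : ∀ t ∈ Finset.Icc 1 T, ∀ ω, vE.v t ω ∈ interior D)
    -- vB is an interior maximizer of the efficient problem
    (vB : PolicyB T N)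
    (hBfeas : FeasBD T N p φ R I D vB)
    (hBmax : ∀ Q : PolicyB T N, FeasBD T N p φ R I D Q →
      objBpol T N δ p Q ≤ objBpol T N δ p vB)
    (hBint : ∀ t ∈ Finset.Icc 1 T, ∀ ω, vB.v t ω ∈ interior D) :
    -- inverse Euler equation for the equilibrium policy
    (∀ t : ℕ, 2 ≤ t → t ≤ T - 1 → ∀ ω : Fin (T - 2) → Fin N,
      Epath T N p (fun ω' => φ' (vE.v (t + 1) (splice T N (t - 1) ω ω'))) =
        R * (∑ n, q n * δ n) *
          Epath T N p (fun ω' => φ' (vE.v t (splice T N (t - 1) ω ω')))) ∧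
    -- inverse Euler equation for the efficient policy (initial type δ n1)
    (∀ t : ℕ, 2 ≤ t → t ≤ T - 1 → ∀ ω : Fin (T - 1) → Fin N,
      (∀ s : Fin (T - 1), (s : ℕ) = 0 → ω s = n1) →
      EpathB T N p (fun ω' => φ' (vB.v (t + 1) (spliceB T N t ω ω'))) =
        R * (∑ n, p n * δ n) *
          EpathB T N p (fun ω' => φ' (vB.v t (spliceB T N t ω ω')))) ∧
    -- date-1 condition for the equilibrium policy
    (∀ ω : Fin (T - 2) → Fin N,
      Epath T N p (fun ω' => φ' (vE.v 2 ω')) = R * δ n1 * φ' (vE.v 1 ω)) ∧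
    -- date-1 condition for the efficient policy
    (∀ ω : Fin (T - 1) → Fin N, (∀ s : Fin (T - 1), (s : ℕ) = 0 → ω s = n1) →
      EpathB T N p (fun ω' => φ' (vB.v 2 (spliceB T N 2 ω ω'))) =
        R * δ n1 * φ' (vB.v 1 ω)) :=
  stmt13_general T N hT R I hR D φ φ' hφder δ p q hp hp1 hq1 n1 vE hEfeas hEmax hEint vB hBfeas
    hBmax hBint
end

section
/- Corollary (Logarithmic utility: equilibrium consumption grows faster). Let u(c) = ln c, so φ(v) = e^v, D = ℝ, and consumption is c_t = exp(v_t). Let v^E be a maximizer of Problem IV (for fixed initial type δ₁) and v^B a maximizer of the efficient problem, and define equilibrium consumption c^E_t := exp(v^E_t) and efficient consumption c^B_t := exp(v^B_t). Then for every t ∈ {1,…,T−1}, the growth ratio E_F[c^E_{t+1}(δ̃₂,…,δ̃_{t+1})] / E_F[c^E_t(δ̃₂,…,δ̃_t)] is greater than or equal to E_F[c^B_{t+1}(δ₁,δ̃₂,…,δ̃_{t+1})] / E_F[c^B_t(δ₁,δ̃₂,…,δ̃_t)]; the two ratios are equal for all t if p = q; and for t ≥ 2 the inequality is strict if p ≠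 q (the agent is strictly more optimistic). -/
/-!
Adding a constant `a t` to every date-`t` utility (in the efficient problem: only on paths
whose first draw is `n1`) keeps every incentive constraint, raises the objective by
`∑ b t * a t` for explicit weights `b`, and, since `φ = exp`, multiplies the date-`t` expected
cost by `exp (a t)`. Optimality against these perturbations is a Lagrange condition: the
discounted expected consumption `c t / R ^ (t - 1)` is proportional to `b t`. Hence
consumption grows by `R * b (t + 1) / b t`, which is `R δ₁` from date 1 to 2 in both problems
and afterwards `R E_A[δ̃]` in equilibrium against `R E_F[δ̃]` efficiently. Finally, since `q`
dominates `p` in the first order and `δ` is strictly increasing, `E_F[δ̃] ≤ E_A[δ̃]` (Abel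
summation), with strict inequality unless `p = q`.
-/

open Finset

section StochasticDominance

lemma sum_range_mul_eq_neg_sum_sub_mul_partial_sum (e d : ℕ → ℝ) (N : ℕ)
    (hd : ∑ i ∈ range N, d i = 0) :
    ∑ i ∈ range N, e i * d i =
      -∑ i ∈ range (N - 1), (e (i + 1) - e i) * ∑ j ∈ range (i + 1), d j := by
  simpa [hd] using sum_range_by_parts e d N

lemma sum_range_mul_nonneg_of_partial_sum_nonpos {e d : ℕ → ℝ} {N : ℕ}
    (he : ∀ i, i + 1 < N → e i ≤ e (i + 1)) (hd : ∑ i ∈ range N, d i = 0)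
    (hD : ∀ k ≤ N, ∑ i ∈ range k, d i ≤ 0) :
    0 ≤ ∑ i ∈ range N, e i * d i := by
  rw [sum_range_mul_eq_neg_sum_sub_mul_partial_sum e d N hd, neg_nonneg]
  refine sum_nonpos fun i hi => mul_nonpos_of_nonneg_of_nonpos ?_ (hD _ ?_)
  · have := mem_range.1 hi
    linarith [he i (by omega)]
  · have := mem_range.1 hi
    omega

lemma sum_range_mul_pos_of_partial_sum_nonpos {e d : ℕ → ℝ} {N : ℕ}
    (he : ∀ i, i + 1 < N → e i < e (i + 1)) (hd : ∑ i ∈ range N, d i = 0)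
    (hD : ∀ k ≤ N, ∑ i ∈ range k, d i ≤ 0) (hne : ∃ i < N, d i ≠ 0) :
    0 < ∑ i ∈ range N, e i * d i := by
  rw [sum_range_mul_eq_neg_sum_sub_mul_partial_sum e d N hd, neg_pos]
  have hterm : ∀ i ∈ range (N - 1), (e (i + 1) - e i) * ∑ j ∈ range (i + 1), d j ≤ 0 := by
    intro i hi
    have := mem_range.1 hi
    exact mul_nonpos_of_nonneg_of_nonpos (by linarith [he i (by omega)]) (hD _ (by omega))
  -- if every partial sum vanished, so would every `d i`
  obtain ⟨k, hk, hDk⟩ : ∃ k < N - 1, ∑ j ∈ range (k + 1), d j ≠ 0 := by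
    by_contra! hzero
    have hD0 : ∀ k ≤ N, ∑ j ∈ range k, d j = 0 := by
      rintro (_ | k) hk
      · simp
      · rcases Nat.lt_or_ge (k + 1) N with hlt | hge
        · exact hzero k (by omega)
        · rwa [le_antisymm hk hge]
    obtain ⟨i, hi, hdi⟩ := hne
    have := sum_range_succ d i
    rw [hD0 _ hi, hD0 _ hi.le] at this
    exact hdi (by linarith)
  refine sum_neg' hterm ⟨k, mem_range.2 hk, mul_neg_of_pos_of_neg ?_ ?_⟩
  · linarith [he k (by omega)]
  · exact lt_of_le_of_ne (hD _ (by omega)) hDk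

variable {N : ℕ}

def extendByZero (f : Fin N → ℝ) (i : ℕ) : ℝ :=
  if h : i < N then f ⟨i, h⟩ else 0

lemma sum_filter_lt_eq_sum_range_extendByZero (f : Fin N → ℝ) {k : ℕ} (hk : k ≤ N) :
    ∑ n ∈ univ.filter (fun n : Fin N => (n : ℕ) < k), f n =
      ∑ i ∈ range k, extendByZero f i := by
  rw [sum_filter, sum_fin_eq_sum_range, ← sum_range_add_sum_Ico _ hk,
    sum_eq_zero (s := Ico k N) fun i hi => by simp at hi; simp; omega, add_zero]
  refine sum_congr rfl fun i hi => ?_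
  have : i < k := mem_range.1 hi
  simp [extendByZero, this, show i < N by omega]

lemma sum_mul_sub_sum_mul_eq_sum_range (δ p q : Fin N → ℝ) :
    ∑ n, q n * δ n - ∑ n, p n * δ n =
      ∑ i ∈ range N, extendByZero δ i * extendByZero (q - p) i := by
  rw [← sum_sub_distrib, sum_fin_eq_sum_range]
  refine sum_congr rfl fun i _ => ?_
  by_cases h : i < N <;> simp [extendByZero, h]
  ring

variable {δ p q : Fin N → ℝ}

lemma sum_range_extendByZero_sub_nonpos
    (hcdf : ∀ k : ℕ, ∑ n ∈ univ.filter (fun n : Fin N => (n : ℕ) < k), q n ≤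
      ∑ n ∈ univ.filter (fun n : Fin N => (n : ℕ) < k), p n) {k : ℕ} (hk : k ≤ N) :
    ∑ i ∈ range k, extendByZero (q - p) i ≤ 0 := by
  rw [← sum_filter_lt_eq_sum_range_extendByZero _ hk]
  simpa [sum_sub_distrib] using hcdf k

lemma sum_range_extendByZero_sub_eq_zero (hpq : ∑ n, p n = ∑ n, q n) :
    ∑ i ∈ range N, extendByZero (q - p) i = 0 := by
  have := sum_filter_lt_eq_sum_range_extendByZero (q - p) le_rfl
  simp_all [sum_sub_distrib]

theorem sum_mul_le_sum_mul_of_forall_sum_filter_lt_le (hδ : Monotone δ)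
    (hpq : ∑ n, p n = ∑ n, q n)
    (hcdf : ∀ k : ℕ, ∑ n ∈ univ.filter (fun n : Fin N => (n : ℕ) < k), q n ≤
      ∑ n ∈ univ.filter (fun n : Fin N => (n : ℕ) < k), p n) :
    ∑ n, p n * δ n ≤ ∑ n, q n * δ n := by
  rw [← sub_nonneg, sum_mul_sub_sum_mul_eq_sum_range]
  refine sum_range_mul_nonneg_of_partial_sum_nonpos (fun i hi => ?_)
    (sum_range_extendByZero_sub_eq_zero hpq) fun k => sum_range_extendByZero_sub_nonpos hcdf
  simp only [extendByZero, dif_pos hi, dif_pos (show i < N by omega)]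
  exact hδ (Fin.mk_le_mk.2 (Nat.le_succ i))

theorem sum_mul_lt_sum_mul_of_forall_sum_filter_lt_le (hδ : StrictMono δ)
    (hpq : ∑ n, p n = ∑ n, q n)
    (hcdf : ∀ k : ℕ, ∑ n ∈ univ.filter (fun n : Fin N => (n : ℕ) < k), q n ≤
      ∑ n ∈ univ.filter (fun n : Fin N => (n : ℕ) < k), p n) (hne : p ≠ q) :
    ∑ n, p n * δ n < ∑ n, q n * δ n := by
  rw [← sub_pos, sum_mul_sub_sum_mul_eq_sum_range]
  refine sum_range_mul_pos_of_partial_sum_nonpos (fun i hi => ?_)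
    (sum_range_extendByZero_sub_eq_zero hpq) (fun k => sum_range_extendByZero_sub_nonpos hcdf) ?_
  · simp only [extendByZero, dif_pos hi, dif_pos (show i < N by omega)]
    exact hδ (Fin.mk_lt_mk.2 (Nat.lt_succ_self i))
  · obtain ⟨n, hn⟩ := Function.ne_iff.1 hne
    refine ⟨n, n.isLt, ?_⟩
    simpa [extendByZero, sub_eq_zero] using hn.symm

end StochasticDominance

lemma prod_update_mul_apply {ι α : Type*} [Fintype ι] [DecidableEq ι] (r : α → ℝ)
    (ω : ι → α) (i : ι) (a : α) :
    (∏ s, r (Function.update ω i a s)) * r (ω i) = (∏ s, r (ω s)) * r a := by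
  rw [← Function.comp_def r, Function.comp_update, prod_update_of_mem (mem_univ i),
    ← mul_prod_erase univ (fun s => r (ω s)) (mem_univ i), sdiff_singleton_eq_erase]
  simp only [Function.comp_apply]
  ring

section IidExpectation

variable {ι α : Type*} [Fintype ι] [DecidableEq ι] [Fintype α]

noncomputable def iidExp (r : α → ℝ) (f : (ι → α) → ℝ) : ℝ :=
  ∑ ω : ι → α, (∏ s, r (ω s)) * f ω

variable (r : α → ℝ)

lemma iidExp_add (f g : (ι → α) → ℝ) :
    iidExp r (fun ω => f ω + g ω) = iidExp r f + iidExp r g := by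
  simp only [iidExp, mul_add, sum_add_distrib]

lemma iidExp_const_mul (c : ℝ) (f : (ι → α) → ℝ) :
    iidExp r (fun ω => c * f ω) = c * iidExp r f := by
  simp only [iidExp, mul_sum]
  exact sum_congr rfl fun _ _ => by ring

lemma iidExp_div_const (f : (ι → α) → ℝ) (c : ℝ) :
    iidExp r (fun ω => f ω / c) = iidExp r f / c := by
  simpa [div_eq_inv_mul] using iidExp_const_mul r c⁻¹ f

lemma iidExp_sum {κ : Type*} (s : Finset κ) (f : κ → (ι → α) → ℝ) :
    iidExp r (fun ω => ∑ t ∈ s, f t ω) = ∑ t ∈ s, iidExp r (f t) := by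
  simp only [iidExp, mul_sum]
  exact sum_comm

lemma iidExp_prod (g : ι → α → ℝ) :
    iidExp r (fun ω => ∏ s, g s (ω s)) = ∏ s, ∑ a, r a * g s a := by
  rw [Fintype.prod_sum]
  exact sum_congr rfl fun ω _ => prod_mul_distrib.symm

lemma iidExp_const (hr : ∑ a, r a = 1) (c : ℝ) : iidExp (ι := ι) r (fun _ => c) = c := by
  have h1 : iidExp (ι := ι) r (fun _ => 1) = 1 := by
    simpa [hr] using iidExp_prod (ι := ι) r (fun _ _ => 1)
  simpa [h1] using iidExp_const_mul r c (fun _ : ι → α => 1)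

lemma iidExp_pos [Nonempty α] {r : α → ℝ} (hr : ∀ a, 0 < r a) {f : (ι → α) → ℝ}
    (hf : ∀ ω, 0 < f ω) : 0 < iidExp r f :=
  sum_pos (fun ω _ => mul_pos (prod_pos fun _ _ => hr _) (hf ω)) univ_nonempty

lemma iidExp_ite_apply_eq [DecidableEq α] (hr : ∑ a, r a = 1) (i : ι) (a : α)
    (G : (ι → α) → ℝ) :
    iidExp r (fun ω => if ω i = a then G ω else 0) =
      r a * iidExp r (fun ω => G (Function.update ω i a)) := by
  -- resample coordinate `i` and swap the old and new values, an involution of `(ι → α) × α`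
  let f : (ι → α) × α → ℝ := fun x => r x.2 * ((∏ s, r (x.1 s)) * if x.1 i = a then G x.1 else 0)
  have hswap : Function.Involutive fun x : (ι → α) × α => (Function.update x.1 i x.2, x.1 i) := by
    rintro ⟨ω, b⟩
    simp
  calc iidExp r (fun ω => if ω i = a then G ω else 0)
      = ∑ x, f x := by
        simp only [f, Fintype.sum_prod_type, ← sum_mul, hr, one_mul, iidExp]
    _ = ∑ x : (ι → α) × α, f (Function.update x.1 i x.2, x.1 i) :=
        (Fintype.sum_bijective _ hswap.bijective _ _ fun _ => rfl).symm
    _ = r a * iidExp r (fun ω => G (Function.update ω i a)) := by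
        simp only [f, Fintype.sum_prod_type, Function.update_self, iidExp, mul_sum]
        refine sum_congr rfl fun ω _ => ?_
        simp only [mul_ite, mul_zero, sum_ite_eq', mem_univ, if_true]
        linear_combination G (Function.update ω i a) * prod_update_mul_apply r ω i a

end IidExpectation

section FirstOrderCondition

open Filter Topology

lemma mul_eq_mul_of_exp_budget {b₁ b₂ k₁ k₂ : ℝ} (hk₂ : k₂ ≠ 0)
    (h : ∀ x y, k₁ * (Real.exp x - 1) + k₂ * (Real.exp y - 1) ≤ 0 → b₁ * x + b₂ * y ≤ 0) :
    b₁ * k₂ = b₂ * k₁ := by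
  -- along `y = log (1 + r (1 - exp x))` the budget binds, so `x = 0` maximizes `b₁ x + b₂ y`
  set r := k₁ / k₂
  let u : ℝ → ℝ := fun x => 1 + r * (1 - Real.exp x)
  have hu : HasDerivAt u (-r) 0 := by
    simpa [u] using (((Real.hasDerivAt_exp 0).const_sub 1).const_mul r).const_add 1
  have hu0 : u 0 = 1 := by simp [u]
  have hmax : IsLocalMax (fun x => b₁ * x + b₂ * Real.log (u x)) 0 := by
    filter_upwards [hu.continuousAt.eventually (eventually_gt_nhds (hu0 ▸ one_pos))] with x hx
    have hbudget : k₁ * (Real.exp x - 1) + k₂ * (u x - 1) = 0 := by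
      simp only [u, r]
      field_simp
      ring
    simpa [hu0] using h _ _ (by rw [Real.exp_log hx, hbudget])
  have hderiv := ((hasDerivAt_id 0).const_mul b₁).add ((hu.log (by simp [hu0])).const_mul b₂)
  have := hmax.hasDerivAt_eq_zero hderiv
  simp only [hu0, div_one, mul_one] at this
  linear_combination k₂ * this + b₂ * div_mul_cancel₀ k₁ hk₂

lemma mul_eq_mul_of_forall_exp_budget {ι : Type*} [DecidableEq ι] {s : Finset ι} {b κ : ι → ℝ}
    (h : ∀ a : ι → ℝ, ∑ i ∈ s, κ i * (Real.exp (a i) - 1) ≤ 0 → ∑ i ∈ s, b i * a i ≤ 0)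
    {i j : ι} (hi : i ∈ s) (hj : j ∈ s) (hij : i ≠ j) (hκ : κ j ≠ 0) :
    b i * κ j = b j * κ i := by
  refine mul_eq_mul_of_exp_budget hκ fun x y hxy => ?_
  let a : ι → ℝ := fun l => if l = i then x else if l = j then y else 0
  have hrest : ∀ l ∈ s, l ≠ i ∧ l ≠ j → a l = 0 := fun l _ hl => by simp [a, hl.1, hl.2]
  have ha := h a
  rw [sum_eq_add_of_mem i j hi hj hij fun l hl hne => by simp [hrest l hl hne],
    sum_eq_add_of_mem i j hi hj hij fun l hl hne => by simp [hrest l hl hne]] at ha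
  simpa [a, hij.symm] using ha (by simpa [a, hij.symm] using hxy)

lemma div_eq_mul_of_mul_discounted_eq {R g : ℝ} {b C : ℕ → ℝ} {t : ℕ} (hR : R ≠ 0) (ht : 1 ≤ t)
    (hb : b t ≠ 0) (hC : C t ≠ 0) (hg : b (t + 1) = g * b t)
    (hfoc : b t * (C (t + 1) / R ^ t) = b (t + 1) * (C t / R ^ (t - 1))) :
    C (t + 1) / C t = R * g := by
  obtain ⟨t, rfl⟩ := Nat.exists_eq_add_of_le' ht
  rw [hg, Nat.add_sub_cancel, pow_succ] at hfoc
  field_simp at hfoc ⊢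
  linear_combination hfoc

end FirstOrderCondition

lemma prod_ite_add_lt_succ {M : Type*} [CommMonoid M] {k c t : ℕ} (f : Fin k → M) (hct : c ≤ t)
    (htk : t - c < k) :
    ∏ s : Fin k, (if (s : ℕ) + c < t + 1 then f s else 1) =
      f ⟨t - c, htk⟩ * ∏ s : Fin k, (if (s : ℕ) + c < t then f s else 1) := by
  have hsplit : ∀ s : Fin k, (if (s : ℕ) + c < t + 1 then f s else 1) =
      (if s = ⟨t - c, htk⟩ then f s else 1) * (if (s : ℕ) + c < t then f s else 1) := by
    intro s
    by_cases hs : s = ⟨t - c, htk⟩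
    · subst hs
      simp [show ¬ t - c + c < t by omega, show t - c + c < t + 1 by omega]
    · have : (s : ℕ) ≠ t - c := fun h => hs (Fin.ext h)
      by_cases hlt : (s : ℕ) + c < t
      · simp [hs, hlt, show (s : ℕ) + c < t + 1 by omega]
      · simp [hs, hlt, show ¬ (s : ℕ) + c < t + 1 by omega]
  rw [prod_congr rfl fun s _ => hsplit s, prod_mul_distrib, prod_ite_eq']
  simp

section ProblemIV

variable {T N : ℕ}

lemma Epath_eq_iidExp (r : Fin N → ℝ) (f : (Fin (T - 2) → Fin N) → ℝ) :
    Epath T N r f = iidExp r f := rfl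

def PolicyIV.addConst (P : PolicyIV T N) (a : ℕ → ℝ) : PolicyIV T N where
  v t ω := P.v t ω + a t
  adapted t ht ω ω' h := by rw [P.adapted t ht ω ω' h]

lemma discCont_splice (δ : Fin N → ℝ) (t τ : ℕ) (ω ω' : Fin (T - 2) → Fin N) :
    discCont T N δ t τ (splice T N t ω ω') = discCont T N δ t τ ω' := by
  refine prod_congr rfl fun s _ => ?_
  by_cases h : t + 1 ≤ (s : ℕ) + 2 ∧ (s : ℕ) + 2 < τ
  · rw [if_pos h, if_pos h, splice, if_neg (by omega)]
  · rw [if_neg h, if_neg h]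

lemma contA_addConst (δ q : Fin N → ℝ) (P : PolicyIV T N) (a : ℕ → ℝ) (t : ℕ)
    (ω : Fin (T - 2) → Fin N) :
    contA T N δ q (P.addConst a).v t ω = contA T N δ q P.v t ω +
      ∑ τ ∈ Icc (t + 1) T, a τ * Epath T N q (discCont T N δ t τ) := by
  simp only [contA, PolicyIV.addConst, discCont_splice, Epath_eq_iidExp, mul_add,
    sum_add_distrib, iidExp_add, iidExp_sum]
  congr 1
  exact sum_congr rfl fun τ _ => by rw [← iidExp_const_mul]; simp only [mul_comm]

/-- Adding date-dependent constants to utilities shifts both sides of every incentive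
constraint by the same amount. -/
lemma ICIV.addConst {δ q : Fin N → ℝ} {P : PolicyIV T N} (h : ICIV T N δ q P) (a : ℕ → ℝ) :
    ICIV T N δ q (P.addConst a) := by
  intro t h2 hT ω ω' hpre
  have hIC := h t h2 hT ω ω' hpre
  simp only [contA_addConst]
  change P.v t ω' + a t + _ ≤ P.v t ω + a t + _
  linear_combination hIC

lemma Icc_one_eq_insert_Icc_two (hT : 1 ≤ T) : Icc 1 T = insert 1 (Icc 2 T) :=
  (insert_Icc_add_one_left_eq_Icc hT).symm

lemma costIV_eq_sum (p : Fin N → ℝ) (φ : ℝ → ℝ) (R : ℝ) (P : PolicyIV T N) (hT : 1 ≤ T) :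
    costIV T N p φ R P = ∑ t ∈ Icc 1 T, Epath T N p (fun ω => φ (P.v t ω)) / R ^ (t - 1) := by
  simp [Icc_one_eq_insert_Icc_two hT, costIV, Epath_eq_iidExp, iidExp_add, iidExp_sum,
    iidExp_div_const]

lemma costIV_addConst (p : Fin N → ℝ) (R : ℝ) (P : PolicyIV T N) (a : ℕ → ℝ) (hT : 1 ≤ T) :
    costIV T N p Real.exp R (P.addConst a) = costIV T N p Real.exp R P +
      ∑ t ∈ Icc 1 T,
        Epath T N p (fun ω => Real.exp (P.v t ω)) / R ^ (t - 1) * (Real.exp (a t) - 1) := by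
  simp only [costIV_eq_sum _ _ _ _ hT, ← sum_add_distrib]
  refine sum_congr rfl fun t _ => ?_
  simp only [PolicyIV.addConst, Real.exp_add, Epath_eq_iidExp]
  rw [show (fun ω => Real.exp (P.v t ω) * Real.exp (a t)) =
    fun ω => Real.exp (a t) * Real.exp (P.v t ω) from funext fun _ => mul_comm _ _,
    iidExp_const_mul]
  ring

noncomputable def payoffWeightIV (T N : ℕ) (δ q : Fin N → ℝ) (δ1 : ℝ) (t : ℕ) : ℝ :=
  if t = 1 then 1 else δ1 * Epath T N q (discIV T N δ t)

lemma payoffIV_addConst {δ q : Fin N → ℝ} (hq1 : ∑ n, q n = 1) (δ1 : ℝ) (P : PolicyIV T N)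
    (a : ℕ → ℝ) (hT : 1 ≤ T) :
    payoffIV T N δ q δ1 (P.addConst a) =
      payoffIV T N δ q δ1 P + ∑ t ∈ Icc 1 T, payoffWeightIV T N δ q δ1 t * a t := by
  have hpoint : ∀ ω, (P.addConst a).v 1 ω + δ1 * ∑ t ∈ Icc 2 T,
      discIV T N δ t ω * (P.addConst a).v t ω =
      (P.v 1 ω + δ1 * ∑ t ∈ Icc 2 T, discIV T N δ t ω * P.v t ω) +
        (a 1 + ∑ t ∈ Icc 2 T, δ1 * a t * discIV T N δ t ω) := by
    intro ω
    simp only [PolicyIV.addConst, mul_add, sum_add_distrib, mul_sum]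
    rw [add_add_add_comm]
    congr 2
    exact sum_congr rfl fun t _ => by ring
  simp only [payoffIV, hpoint, Epath_eq_iidExp, iidExp_add, iidExp_sum, iidExp_const_mul,
    iidExp_const q hq1, Icc_one_eq_insert_Icc_two hT, sum_insert (show 1 ∉ Icc 2 T by simp)]
  simp only [payoffWeightIV, if_true, one_mul, Epath_eq_iidExp]
  congr 2
  refine sum_congr rfl fun t ht => ?_
  rw [if_neg (by simp at ht; omega)]
  ring

lemma Epath_discIV {δ q : Fin N → ℝ} (hq1 : ∑ n, q n = 1) (t : ℕ) :
    Epath T N q (discIV T N δ t) =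
      ∏ s : Fin (T - 2), if (s : ℕ) + 2 < t then ∑ n, q n * δ n else 1 := by
  rw [Epath_eq_iidExp]
  unfold discIV
  rw [iidExp_prod q fun (s : Fin (T - 2)) n => if (s : ℕ) + 2 < t then δ n else 1]
  refine prod_congr rfl fun s _ => ?_
  split_ifs <;> simp [hq1]

lemma payoffWeightIV_succ {δ q : Fin N → ℝ} (hq1 : ∑ n, q n = 1) (δ1 : ℝ) {t : ℕ}
    (ht1 : 1 ≤ t) (ht : t ≤ T - 1) :
    payoffWeightIV T N δ q δ1 (t + 1) =
      (if t = 1 then δ1 else ∑ n, q n * δ n) * payoffWeightIV T N δ q δ1 t := by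
  rw [payoffWeightIV, payoffWeightIV, if_neg (show t + 1 ≠ 1 by omega), Epath_discIV hq1,
    Epath_discIV hq1]
  split_ifs with h
  · subst h
    simp
  · rw [prod_ite_add_lt_succ (c := 2) (fun _ => ∑ n, q n * δ n) (by omega) (by omega)]
    ring

lemma payoffWeightIV_pos [Nonempty (Fin N)] {δ q : Fin N → ℝ} (hδ : ∀ n, 0 < δ n)
    (hq : ∀ n, 0 < q n) {δ1 : ℝ} (hδ1 : 0 < δ1) (t : ℕ) : 0 < payoffWeightIV T N δ q δ1 t := by
  unfold payoffWeightIV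
  split_ifs
  · exact one_pos
  · exact mul_pos hδ1 (iidExp_pos hq fun ω => prod_pos fun s _ => by split_ifs <;> simp [hδ])

theorem PolicyIV.consumption_growth_of_isMax [Nonempty (Fin N)] {R I δ1 : ℝ}
    {δ p q : Fin N → ℝ} (hR : 0 < R) (hδ : ∀ n, 0 < δ n) (hδ1 : 0 < δ1) (hp : ∀ n, 0 < p n)
    (hq : ∀ n, 0 < q n) (hq1 : ∑ n, q n = 1) {P : PolicyIV T N}
    (hfeas : FeasIVD T N δ p q Real.exp R I Set.univ P)
    (hmax : ∀ Q : PolicyIV T N, FeasIVD T N δ p q Real.exp R I Set.univ Q →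
      payoffIV T N δ q δ1 Q ≤ payoffIV T N δ q δ1 P)
    {t : ℕ} (ht1 : 1 ≤ t) (ht : t ≤ T - 1) :
    Epath T N p (fun ω => Real.exp (P.v (t + 1) ω)) / Epath T N p (fun ω => Real.exp (P.v t ω)) =
      R * (if t = 1 then δ1 else ∑ n, q n * δ n) := by
  have hT : 1 ≤ T := by omega
  set C : ℕ → ℝ := fun u => Epath T N p (fun ω => Real.exp (P.v u ω))
  have hC : ∀ u, 0 < C u := fun u => iidExp_pos hp fun ω => Real.exp_pos _
  have hbudget : ∀ a : ℕ → ℝ, ∑ u ∈ Icc 1 T, C u / R ^ (u - 1) * (Real.exp (a u) - 1) ≤ 0 →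
      ∑ u ∈ Icc 1 T, payoffWeightIV T N δ q δ1 u * a u ≤ 0 := by
    intro a ha
    have hQ : FeasIVD T N δ p q Real.exp R I Set.univ (P.addConst a) :=
      ⟨fun _ _ _ => trivial, by rw [costIV_addConst p R P a hT]; linarith [hfeas.2.1],
        hfeas.2.2.addConst a⟩
    have := hmax _ hQ
    rw [payoffIV_addConst hq1 δ1 P a hT] at this
    linarith
  have hfoc := mul_eq_mul_of_forall_exp_budget hbudget (i := t) (j := t + 1)
    (by simp; omega) (by simp; omega) (by omega) (div_pos (hC _) (pow_pos hR _)).ne'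
  rw [Nat.add_sub_cancel] at hfoc
  exact div_eq_mul_of_mul_discounted_eq hR.ne' ht1 (payoffWeightIV_pos hδ hq hδ1 t).ne'
    (hC t).ne' (payoffWeightIV_succ hq1 δ1 ht1 ht) hfoc

end ProblemIV

section EfficientProblem

variable {T N : ℕ}

lemma EpathB_eq_iidExp (r : Fin N → ℝ) (f : (Fin (T - 1) → Fin N) → ℝ) :
    EpathB T N r f = iidExp r f := rfl

def PolicyB.addConstOn (P : PolicyB T N) (s₀ : Fin (T - 1)) (n : Fin N) (a : ℕ → ℝ) :
    PolicyB T N where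
  v t ω := P.v t ω + if (s₀ : ℕ) < t ∧ ω s₀ = n then a t else 0
  adapted t ht ω ω' h := by
    rw [P.adapted t ht ω ω' h]
    by_cases hs : (s₀ : ℕ) < t
    · rw [h s₀ hs]
    · simp [hs]

noncomputable def objWeightB (T N : ℕ) (δ p : Fin N → ℝ) (s₀ : Fin (T - 1)) (n : Fin N)
    (t : ℕ) : ℝ :=
  EpathB T N p (fun ω => discBpol T N δ t (Function.update ω s₀ n))

variable {δ p : Fin N → ℝ} {s₀ : Fin (T - 1)}

lemma objBpol_addConstOn (hp1 : ∑ n, p n = 1) (P : PolicyB T N) (hs₀ : (s₀ : ℕ) = 0)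
    (n : Fin N) (a : ℕ → ℝ) :
    objBpol T N δ p (P.addConstOn s₀ n a) =
      objBpol T N δ p P + p n * ∑ t ∈ Icc 1 T, objWeightB T N δ p s₀ n t * a t := by
  have hpoint : ∀ ω, ∑ t ∈ Icc 1 T, discBpol T N δ t ω * (P.addConstOn s₀ n a).v t ω =
      ∑ t ∈ Icc 1 T, discBpol T N δ t ω * P.v t ω +
        ∑ t ∈ Icc 1 T, a t * if ω s₀ = n then discBpol T N δ t ω else 0 := by
    intro ω
    rw [← sum_add_distrib]
    refine sum_congr rfl fun t ht => ?_
    have : (s₀ : ℕ) < t := by simp at ht; omega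
    simp only [PolicyB.addConstOn, this, true_and]
    split_ifs <;> ring
  simp only [objBpol, hpoint, EpathB_eq_iidExp, iidExp_add, iidExp_sum, iidExp_const_mul,
    iidExp_ite_apply_eq p hp1, objWeightB, mul_sum]
  congr 1
  exact sum_congr rfl fun _ _ => by ring

lemma costBpol_addConstOn (hp1 : ∑ n, p n = 1) (R : ℝ) (P : PolicyB T N) (hs₀ : (s₀ : ℕ) = 0)
    (n : Fin N) (a : ℕ → ℝ) :
    costBpol T N p Real.exp R (P.addConstOn s₀ n a) = costBpol T N p Real.exp R P +
      p n * ∑ t ∈ Icc 1 T, EpathB T N p (fun ω => Real.exp (P.v t (Function.update ω s₀ n))) /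
        R ^ (t - 1) * (Real.exp (a t) - 1) := by
  have hpoint : ∀ ω, ∑ t ∈ Icc 1 T, Real.exp ((P.addConstOn s₀ n a).v t ω) / R ^ (t - 1) =
      ∑ t ∈ Icc 1 T, Real.exp (P.v t ω) / R ^ (t - 1) + ∑ t ∈ Icc 1 T,
        (Real.exp (a t) - 1) / R ^ (t - 1) * if ω s₀ = n then Real.exp (P.v t ω) else 0 := by
    intro ω
    rw [← sum_add_distrib]
    refine sum_congr rfl fun t ht => ?_
    have : (s₀ : ℕ) < t := by simp at ht; omega
    simp only [PolicyB.addConstOn, this, true_and]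
    split_ifs <;> simp only [Real.exp_add, add_zero] <;> ring
  simp only [costBpol, hpoint, EpathB_eq_iidExp, iidExp_add, iidExp_sum, iidExp_const_mul,
    iidExp_ite_apply_eq p hp1, mul_sum]
  congr 1
  exact sum_congr rfl fun _ _ => by ring

lemma objWeightB_eq_prod (hp1 : ∑ n, p n = 1) (n : Fin N) (t : ℕ) :
    objWeightB T N δ p s₀ n t = ∏ s : Fin (T - 1),
      if (s : ℕ) + 1 < t then (if s = s₀ then δ n else ∑ m, p m * δ m) else 1 := by
  rw [objWeightB, EpathB_eq_iidExp]
  unfold discBpol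
  simp only [Function.update_apply]
  rw [iidExp_prod p fun (s : Fin (T - 1)) m => if (s : ℕ) + 1 < t then
    δ (if s = s₀ then n else m) else 1]
  refine prod_congr rfl fun s _ => ?_
  split_ifs <;> simp [← sum_mul, hp1]

lemma objWeightB_succ (hp1 : ∑ n, p n = 1) (hs₀ : (s₀ : ℕ) = 0) (n : Fin N) {t : ℕ}
    (ht1 : 1 ≤ t) (ht : t ≤ T - 1) :
    objWeightB T N δ p s₀ n (t + 1) =
      (if t = 1 then δ n else ∑ m, p m * δ m) * objWeightB T N δ p s₀ n t := by
  rw [objWeightB_eq_prod hp1, objWeightB_eq_prod hp1,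
    prod_ite_add_lt_succ (c := 1) _ ht1 (by omega)]
  congr 1
  simp only [Fin.ext_iff, hs₀]
  split_ifs <;> first | rfl | omega

lemma objWeightB_pos (hδ : ∀ n, 0 < δ n) (hp : ∀ n, 0 < p n) (n : Fin N) (t : ℕ) :
    0 < objWeightB T N δ p s₀ n t :=
  have : Nonempty (Fin N) := ⟨n⟩
  iidExp_pos hp fun ω => prod_pos fun s _ => by split_ifs <;> simp [hδ]

theorem PolicyB.consumption_growth_of_isMax {R I : ℝ} (hR : 0 < R) (hδ : ∀ n, 0 < δ n)
    (hp : ∀ n, 0 < p n) (hp1 : ∑ n, p n = 1) {P : PolicyB T N}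
    (hfeas : FeasBD T N p Real.exp R I Set.univ P)
    (hmax : ∀ Q : PolicyB T N, FeasBD T N p Real.exp R I Set.univ Q →
      objBpol T N δ p Q ≤ objBpol T N δ p P)
    (n : Fin N) {t : ℕ} (ht1 : 1 ≤ t) (ht : t ≤ T - 1) :
    EpathB T N p (fun ω => Real.exp (P.v (t + 1) (fun s => if (s : ℕ) = 0 then n else ω s))) /
        EpathB T N p (fun ω => Real.exp (P.v t (fun s => if (s : ℕ) = 0 then n else ω s))) =
      R * (if t = 1 then δ n else ∑ m, p m * δ m) := by
  have : Nonempty (Fin N) := ⟨n⟩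
  let s₀ : Fin (T - 1) := ⟨0, by omega⟩
  have hupdate : ∀ ω : Fin (T - 1) → Fin N,
      (fun s : Fin (T - 1) => if (s : ℕ) = 0 then n else ω s) = Function.update ω s₀ n := fun ω =>
    funext fun s => by simp [Function.update_apply, s₀, Fin.ext_iff]
  simp only [hupdate]
  set C : ℕ → ℝ := fun u => EpathB T N p (fun ω => Real.exp (P.v u (Function.update ω s₀ n)))
  have hC : ∀ u, 0 < C u := fun u => iidExp_pos hp fun ω => Real.exp_pos _
  have hbudget : ∀ a : ℕ → ℝ, ∑ u ∈ Icc 1 T, C u / R ^ (u - 1) * (Real.exp (a u) - 1) ≤ 0 →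
      ∑ u ∈ Icc 1 T, objWeightB T N δ p s₀ n u * a u ≤ 0 := by
    intro a ha
    have hQ : FeasBD T N p Real.exp R I Set.univ (P.addConstOn s₀ n a) := by
      refine ⟨fun _ _ _ => trivial, ?_⟩
      rw [costBpol_addConstOn hp1 R P rfl n a]
      linarith [hfeas.2, mul_nonpos_of_nonneg_of_nonpos (hp n).le ha]
    have := hmax _ hQ
    rw [objBpol_addConstOn hp1 P rfl n a, add_le_iff_nonpos_right] at this
    exact nonpos_of_mul_nonpos_right this (hp n)
  have hfoc := mul_eq_mul_of_forall_exp_budget hbudget (i := t) (j := t + 1)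
    (by simp; omega) (by simp; omega) (by omega) (div_pos (hC _) (pow_pos hR _)).ne'
  rw [Nat.add_sub_cancel] at hfoc
  exact div_eq_mul_of_mul_discounted_eq hR.ne' ht1 (objWeightB_pos hδ hp n t).ne'
    (hC t).ne' (objWeightB_succ hp1 rfl n ht1 ht) hfoc

end EfficientProblem

theorem stmt14_general
    (T N : ℕ)
    (R I : ℝ) (hR : 1 ≤ R)
    (δ : Fin N → ℝ) (hδpos : ∀ n, 0 < δ n) (hδmono : StrictMono δ)
    (p q : Fin N → ℝ) (hp : ∀ n, 0 < p n) (hq : ∀ n, 0 < q n)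
    (hp1 : ∑ n, p n = 1) (hq1 : ∑ n, q n = 1)
    (hFOSD : ∀ k : ℕ,
      ∑ n ∈ Finset.univ.filter (fun n : Fin N => (n : ℕ) < k), q n ≤
        ∑ n ∈ Finset.univ.filter (fun n : Fin N => (n : ℕ) < k), p n)
    (n1 : Fin N)
    -- vE is a maximizer of Problem IV for initial type δ n1, with φ = exp
    (vE : PolicyIV T N)
    (hEfeas : FeasIVD T N δ p q Real.exp R I Set.univ vE)
    (hEmax : ∀ Q : PolicyIV T N, FeasIVD T N δ p q Real.exp R I Set.univ Q →
      payoffIV T N δ q (δ n1) Q ≤ payoffIV T N δ q (δ n1) vE)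
    -- vB is a maximizer of the efficient problem, with φ = exp
    (vB : PolicyB T N)
    (hBfeas : FeasBD T N p Real.exp R I Set.univ vB)
    (hBmax : ∀ Q : PolicyB T N, FeasBD T N p Real.exp R I Set.univ Q →
      objBpol T N δ p Q ≤ objBpol T N δ p vB)
    -- equilibrium and efficient expected consumption
    (cE cB : ℕ → ℝ)
    (hcE : ∀ t, cE t = Epath T N p (fun ω => Real.exp (vE.v t ω)))
    (hcB : ∀ t, cB t = EpathB T N p (fun ω =>
      Real.exp (vB.v t (fun s => if (s : ℕ) = 0 then n1 else ω s)))) :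
    -- equilibrium consumption grows weakly faster
    (∀ t ∈ Finset.Icc 1 (T - 1), cB (t + 1) / cB t ≤ cE (t + 1) / cE t) ∧
    -- with equality if beliefs agree
    (p = q → ∀ t ∈ Finset.Icc 1 (T - 1), cE (t + 1) / cE t = cB (t + 1) / cB t) ∧
    -- and strictly for t ≥ 2 if the agent is strictly more optimistic
    (p ≠ q → ∀ t ∈ Finset.Icc 2 (T - 1), cB (t + 1) / cB t < cE (t + 1) / cE t) := by
  have : Nonempty (Fin N) := ⟨n1⟩
  have hR₀ : 0 < R := by linarith
  have hE : ∀ t ∈ Icc 1 (T - 1), cE (t + 1) / cE t = R * if t = 1 then δ n1 else ∑ n, q n * δ n :=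
    fun t ht => by
      rw [mem_Icc] at ht
      rw [hcE, hcE]
      exact vE.consumption_growth_of_isMax hR₀ hδpos (hδpos n1) hp hq hq1 hEfeas hEmax ht.1 ht.2
  have hB : ∀ t ∈ Icc 1 (T - 1), cB (t + 1) / cB t = R * if t = 1 then δ n1 else ∑ n, p n * δ n :=
    fun t ht => by
      rw [mem_Icc] at ht
      rw [hcB, hcB]
      exact vB.consumption_growth_of_isMax hR₀ hδpos hp hp1 hBfeas hBmax n1 ht.1 ht.2
  have hsum : ∑ n, p n = ∑ n, q n := hp1.trans hq1.symm
  refine ⟨fun t ht => ?_, fun heq t ht => ?_, fun hne t ht => ?_⟩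
  · rw [hE t ht, hB t ht]
    split_ifs
    · rfl
    · exact mul_le_mul_of_nonneg_left
        (sum_mul_le_sum_mul_of_forall_sum_filter_lt_le hδmono.monotone hsum hFOSD) hR₀.le
  · rw [hE t ht, hB t ht, heq]
  · have ht1 : t ∈ Icc 1 (T - 1) := by simp at ht ⊢; omega
    rw [hE t ht1, hB t ht1, if_neg (by simp at ht; omega), if_neg (by simp at ht; omega)]
    exact mul_lt_mul_of_pos_left
      (sum_mul_lt_sum_mul_of_forall_sum_filter_lt_le hδmono hsum hFOSD hne) hR₀

/-- Corollary (logarithmic utility: equilibrium consumption grows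
faster).  With `u c = ln c`, i.e. `φ = Real.exp` on `D = ℝ`, let `vE` be a maximizer
of Problem IV (for fixed initial type `δ^(n1)`) and `vB` a maximizer of the efficient
problem, with equilibrium consumption `cE t = E_F[exp (v^E_t)]` and efficient
consumption `cB t = E_F[exp (v^B_t(δ₁,·))]` (first draw fixed at the initial type).
Then for every `t ∈ {1,…,T-1}` the equilibrium growth ratio `cE (t+1) / cE t` is at
least the efficient growth ratio `cB (t+1) / cB t`; the ratios are equal for all `t`
if `p = q`; and for `t ≥ 2` the inequality is strict if `p ≠ q`. -/
theorem stmt14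
    (T N : ℕ) (hT : 3 ≤ T) (hN : 2 ≤ N)
    (R I : ℝ) (hR : 1 ≤ R) (hI : 0 < I)
    (δ : Fin N → ℝ) (hδpos : ∀ n, 0 < δ n) (hδmono : StrictMono δ)
    (p q : Fin N → ℝ) (hp : ∀ n, 0 < p n) (hq : ∀ n, 0 < q n)
    (hp1 : ∑ n, p n = 1) (hq1 : ∑ n, q n = 1)
    (hFOSD : ∀ k : ℕ,
      ∑ n ∈ Finset.univ.filter (fun n : Fin N => (n : ℕ) < k), q n ≤
        ∑ n ∈ Finset.univ.filter (fun n : Fin N => (n : ℕ) < k), p n)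
    (n1 : Fin N)
    -- vE is a maximizer of Problem IV for initial type δ n1, with φ = exp
    (vE : PolicyIV T N)
    (hEfeas : FeasIVD T N δ p q Real.exp R I Set.univ vE)
    (hEmax : ∀ Q : PolicyIV T N, FeasIVD T N δ p q Real.exp R I Set.univ Q →
      payoffIV T N δ q (δ n1) Q ≤ payoffIV T N δ q (δ n1) vE)
    -- vB is a maximizer of the efficient problem, with φ = exp
    (vB : PolicyB T N)
    (hBfeas : FeasBD T N p Real.exp R I Set.univ vB)
    (hBmax : ∀ Q : PolicyB T N, FeasBD T N p Real.exp R I Set.univ Q →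
      objBpol T N δ p Q ≤ objBpol T N δ p vB)
    -- equilibrium and efficient expected consumption
    (cE cB : ℕ → ℝ)
    (hcE : ∀ t, cE t = Epath T N p (fun ω => Real.exp (vE.v t ω)))
    (hcB : ∀ t, cB t = EpathB T N p (fun ω =>
      Real.exp (vB.v t (fun s => if (s : ℕ) = 0 then n1 else ω s)))) :
    -- equilibrium consumption grows weakly faster
    (∀ t ∈ Finset.Icc 1 (T - 1), cB (t + 1) / cB t ≤ cE (t + 1) / cE t) ∧
    -- with equality if beliefs agree
    (p = q → ∀ t ∈ Finset.Icc 1 (T - 1), cE (t + 1) / cE t = cB (t + 1) / cB t) ∧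
    -- and strictly for t ≥ 2 if the agent is strictly more optimistic
    (p ≠ q → ∀ t ∈ Finset.Icc 2 (T - 1), cB (t + 1) / cB t < cE (t + 1) / cE t) :=
  stmt14_general T N R I hR δ hδpos hδmono p q hp hq hp1 hq1 hFOSD n1 vE hEfeas hEmax vB hBfeas
    hBmax cE cB hcE hcB
end

section
/- Example (Square-root utility, full separation for many types). Let T = 3 and φ(v) = v² on D = [0,∞) (inverse of u(c) = √c). Let 0 < δ̲ < δ̄, and for each N ≥ 2 let the type set be δ^(n) = δ̲ + ((n−1)/(N−1))·(δ̄ − δ̲), n = 1,…,N, with p_n = q_n = 1/N for all n. Then there exists N₀ such that for every N ≥ N₀ and every initial type δ₁ ∈ Δ, the unique maximizer of Problem IV has its date-2 utilities v₂(δ^(n)) strictly positive and strictly decreasing in n, and its date-3 utilities v₃(δ^(n)) strictly positive and strictly increasing in n. -/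
/-- Equally spaced discount factors `δ^(n) = δ̲ + ((n-1)/(N-1))(δ̄-δ̲)` (here the
index `n : Fin N` runs from `0` to `N-1`). -/
noncomputable def deltaUnif (δlo δhi : ℝ) (N : ℕ) (n : Fin N) : ℝ :=
  δlo + ((n : ℝ) / ((N : ℝ) - 1)) * (δhi - δlo)

/-- Feasibility for Problem IV with `T = 3`, square-root utility (`φ v = v²`), and
uniform beliefs: nonnegativity, the firm break-even constraint, and the date-2
incentive constraints. -/
def Feas15 (N : ℕ) (δlo δhi R I : ℝ) (v1 : ℝ) (v2 v3 : Fin N → ℝ) : Prop :=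
  0 ≤ v1 ∧ (∀ n, 0 ≤ v2 n) ∧ (∀ n, 0 ≤ v3 n) ∧
  v1 ^ 2 + (∑ n, (1 / (N : ℝ)) * ((v2 n) ^ 2 / R + (v3 n) ^ 2 / R ^ 2)) ≤ I ∧
  ∀ i j : Fin N, v2 j + deltaUnif δlo δhi N i * v3 j ≤ v2 i + deltaUnif δlo δhi N i * v3 i

/-- The agent's expected payoff for initial type `δ^(n1)`. -/
noncomputable def obj15 (N : ℕ) (δlo δhi : ℝ) (n1 : Fin N) (v1 : ℝ) (v2 v3 : Fin N → ℝ) : ℝ :=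
  v1 + deltaUnif δlo δhi N n1 *
    ∑ n, (1 / (N : ℝ)) * (v2 n + deltaUnif δlo δhi N n * v3 n)

/-!
Only the adjacent constraints "type `n` does not mimic type `n + 1`" bind. Solving the
first-order conditions with exactly these constraints binding gives explicit multipliers and a
candidate `z`. By summation by parts, the objective plus the multiplier-weighted slacks of these
constraints is `⟪z, u⟫` for the inner product whose square norm is the budget. If the
multipliers are nonnegative, every feasible `u` has `obj u ≤ ⟪z, u⟫` and `‖u‖² ≤ I`, while
`w = c z` with `‖w‖² = I` is feasible (single crossing) and `obj w = ⟪z, w⟫`. Hence an optimum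
`v` satisfies `‖w‖² ≤ ⟪w, v⟫` and `‖v‖ ≤ ‖w‖`, which forces `v = w`.
The multipliers are partial sums of a sequence with total zero, so they are nonnegative as soon
as that sequence decreases; this holds when the grid step `h` satisfies `2 R h δ̄ ≤ 1`, i.e.
for many types. The signs and monotonicity of `z` then follow from the same recursion.
-/
open Finset

theorem sum_range_nonneg_of_antitoneOn {α : Type*} [AddCommGroup α] [LinearOrder α]
    [IsOrderedAddMonoid α] {f : ℕ → α} {N n : ℕ} (hf : AntitoneOn f (Set.Iio N))
    (hsum : ∑ k ∈ range N, f k = 0) (hn : n ≤ N) : 0 ≤ ∑ k ∈ range n, f k := by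
  rcases hn.eq_or_lt with rfl | hn
  · exact hsum.ge
  rcases le_total 0 (f n) with hfn | hfn
  · exact sum_nonneg fun k hk ↦
      hfn.trans (hf ((mem_range.1 hk).trans hn) hn (mem_range.1 hk).le)
  · have htail : ∑ k ∈ Ico n N, f k ≤ 0 := sum_nonpos fun k hk ↦
      (hf hn (mem_Ico.1 hk).2 (mem_Ico.1 hk).1).trans hfn
    rw [← sum_range_add_sum_Ico f hn.le] at hsum
    rw [eq_neg_of_add_eq_zero_left hsum]
    exact neg_nonneg.2 htail

theorem add_mul_le_add_mul_of_adjacent_eq {α : Type*} [CommRing α] [LinearOrder α]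
    [IsStrictOrderedRing α] {x y δ : ℕ → α} {N : ℕ} (hδ : Monotone δ)
    (hy : MonotoneOn y (Set.Iio N))
    (hadj : ∀ n, n + 1 < N → x (n + 1) + δ n * y (n + 1) = x n + δ n * y n)
    {i j : ℕ} (hi : i < N) (hj : j < N) : x j + δ i * y j ≤ x i + δ i * y i := by
  set F : ℕ → α := fun k ↦ x k + δ i * y k
  have hstep k (hk : k + 1 < N) : F (k + 1) - F k = (δ i - δ k) * (y (k + 1) - y k) := by
    simp only [F]
    linear_combination hadj k hk
  have hy' k (hk : k + 1 < N) : 0 ≤ y (k + 1) - y k :=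
    sub_nonneg.2 (hy (by simp; omega) (by simpa using hk) (Nat.le_succ k))
  change F j ≤ F i
  rcases le_total i j with hij | hji
  · refine antitoneOn_of_succ_le (f := F) (s := Set.Icc i j) Set.ordConnected_Icc ?_
      ⟨le_rfl, hij⟩ ⟨hij, le_rfl⟩ hij
    intro k _ hk hk1
    rw [Order.succ_eq_add_one] at hk1 ⊢
    have hkN : k + 1 < N := by simp at hk1; omega
    linarith [hstep k hkN, mul_nonpos_of_nonpos_of_nonneg (sub_nonpos.2 (hδ hk.1)) (hy' k hkN)]
  · refine monotoneOn_of_le_succ (f := F) (s := Set.Icc j i) Set.ordConnected_Icc ?_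
      ⟨le_rfl, hji⟩ ⟨hji, le_rfl⟩ hji
    intro k _ hk hk1
    rw [Order.succ_eq_add_one] at hk1 ⊢
    have hkN : k + 1 < N := by simp at hk1; omega
    linarith [hstep k hkN, mul_nonneg (sub_nonneg.2 (hδ hk.2)) (hy' k hkN)]

theorem eq_of_sum_mul_sq_le {𝕜 ι : Type*} [Field 𝕜] [LinearOrder 𝕜] [IsStrictOrderedRing 𝕜]
    {s : Finset ι} {ω v w : ι → 𝕜} (hω : ∀ i ∈ s, 0 < ω i)
    (hnorm : ∑ i ∈ s, ω i * v i ^ 2 ≤ ∑ i ∈ s, ω i * w i ^ 2)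
    (hinner : ∑ i ∈ s, ω i * w i ^ 2 ≤ ∑ i ∈ s, ω i * (w i * v i)) :
    ∀ i ∈ s, v i = w i := by
  have hexpand : ∑ i ∈ s, ω i * (v i - w i) ^ 2 = ∑ i ∈ s, ω i * v i ^ 2
      - 2 * ∑ i ∈ s, ω i * (w i * v i) + ∑ i ∈ s, ω i * w i ^ 2 := by
    simp only [mul_sum, ← sum_sub_distrib, ← sum_add_distrib]
    exact sum_congr rfl fun i _ ↦ by ring
  have hnonneg : ∀ i ∈ s, 0 ≤ ω i * (v i - w i) ^ 2 := fun i hi ↦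
    mul_nonneg (hω i hi).le (sq_nonneg _)
  have hzero := (sum_eq_zero_iff_of_nonneg hnonneg).1
    (le_antisymm (by linarith) (sum_nonneg hnonneg))
  intro i hi
  have := hzero i hi
  rw [mul_eq_zero, or_iff_right (hω i hi).ne', sq_eq_zero_iff, sub_eq_zero] at this
  exact this

namespace ProblemIV

section Candidate

variable (R a h d : ℝ) (N : ℕ)

/- Types are `grid a h n = a + n h` and `d` is the initial type. The multiplier of the
constraint "type `n` does not report `n + 1`" is `cumMult (n + 1) / N`, with increments
`mult n / N`. Making all these adjacent constraints bind forces
`mult n * den n = level - drift n`, and `level` is chosen so that `cumMult N = 0`;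
`(1, cand2, cand3)` is the maximizer of the Lagrangian up to the positive scalar fixed by the
budget. -/

def grid (n : ℕ) : ℝ := a + n * h

def den (n : ℕ) : ℝ := 1 + R * grid a h n * (grid a h n - h)

def drift (n : ℕ) : ℝ := R * h * d * ∑ k ∈ range n, grid a h k

noncomputable def level : ℝ :=
  (∑ k ∈ range N, drift R a h d k / den R a h k) / ∑ k ∈ range N, (den R a h k)⁻¹

noncomputable def mult (n : ℕ) : ℝ := (level R a h d N - drift R a h d n) / den R a h n

noncomputable def cumMult (n : ℕ) : ℝ := ∑ k ∈ range n, mult R a h d N k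

noncomputable def cand2 (n : ℕ) : ℝ := R * (d + mult R a h d N n)

noncomputable def cand3 (n : ℕ) : ℝ :=
  R ^ 2 * (grid a h n * (d + mult R a h d N n) + h * cumMult R a h d N n)

variable {R a h d N}

theorem grid_succ (n : ℕ) : grid a h (n + 1) = grid a h n + h := by
  simp only [grid]; push_cast; ring

theorem grid_pos (ha : 0 < a) (hh : 0 ≤ h) (n : ℕ) : 0 < grid a h n := by
  unfold grid; positivity

theorem grid_mono (hh : 0 ≤ h) : Monotone (grid a h) := fun m n hmn ↦ by
  unfold grid; gcongr

theorem two_mul_sum_grid (n : ℕ) :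
    2 * h * ∑ k ∈ range n, grid a h k = grid a h n ^ 2 - a ^ 2 - n * h ^ 2 := by
  induction n with
  | zero => simp [grid]
  | succ n ih => rw [sum_range_succ, mul_add, ih, grid_succ]; push_cast; ring

theorem den_succ (n : ℕ) : den R a h (n + 1) = den R a h n + 2 * R * h * grid a h n := by
  simp only [den, grid_succ]; ring

theorem den_pos (hR : 0 ≤ R) {n : ℕ} (hn : 2 * R * h * grid a h n ≤ 1) : 0 < den R a h n := by
  unfold den
  nlinarith [mul_nonneg hR (sq_nonneg (grid a h n))]

theorem drift_succ (n : ℕ) :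
    drift R a h d (n + 1) = drift R a h d n + R * h * d * grid a h n := by
  simp only [drift, sum_range_succ]; ring

theorem drift_nonneg (hR : 0 ≤ R) (ha : 0 < a) (hh : 0 ≤ h) (hd : 0 ≤ d) (n : ℕ) :
    0 ≤ drift R a h d n := by
  unfold drift
  have := sum_nonneg fun k (_ : k ∈ range n) ↦ (grid_pos ha hh k).le
  positivity

theorem two_mul_drift_le (hR : 0 ≤ R) (hd : 0 ≤ d) (n : ℕ) :
    2 * drift R a h d n ≤ R * d * (grid a h n ^ 2 - a ^ 2) := by
  have h2 : 2 * drift R a h d n = R * d * (grid a h n ^ 2 - a ^ 2 - n * h ^ 2) := by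
    rw [← two_mul_sum_grid, drift]; ring
  rw [h2]
  have : 0 ≤ R * d * (n * h ^ 2) := by positivity
  linarith

theorem mult_mul_den {n : ℕ} (hn : den R a h n ≠ 0) :
    mult R a h d N n * den R a h n = level R a h d N - drift R a h d n :=
  div_mul_cancel₀ _ hn

theorem level_nonneg (hR : 0 ≤ R) (ha : 0 < a) (hh : 0 ≤ h) (hd : 0 ≤ d)
    (hden : ∀ n < N, 0 < den R a h n) : 0 ≤ level R a h d N := by
  unfold level
  refine div_nonneg (sum_nonneg fun k hk ↦ ?_) (sum_nonneg fun k hk ↦ ?_)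
  · exact div_nonneg (drift_nonneg hR ha hh hd k) (hden k (mem_range.1 hk)).le
  · exact (inv_pos.2 (hden k (mem_range.1 hk))).le

theorem sum_mult (hden : ∀ n < N, 0 < den R a h n) : ∑ n ∈ range N, mult R a h d N n = 0 := by
  rcases N.eq_zero_or_pos with rfl | hN
  · simp
  have hpos : 0 < ∑ k ∈ range N, (den R a h k)⁻¹ :=
    sum_pos (fun k hk ↦ inv_pos.2 (hden k (mem_range.1 hk))) ⟨0, mem_range.2 hN⟩
  simp only [mult, sub_div, sum_sub_distrib, div_eq_mul_inv (level R a h d N), ← mul_sum]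
  rw [level, div_mul_cancel₀ _ hpos.ne', sub_self]

theorem cumMult_succ (n : ℕ) :
    cumMult R a h d N (n + 1) = cumMult R a h d N n + mult R a h d N n :=
  sum_range_succ _ _

theorem mult_sub_mult_succ_mul {n : ℕ} (h0 : den R a h n ≠ 0) (h1 : den R a h (n + 1) ≠ 0) :
    (mult R a h d N n - mult R a h d N (n + 1)) * den R a h (n + 1)
      = R * h * grid a h n * (d + 2 * mult R a h d N n) := by
  linear_combination mult_mul_den (d := d) (N := N) h0 - mult_mul_den (d := d) (N := N) h1
    + mult R a h d N n * den_succ (R := R) (a := a) (h := h) n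
    + drift_succ (R := R) (a := a) (h := h) (d := d) n

/-- By `mult_sub_mult_succ_mul` this makes the multiplier increments `mult` decrease; it is
the one place where the grid has to be fine. -/
theorem d_add_two_mult_pos (hR : 0 ≤ R) (ha : 0 < a) (hh : 0 ≤ h) (hd : 0 < d)
    (hden : ∀ n < N, 0 < den R a h n) {n : ℕ} (hn : 2 * R * h * grid a h n ≤ 1) (hnN : n < N) :
    0 < d + 2 * mult R a h d N n := by
  have hA := hden n hnN
  refine (mul_pos_iff_of_pos_right hA).1 ?_
  have hdrift := two_mul_drift_le (a := a) (h := h) hR hd.le n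
  have hlevel := level_nonneg hR ha hh hd.le hden
  have hRa : 0 ≤ R * a ^ 2 := by positivity
  rw [add_mul, mul_assoc, mult_mul_den hA.ne']
  unfold den
  nlinarith

theorem mult_strictAntiOn (hR : 0 < R) (ha : 0 < a) (hh : 0 < h) (hd : 0 < d)
    (hsmall : ∀ n < N, 2 * R * h * grid a h n ≤ 1) :
    StrictAntiOn (mult R a h d N) (Set.Iio N) := by
  have hden n (hn : n < N) : 0 < den R a h n := den_pos hR.le (hsmall n hn)
  refine strictAntiOn_of_succ_lt Set.ordConnected_Iio fun n _ hn hn1 ↦ ?_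
  rw [Order.succ_eq_add_one, Set.mem_Iio] at hn1
  rw [Order.succ_eq_add_one]
  have hA := hden (n + 1) hn1
  have hkey := d_add_two_mult_pos hR.le ha hh.le hd hden (hsmall n hn) hn
  have hdiff := mult_sub_mult_succ_mul (d := d) (N := N) (hden n hn).ne' hA.ne'
  have : 0 < R * h * grid a h n * (d + 2 * mult R a h d N n) := by
    have := grid_pos ha hh.le n
    positivity
  rw [← hdiff] at this
  linarith [(mul_pos_iff_of_pos_right hA).1 this]

theorem cumMult_nonneg (hR : 0 < R) (ha : 0 < a) (hh : 0 < h) (hd : 0 < d)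
    (hsmall : ∀ n < N, 2 * R * h * grid a h n ≤ 1) {n : ℕ} (hn : n ≤ N) :
    0 ≤ cumMult R a h d N n :=
  sum_range_nonneg_of_antitoneOn (mult_strictAntiOn hR ha hh hd hsmall).antitoneOn
    (sum_mult fun k hk ↦ den_pos hR.le (hsmall k hk)) hn

theorem d_add_mult_pos (hR : 0 < R) (ha : 0 < a) (hh : 0 < h) (hd : 0 < d)
    (hsmall : ∀ n < N, 2 * R * h * grid a h n ≤ 1) {n : ℕ} (hn : n < N) :
    0 < d + mult R a h d N n := by
  have := d_add_two_mult_pos hR.le ha hh.le hd (fun k hk ↦ den_pos hR.le (hsmall k hk))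
    (hsmall n hn) hn
  linarith

theorem cand2_pos (hR : 0 < R) (ha : 0 < a) (hh : 0 < h) (hd : 0 < d)
    (hsmall : ∀ n < N, 2 * R * h * grid a h n ≤ 1) {n : ℕ} (hn : n < N) :
    0 < cand2 R a h d N n :=
  mul_pos hR (d_add_mult_pos hR ha hh hd hsmall hn)

theorem cand2_strictAntiOn (hR : 0 < R) (ha : 0 < a) (hh : 0 < h) (hd : 0 < d)
    (hsmall : ∀ n < N, 2 * R * h * grid a h n ≤ 1) :
    StrictAntiOn (cand2 R a h d N) (Set.Iio N) := fun _ hi _ hj hij ↦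
  mul_lt_mul_of_pos_left
    ((add_lt_add_iff_left d).2 (mult_strictAntiOn hR ha hh hd hsmall hi hj hij)) hR

theorem cand3_pos (hR : 0 < R) (ha : 0 < a) (hh : 0 < h) (hd : 0 < d)
    (hsmall : ∀ n < N, 2 * R * h * grid a h n ≤ 1) {n : ℕ} (hn : n < N) :
    0 < cand3 R a h d N n := by
  have := grid_pos ha hh.le n
  have := d_add_mult_pos hR ha hh hd hsmall hn
  have := cumMult_nonneg hR ha hh hd hsmall hn.le
  unfold cand3
  positivity

theorem cand_adjacent (hR : 0 < R) (hsmall : ∀ n < N, 2 * R * h * grid a h n ≤ 1)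
    {n : ℕ} (hn : n + 1 < N) :
    cand2 R a h d N (n + 1) + grid a h n * cand3 R a h d N (n + 1)
      = cand2 R a h d N n + grid a h n * cand3 R a h d N n := by
  have hdiff := mult_sub_mult_succ_mul (d := d) (N := N)
    (den_pos hR.le (hsmall n (by omega))).ne' (den_pos hR.le (hsmall (n + 1) hn)).ne'
  simp only [cand2, cand3, grid_succ, cumMult_succ]
  rw [den_succ, den] at hdiff
  linear_combination (-R) * hdiff

theorem cand3_strictMonoOn (hR : 0 < R) (ha : 0 < a) (hh : 0 < h) (hd : 0 < d)
    (hsmall : ∀ n < N, 2 * R * h * grid a h n ≤ 1) :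
    StrictMonoOn (cand3 R a h d N) (Set.Iio N) := by
  refine strictMonoOn_of_lt_succ Set.ordConnected_Iio fun n _ hn hn1 ↦ ?_
  rw [Order.succ_eq_add_one, Set.mem_Iio] at hn1
  rw [Order.succ_eq_add_one]
  have hadj := cand_adjacent (d := d) hR hsmall hn1
  have h2 := cand2_strictAntiOn hR ha hh hd hsmall hn hn1 (Nat.lt_succ_self n)
  have := grid_pos ha hh.le n
  nlinarith

theorem cand_add_grid_mul_le (hR : 0 < R) (ha : 0 < a) (hh : 0 < h) (hd : 0 < d)
    (hsmall : ∀ n < N, 2 * R * h * grid a h n ≤ 1) {i j : ℕ} (hi : i < N) (hj : j < N) :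
    cand2 R a h d N j + grid a h i * cand3 R a h d N j
      ≤ cand2 R a h d N i + grid a h i * cand3 R a h d N i :=
  add_mul_le_add_mul_of_adjacent_eq (grid_mono hh.le)
    (cand3_strictMonoOn hR ha hh hd hsmall).monotoneOn (fun _ hn ↦ cand_adjacent hR hsmall hn) hi hj

variable (a h) in
def slack (u2 u3 : ℕ → ℝ) (n : ℕ) : ℝ :=
  u2 n + grid a h n * u3 n - (u2 (n + 1) + grid a h n * u3 (n + 1))

/-- Summation by parts: the candidate represents, in the inner product whose square is the
budget, the objective plus the adjacent incentive slacks weighted by `cumMult (n + 1) / N`. -/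
theorem sum_cand_mul_eq (hR : R ≠ 0) (hden : ∀ n < N, 0 < den R a h n) (u2 u3 : ℕ → ℝ) :
    ∑ n ∈ range N, (cand2 R a h d N n * u2 n / R + cand3 R a h d N n * u3 n / R ^ 2)
      = d * ∑ n ∈ range N, (u2 n + grid a h n * u3 n)
        + ∑ n ∈ range (N - 1), cumMult R a h d N (n + 1) * slack a h u2 u3 n := by
  rcases N.eq_zero_or_pos with rfl | hN
  · simp
  obtain ⟨M, rfl⟩ : ∃ M, N = M + 1 := ⟨N - 1, by omega⟩
  set g : ℕ → ℝ := fun n ↦ u2 n + grid a h n * u3 n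
  have hterm n : cand2 R a h d (M + 1) n * u2 n / R + cand3 R a h d (M + 1) n * u3 n / R ^ 2
      = d * g n + mult R a h d (M + 1) n * g n + h * (cumMult R a h d (M + 1) n * u3 n) := by
    simp only [cand2, cand3, g]
    field_simp
    ring
  have hparts : ∑ n ∈ range (M + 1), mult R a h d (M + 1) n * g n
      = ∑ n ∈ range M, cumMult R a h d (M + 1) (n + 1) * (g n - g (n + 1)) := by
    have := sum_range_by_parts g (mult R a h d (M + 1)) (M + 1)
    simp only [smul_eq_mul, add_tsub_cancel_right, sum_mult hden, mul_zero, zero_sub] at this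
    simp only [mul_comm (mult R a h d (M + 1) _), this, cumMult, ← sum_neg_distrib]
    exact sum_congr rfl fun n _ ↦ by ring
  have hshift : ∑ n ∈ range (M + 1), cumMult R a h d (M + 1) n * u3 n
      = ∑ n ∈ range M, cumMult R a h d (M + 1) (n + 1) * u3 (n + 1) := by
    simp [sum_range_succ', cumMult]
  rw [sum_congr rfl fun n _ ↦ hterm n, sum_add_distrib, sum_add_distrib, ← mul_sum, ← mul_sum,
    hparts, hshift, add_tsub_cancel_right, add_assoc, mul_sum _ _ h, ← sum_add_distrib]
  congr 1
  refine sum_congr rfl fun n _ ↦ ?_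
  simp only [slack, g, grid_succ]
  ring

theorem sum_le_sum_cand_mul (hR : 0 < R) (ha : 0 < a) (hh : 0 < h) (hd : 0 < d)
    (hsmall : ∀ n < N, 2 * R * h * grid a h n ≤ 1) (u2 u3 : Fin N → ℝ)
    (hIC : ∀ i j : Fin N, u2 j + grid a h i * u3 j ≤ u2 i + grid a h i * u3 i) :
    d * ∑ i : Fin N, (u2 i + grid a h i * u3 i)
      ≤ ∑ i : Fin N, (cand2 R a h d N i * u2 i / R + cand3 R a h d N i * u3 i / R ^ 2) := by
  set U2 := Function.extend Fin.val u2 0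
  set U3 := Function.extend Fin.val u3 0
  have hU2 n (hn : n < N) : U2 n = u2 ⟨n, hn⟩ := Fin.val_injective.extend_apply u2 0 ⟨n, hn⟩
  have hU3 n (hn : n < N) : U3 n = u3 ⟨n, hn⟩ := Fin.val_injective.extend_apply u3 0 ⟨n, hn⟩
  have hslack n (hn : n + 1 < N) : 0 ≤ slack a h U2 U3 n := by
    rw [slack, hU2 n (by omega), hU3 n (by omega), hU2 (n + 1) hn, hU3 (n + 1) hn, sub_nonneg]
    exact hIC ⟨n, by omega⟩ ⟨n + 1, hn⟩
  have hsum := sum_cand_mul_eq (d := d) hR.ne' (fun n hn ↦ den_pos hR.le (hsmall n hn)) U2 U3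
  simp only [sum_range (fun n ↦ U2 n + grid a h n * U3 n),
    sum_range (fun n ↦ cand2 R a h d N n * U2 n / R + cand3 R a h d N n * U3 n / R ^ 2),
    U2, U3, Fin.val_injective.extend_apply] at hsum
  rw [hsum, le_add_iff_nonneg_right]
  exact sum_nonneg fun n hn ↦ mul_nonneg
    (cumMult_nonneg hR ha hh hd hsmall (by simp at hn; omega)) (hslack n (by simp at hn; omega))

theorem sum_cand_mul_cand (hR : 0 < R) (hsmall : ∀ n < N, 2 * R * h * grid a h n ≤ 1) :
    d * ∑ i : Fin N, (cand2 R a h d N i + grid a h i * cand3 R a h d N i)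
      = ∑ i : Fin N, (cand2 R a h d N i * cand2 R a h d N i / R
        + cand3 R a h d N i * cand3 R a h d N i / R ^ 2) := by
  have hsum := sum_cand_mul_eq (d := d) hR.ne' (fun n hn ↦ den_pos hR.le (hsmall n hn))
    (cand2 R a h d N) (cand3 R a h d N)
  rw [← sum_range (fun n ↦ cand2 R a h d N n + grid a h n * cand3 R a h d N n),
    ← sum_range (fun n ↦ cand2 R a h d N n * cand2 R a h d N n / R
      + cand3 R a h d N n * cand3 R a h d N n / R ^ 2), hsum, left_eq_add]
  refine sum_eq_zero fun n hn ↦ ?_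
  rw [slack, cand_adjacent hR hsmall (by simp at hn; omega), sub_self, mul_zero]

/- The budget `u1² + Σᵢ (u2ᵢ²/R + u3ᵢ²/R²)/N` is the weighted square norm of `pack u1 u2 u3`. -/
def pack (u1 : ℝ) (u2 u3 : Fin N → ℝ) : Option (Fin N ⊕ Fin N) → ℝ :=
  Option.elim' u1 (Sum.elim u2 u3)

variable (R N) in
noncomputable def budgetWeight : Option (Fin N ⊕ Fin N) → ℝ :=
  Option.elim' 1 (Sum.elim (fun _ ↦ 1 / (N * R)) (fun _ ↦ 1 / (N * R ^ 2)))

theorem sum_budgetWeight_mul_pack (w1 u1 : ℝ) (w2 w3 u2 u3 : Fin N → ℝ) :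
    ∑ o, budgetWeight R N o * (pack w1 w2 w3 o * pack u1 u2 u3 o)
      = w1 * u1 + ∑ i, 1 / (N : ℝ) * (w2 i * u2 i / R + w3 i * u3 i / R ^ 2) := by
  simp only [Fintype.sum_option, Fintype.sum_sum_type, pack, budgetWeight, Option.elim',
    Sum.elim_inl, Sum.elim_inr, one_mul, ← sum_add_distrib]
  congr 1
  refine sum_congr rfl fun i _ ↦ ?_
  field_simp

theorem sum_budgetWeight_mul_sq (u1 : ℝ) (u2 u3 : Fin N → ℝ) :
    ∑ o, budgetWeight R N o * pack u1 u2 u3 o ^ 2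
      = u1 ^ 2 + ∑ i, 1 / (N : ℝ) * (u2 i ^ 2 / R + u3 i ^ 2 / R ^ 2) := by
  have := sum_budgetWeight_mul_pack (R := R) u1 u1 u2 u3 u2 u3
  simp only [← sq] at this
  exact this

theorem sum_budgetWeight_mul_smul_sq (c : ℝ) (x : Option (Fin N ⊕ Fin N) → ℝ) :
    ∑ o, budgetWeight R N o * (c • x) o ^ 2 = c ^ 2 * ∑ o, budgetWeight R N o * x o ^ 2 := by
  simp only [Pi.smul_apply, smul_eq_mul, mul_pow, mul_left_comm _ (c ^ 2), ← mul_sum]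

theorem budgetWeight_pos (hR : 0 < R) (hN : 0 < N) (o : Option (Fin N ⊕ Fin N)) :
    0 < budgetWeight R N o := by
  rcases o with _ | i | i <;> simp only [budgetWeight, Option.elim', Sum.elim_inl,
    Sum.elim_inr] <;> positivity

variable (R a h d N) in
noncomputable def candVec : Option (Fin N ⊕ Fin N) → ℝ :=
  pack 1 (fun i ↦ cand2 R a h d N i) (fun i ↦ cand3 R a h d N i)

theorem obj_le_sum_budgetWeight_mul_candVec (hR : 0 < R) (ha : 0 < a) (hh : 0 < h)
    (hd : 0 < d) (hsmall : ∀ n < N, 2 * R * h * grid a h n ≤ 1) (u1 : ℝ) (u2 u3 : Fin N → ℝ)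
    (hIC : ∀ i j : Fin N, u2 j + grid a h i * u3 j ≤ u2 i + grid a h i * u3 i) :
    u1 + d * ∑ i, 1 / (N : ℝ) * (u2 i + grid a h i * u3 i)
      ≤ ∑ o, budgetWeight R N o * (candVec R a h d N o * pack u1 u2 u3 o) := by
  rw [candVec, sum_budgetWeight_mul_pack, one_mul, add_le_add_iff_left, ← mul_sum, ← mul_sum,
    mul_left_comm]
  exact mul_le_mul_of_nonneg_left (sum_le_sum_cand_mul hR ha hh hd hsmall u2 u3 hIC)
    (by positivity)

theorem obj_smul_cand (hR : 0 < R) (hsmall : ∀ n < N, 2 * R * h * grid a h n ≤ 1) (c : ℝ) :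
    c + d * ∑ i : Fin N,
        1 / (N : ℝ) * (c * cand2 R a h d N i + grid a h i * (c * cand3 R a h d N i))
      = c * ∑ o, budgetWeight R N o * candVec R a h d N o ^ 2 := by
  rw [candVec, sum_budgetWeight_mul_sq, ← mul_sum, ← mul_sum]
  simp only [mul_left_comm _ c, ← mul_add, ← mul_sum]
  rw [mul_left_comm d, sum_cand_mul_cand hR hsmall]
  simp only [sq]
  ring

end Candidate

theorem deltaUnif_eq_grid (δlo δhi : ℝ) (N : ℕ) (i : Fin N) :
    deltaUnif δlo δhi N i = grid δlo ((δhi - δlo) / (N - 1)) i := by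
  unfold deltaUnif grid; ring

theorem two_mul_step_mul_grid_le_one {R δlo δhi : ℝ} {N : ℕ} (hR : 0 ≤ R) (hlh : δlo < δhi)
    (hN : 2 ≤ N) (hfine : 2 * R * δhi * (δhi - δlo) ≤ N - 1) {n : ℕ} (hn : n < N) :
    2 * R * ((δhi - δlo) / (N - 1)) * grid δlo ((δhi - δlo) / (N - 1)) n ≤ 1 := by
  have hN1 : (1 : ℝ) ≤ N - 1 := by
    have : (2 : ℝ) ≤ N := by exact_mod_cast hN
    linarith
  have hn1 : (n : ℝ) ≤ N - 1 := by
    have : (n : ℝ) + 1 ≤ N := by exact_mod_cast hn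
    linarith
  have hgrid : grid δlo ((δhi - δlo) / (N - 1)) n ≤ δhi := by
    have : (n : ℝ) * ((δhi - δlo) / (N - 1)) ≤ δhi - δlo := by
      rw [mul_div_assoc', div_le_iff₀ (by linarith)]
      nlinarith
    unfold grid; linarith
  calc 2 * R * ((δhi - δlo) / (N - 1)) * grid δlo ((δhi - δlo) / (N - 1)) n
      ≤ 2 * R * ((δhi - δlo) / (N - 1)) * δhi := by gcongr
    _ = 2 * R * δhi * (δhi - δlo) / (N - 1) := by ring
    _ ≤ 1 := (div_le_one (by linarith)).2 hfine

theorem exists_eq_smul_cand_of_optimal {R I δlo δhi h : ℝ} {N : ℕ} (hR : 0 < R) (hI : 0 < I)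
    (hlo : 0 < δlo) (hh : 0 < h) (hsmall : ∀ n < N, 2 * R * h * grid δlo h n ≤ 1)
    (hδ : deltaUnif δlo δhi N = fun i : Fin N ↦ grid δlo h i)
    (n1 : Fin N) {v1 : ℝ} {v2 v3 : Fin N → ℝ} (hv : Feas15 N δlo δhi R I v1 v2 v3)
    (hopt : ∀ (u1 : ℝ) (u2 u3 : Fin N → ℝ), Feas15 N δlo δhi R I u1 u2 u3 →
      obj15 N δlo δhi n1 u1 u2 u3 ≤ obj15 N δlo δhi n1 v1 v2 v3) :
    ∃ c > 0, ∀ i, v2 i = c * cand2 R δlo h (grid δlo h n1) N i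
      ∧ v3 i = c * cand3 R δlo h (grid δlo h n1) N i := by
  simp only [Feas15, obj15, hδ] at hv hopt
  have hd : 0 < grid δlo h n1 := grid_pos hlo hh.le _
  obtain ⟨-, -, -, hbud, hIC⟩ := hv
  set V := candVec R δlo h (grid δlo h n1) N with hV
  have hQ : 0 < ∑ o, budgetWeight R N o * V o ^ 2 := by
    rw [hV, candVec, sum_budgetWeight_mul_sq]; positivity
  set Q := ∑ o, budgetWeight R N o * V o ^ 2
  set c := √(I / Q)
  have hc : 0 < c := Real.sqrt_pos.2 (div_pos hI hQ)
  have hcQ : c ^ 2 * Q = I := by rw [Real.sq_sqrt (div_pos hI hQ).le, div_mul_cancel₀ _ hQ.ne']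
  have hscale : pack c (fun i ↦ c * cand2 R δlo h (grid δlo h n1) N i)
      (fun i ↦ c * cand3 R δlo h (grid δlo h n1) N i) = c • V := by
    funext o
    rcases o with _ | i | i <;> simp [hV, candVec, pack]
  have hw : c * Q ≤ v1 + grid δlo h n1 * ∑ i, 1 / (N : ℝ) * (v2 i + grid δlo h i * v3 i) := by
    rw [← obj_smul_cand hR hsmall]
    refine hopt c _ _ ⟨hc.le, fun i ↦ (mul_pos hc (cand2_pos hR hlo hh hd hsmall i.2)).le,
      fun i ↦ (mul_pos hc (cand3_pos hR hlo hh hd hsmall i.2)).le, ?_, fun i j ↦ ?_⟩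
    · rw [← sum_budgetWeight_mul_sq, hscale, sum_budgetWeight_mul_smul_sq, hcQ]
    · linarith [mul_le_mul_of_nonneg_left (cand_add_grid_mul_le hR hlo hh hd hsmall i.2 j.2) hc.le]
  have hv_le := obj_le_sum_budgetWeight_mul_candVec hR hlo hh hd hsmall v1 v2 v3 hIC
  have hnorm : ∑ o, budgetWeight R N o * (c • V) o ^ 2 = I := by
    rw [sum_budgetWeight_mul_smul_sq, hcQ]
  have hpack := eq_of_sum_mul_sq_le (s := univ) (ω := budgetWeight R N) (v := pack v1 v2 v3)
    (w := c • V) (fun o _ ↦ budgetWeight_pos hR n1.pos o) ?_ ?_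
  · exact ⟨c, hc, fun i ↦
      ⟨hpack (some (.inl i)) (mem_univ _), hpack (some (.inr i)) (mem_univ _)⟩⟩
  · rw [hnorm, sum_budgetWeight_mul_sq]
    exact hbud
  · rw [hnorm]
    simp only [Pi.smul_apply, smul_eq_mul, mul_left_comm _ c, mul_assoc, ← mul_sum]
    rw [← hcQ, sq, mul_assoc]
    exact mul_le_mul_of_nonneg_left (hw.trans hv_le) hc.le

end ProblemIV

/-- Example (square-root utility, full separation for many types).
For all sufficiently many equally spaced types with uniform common beliefs, and any
initial type, the (unique) maximizer of Problem IV (`T = 3`) has date-2 utilities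
strictly positive and strictly decreasing in the type, and date-3 utilities strictly
positive and strictly increasing in the type. -/
theorem stmt15
    (R I : ℝ) (hR : 1 ≤ R) (hI : 0 < I)
    (δlo δhi : ℝ) (hlo : 0 < δlo) (hlh : δlo < δhi) :
    ∃ N0 : ℕ, ∀ N : ℕ, N0 ≤ N → 2 ≤ N → ∀ n1 : Fin N,
      ∀ (v1 : ℝ) (v2 v3 : Fin N → ℝ),
        (Feas15 N δlo δhi R I v1 v2 v3 ∧
          ∀ (u1 : ℝ) (u2 u3 : Fin N → ℝ), Feas15 N δlo δhi R I u1 u2 u3 →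
            obj15 N δlo δhi n1 u1 u2 u3 ≤ obj15 N δlo δhi n1 v1 v2 v3) →
        (∀ n, 0 < v2 n) ∧ (∀ i j : Fin N, i < j → v2 j < v2 i) ∧
        (∀ n, 0 < v3 n) ∧ (∀ i j : Fin N, i < j → v3 i < v3 j) := by
  open ProblemIV in
  obtain ⟨N0, hN0⟩ := exists_nat_gt (2 * R * δhi * (δhi - δlo) + 1)
  refine ⟨N0, fun N hN0N hN n1 v1 v2 v3 ⟨hv, hopt⟩ ↦ ?_⟩
  have hR0 : 0 < R := by linarith
  have hfine : 2 * R * δhi * (δhi - δlo) ≤ N - 1 := by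
    have : (N0 : ℝ) ≤ N := by exact_mod_cast hN0N
    linarith
  have hN1 : (0 : ℝ) < N - 1 := by
    have : (2 : ℝ) ≤ N := by exact_mod_cast hN
    linarith
  set h := (δhi - δlo) / (N - 1)
  have hh : 0 < h := div_pos (by linarith) hN1
  have hsmall n (hn : n < N) := two_mul_step_mul_grid_le_one hR0.le hlh hN hfine hn
  have hd : 0 < grid δlo h n1 := grid_pos hlo hh.le _
  obtain ⟨c, hc, hvc⟩ := exists_eq_smul_cand_of_optimal hR0 hI hlo hh hsmall
    (funext (deltaUnif_eq_grid δlo δhi N)) n1 hv hopt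
  refine ⟨fun i ↦ ?_, fun i j hij ↦ ?_, fun i ↦ ?_, fun i j hij ↦ ?_⟩ <;>
    simp only [(hvc _).1, (hvc _).2]
  · exact mul_pos hc (cand2_pos hR0 hlo hh hd hsmall i.2)
  · exact mul_lt_mul_of_pos_left (cand2_strictAntiOn hR0 hlo hh hd hsmall i.2 j.2 hij) hc
  · exact mul_pos hc (cand3_pos hR0 hlo hh hd hsmall i.2)
  · exact mul_lt_mul_of_pos_left (cand3_strictMonoOn hR0 hlo hh hd hsmall i.2 j.2 hij) hc
end
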